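/- arXiv:2508.10463 — 9 statements merged into one kernel-verified Lean document; each statement's English description precedes it below -/
import Mathlib

section
/- Let α be real with α > −1/2 and α ≠ 0, and let β be purely imaginary. Then for every nonzero z ∈ ℂ, the derivative of z ↦ φ(1+α+β, 2+2α; z) satisfies φ'(1+α+β, 2+2α; z) = (1 − (α+β)/(2α) − (1+2α)/z) · φ(1+α+β, 2+2α; z) + ((1+2α)/z) · φ(α+β, 2α; z). -/
open Complex Polynomial Filter

/-- The Kummer confluent hypergeometric function `φ(a,b;z) = Σ_k (a)_k/(b)_k z^k/k!`. -/
noncomputable def kummerPhi (a b z : ℂ) : ℂ :=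
  ∑' k : ℕ, ((ascPochhammer ℂ k).eval a / (ascPochhammer ℂ k).eval b) * z ^ k / (k.factorial : ℂ)

namespace KummerAux

/-- The `n`-th Taylor coefficient of the Kummer function. -/
noncomputable def kc (a b : ℂ) (n : ℕ) : ℂ :=
  (ascPochhammer ℂ n).eval a / (ascPochhammer ℂ n).eval b / (n.factorial : ℂ)

lemma kummerPhi_eq (a b z : ℂ) : kummerPhi a b z = ∑' n : ℕ, kc a b n * z ^ n :=
  tsum_congr fun n => by rw [kc]; ring

lemma kc_zero (a b : ℂ) : kc a b 0 = 1 := by simp [kc]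

lemma kc_succ (a b : ℂ) (n : ℕ) :
    kc a b (n + 1) = kc a b n * ((a + n) / ((b + n) * ((n : ℂ) + 1))) := by
  rw [kc, kc, ascPochhammer_succ_eval, ascPochhammer_succ_eval, Nat.factorial_succ]
  push_cast
  simp only [div_eq_mul_inv, mul_inv]
  ring

lemma norm_kc_succ (a b : ℂ) (n : ℕ) :
    ‖kc a b (n + 1)‖ = ‖kc a b n‖ * (‖a + n‖ / (‖b + n‖ * ((n : ℝ) + 1))) := by
  rw [kc_succ, norm_mul, norm_div, norm_mul]
  congr 2
  rw [show ((n : ℂ) + 1) = ((n + 1 : ℕ) : ℂ) by push_cast; ring, Complex.norm_natCast]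
  push_cast; ring

lemma summable_master (a b : ℂ) (R : ℝ) (hR : 1 ≤ R) :
    Summable (fun n : ℕ => ((n : ℝ) + 1) * ‖kc a b n‖ * R ^ n) := by
  apply summable_of_ratio_norm_eventually_le (r := 1/2) (by norm_num)
  filter_upwards [eventually_ge_atTop 1,
    (tendsto_natCast_atTop_atTop (R := ℝ)).eventually_ge_atTop (‖b‖ + 2 * R * (‖a‖ + 4))]
    with n hn1 hn2
  have hn1' : (1 : ℝ) ≤ (n : ℝ) := by exact_mod_cast hn1
  have hA : ‖a + n‖ ≤ ‖a‖ + n := by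
    calc ‖a + n‖ ≤ ‖a‖ + ‖(n : ℂ)‖ := norm_add_le _ _
    _ = ‖a‖ + n := by rw [Complex.norm_natCast]
  have hB : (n : ℝ) - ‖b‖ ≤ ‖b + n‖ := by
    have := norm_sub_norm_le ((n : ℂ)) (-b)
    simp only [Complex.norm_natCast, norm_neg, sub_neg_eq_add] at this
    calc (n:ℝ) - ‖b‖ ≤ ‖(n:ℂ) + b‖ := this
    _ = ‖b + n‖ := by rw [add_comm]
  have hRpos : (0:ℝ) < R := by linarith
  have hBpos : (0:ℝ) < ‖b + n‖ := by nlinarith [norm_nonneg a]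
  have key : ((n : ℝ) + 2) * ‖a + n‖ * R ≤ 1/2 * ((n:ℝ) + 1)^2 * ‖b + n‖ := by
    nlinarith [norm_nonneg a, norm_nonneg b, mul_nonneg (norm_nonneg a) (sq_nonneg ((n:ℝ) - 1)),
      mul_le_mul_of_nonneg_left hB (by positivity : (0:ℝ) ≤ ((n:ℝ)+1)^2),
      mul_le_mul_of_nonneg_right hA (le_of_lt hRpos),
      mul_nonneg (mul_nonneg hRpos.le (norm_nonneg a)) (le_trans zero_le_one hn1')]
  have hCP : (0:ℝ) ≤ ‖kc a b n‖ * R ^ n := by positivity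
  have hnorm : ∀ x : ℝ, 0 ≤ x → ‖x‖ = x := fun x hx => by
    rw [Real.norm_eq_abs, _root_.abs_of_nonneg hx]
  rw [hnorm _ (by positivity), hnorm _ (by positivity)]
  rw [norm_kc_succ, pow_succ]
  push_cast
  have heq : ((n:ℝ) + 1 + 1) * (‖kc a b n‖ * (‖a + n‖ / (‖b + n‖ * ((n:ℝ) + 1)))) * (R ^ n * R)
      = (((n:ℝ) + 2) * ‖a + n‖ * R) * (‖kc a b n‖ * R ^ n) / (‖b + n‖ * ((n:ℝ) + 1)) := by
    ring
  rw [heq, div_le_iff₀ (by positivity)]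
  calc (((n:ℝ) + 2) * ‖a + n‖ * R) * (‖kc a b n‖ * R ^ n)
      ≤ (1/2 * ((n:ℝ) + 1)^2 * ‖b + n‖) * (‖kc a b n‖ * R ^ n) :=
        mul_le_mul_of_nonneg_right key hCP
    _ = 1/2 * (((n:ℝ) + 1) * ‖kc a b n‖ * R ^ n) * (‖b + n‖ * ((n:ℝ) + 1)) := by ring

lemma kc_term_bound (a b : ℂ) {R : ℝ} (hR : 1 ≤ R) {y : ℂ} (hy : ‖y‖ ≤ R) (n : ℕ) :
    ‖kc a b n * y ^ n‖ ≤ ((n : ℝ) + 1) * ‖kc a b n‖ * R ^ n := by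
  rw [norm_mul, norm_pow]
  have h1 : ‖y‖ ^ n ≤ R ^ n := pow_le_pow_left₀ (norm_nonneg y) hy n
  have h2 : (0:ℝ) ≤ R ^ n := by positivity
  nlinarith [norm_nonneg (kc a b n), mul_le_mul_of_nonneg_left h1 (norm_nonneg (kc a b n)),
    mul_nonneg (mul_nonneg (Nat.cast_nonneg (α := ℝ) n) (norm_nonneg (kc a b n))) h2]

lemma kc_deriv_bound (a b : ℂ) {R : ℝ} (hR : 1 ≤ R) {y : ℂ} (hy : ‖y‖ ≤ R) (n : ℕ) :
    ‖kc a b n * ((n : ℂ) * y ^ (n - 1))‖ ≤ ((n : ℝ) + 1) * ‖kc a b n‖ * R ^ n := by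
  rw [norm_mul, norm_mul, norm_pow, Complex.norm_natCast]
  match n with
  | 0 => simpa using by positivity
  | (m + 1) =>
    have hy0 : (0:ℝ) ≤ ‖y‖ := norm_nonneg y
    have h1 : ‖y‖ ^ m ≤ R ^ m := pow_le_pow_left₀ hy0 hy m
    have h2 : R ^ m ≤ R ^ (m + 1) := pow_le_pow_right₀ (by linarith) (Nat.le_succ m)
    have h3 : ‖y‖ ^ m ≤ R ^ (m + 1) := le_trans h1 h2
    have h4 : (0:ℝ) ≤ R ^ (m+1) := by positivity
    simp only [Nat.add_sub_cancel]
    push_cast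
    nlinarith [norm_nonneg (kc a b (m+1)),
      mul_le_mul_of_nonneg_left h3 (norm_nonneg (kc a b (m+1))),
      mul_nonneg (norm_nonneg (kc a b (m+1))) h4, Nat.cast_nonneg (α := ℝ) m]

lemma summable_term (a b z : ℂ) : Summable (fun n : ℕ => kc a b n * z ^ n) := by
  have hR : 1 ≤ ‖z‖ + 1 := le_add_of_nonneg_left (norm_nonneg z)
  exact Summable.of_norm_bounded (summable_master a b (‖z‖+1) hR)
    (kc_term_bound a b hR (by linarith [norm_nonneg z]))

lemma summable_deriv_term (a b z : ℂ) :
    Summable (fun n : ℕ => kc a b n * ((n : ℂ) * z ^ (n - 1))) := by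
  have hR : 1 ≤ ‖z‖ + 1 := le_add_of_nonneg_left (norm_nonneg z)
  exact Summable.of_norm_bounded (summable_master a b (‖z‖+1) hR)
    (kc_deriv_bound a b hR (by linarith [norm_nonneg z]))

lemma hasDerivAt_kummerPhi (a b z : ℂ) :
    HasDerivAt (fun w : ℂ => kummerPhi a b w)
      (∑' n : ℕ, kc a b n * ((n : ℂ) * z ^ (n - 1))) z := by
  have hR : 1 ≤ ‖z‖ + 1 := le_add_of_nonneg_left (norm_nonneg z)
  have hu := summable_master a b (‖z‖ + 1) hR
  have hmem : z ∈ Metric.ball (0 : ℂ) (‖z‖ + 1) := by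
    simp only [Metric.mem_ball, dist_zero_right]; linarith
  have h := hasDerivAt_tsum_of_isPreconnected hu Metric.isOpen_ball
    (convex_ball (0:ℂ) (‖z‖+1)).isPreconnected
    (g := fun n w => kc a b n * w ^ n)
    (g' := fun n w => kc a b n * ((n : ℂ) * w ^ (n - 1)))
    (fun n y _ => (hasDerivAt_pow n y).const_mul (kc a b n))
    (fun n y hy => kc_deriv_bound a b hR
      (le_of_lt (by simpa [Metric.mem_ball, dist_zero_right] using hy)) n)
    hmem (summable_term a b z) hmem
  have hfun : (fun w : ℂ => kummerPhi a b w) = fun w => ∑' n : ℕ, kc a b n * w ^ n :=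
    funext fun w => kummerPhi_eq a b w
  rw [hfun]
  exact h

lemma eval_ne (x : ℂ) (hx : ∀ n : ℕ, x + n ≠ 0) (k : ℕ) : (ascPochhammer ℂ k).eval x ≠ 0 := by
  induction k with
  | zero => simp
  | succ m ih => rw [ascPochhammer_succ_eval]; exact mul_ne_zero ih (hx m)

lemma eval_succ_left (x : ℂ) (k : ℕ) :
    (ascPochhammer ℂ (k + 1)).eval x = x * (ascPochhammer ℂ k).eval (x + 1) := by
  rw [ascPochhammer_succ_left, eval_mul, eval_X, eval_comp, eval_add, eval_X, eval_one]

lemma eval_sub_two (b : ℂ) (k : ℕ) :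
    (ascPochhammer ℂ (k + 1)).eval (b - 2) * (b - 1 + k)
      = (b - 2) * ((b - 1) * (ascPochhammer ℂ k).eval b) := by
  have h1 : (ascPochhammer ℂ (k + 2)).eval (b - 2)
      = (ascPochhammer ℂ (k + 1)).eval (b - 2) * (b - 1 + k) := by
    rw [show k + 2 = (k + 1) + 1 from rfl, ascPochhammer_succ_eval]
    push_cast; ring
  have h2 : (ascPochhammer ℂ (k + 2)).eval (b - 2)
      = (b - 2) * ((b - 1) * (ascPochhammer ℂ k).eval b) := by
    rw [show k + 2 = (k + 1) + 1 from rfl, eval_succ_left, show b - 2 + 1 = b - 1 by ring,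
      eval_succ_left, show b - 1 + 1 = b by ring]
  rw [← h1, h2]

private lemma field_id (A E F a b kk : ℂ) (hE : E ≠ 0) (hbk : b + kk ≠ 0)
    (hb2 : b - 2 ≠ 0) (hb1 : b - 1 ≠ 0) (hF : F ≠ 0) (hk1 : kk + 1 ≠ 0) :
    (kk + 1) * (A * (a + kk) / (E * (b + kk)) / ((kk + 1) * F))
      = (1 - (a - 1) / (b - 2)) * (A / E / F)
        + (b - 1) * ((a - 1) * A * (b - 1 + kk) / ((b - 2) * ((b - 1) * E) * ((kk + 1) * F))
            - A * (a + kk) / (E * (b + kk)) / ((kk + 1) * F)) := by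
  have hD1 : E * (b + kk) * ((kk + 1) * F) ≠ 0 :=
    mul_ne_zero (mul_ne_zero hE hbk) (mul_ne_zero hk1 hF)
  have hD2 : (b - 2) * (E * F) ≠ 0 := mul_ne_zero hb2 (mul_ne_zero hE hF)
  have hD3 : (b - 2) * ((b - 1) * E) * ((kk + 1) * F) ≠ 0 :=
    mul_ne_zero (mul_ne_zero hb2 (mul_ne_zero hb1 hE)) (mul_ne_zero hk1 hF)
  have L : (kk + 1) * (A * (a + kk) / (E * (b + kk)) / ((kk + 1) * F))
      = ((kk + 1) * (A * (a + kk))) / (E * (b + kk) * ((kk + 1) * F)) := by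
    rw [div_div, ← mul_div_assoc]
  have T1 : (1 - (a - 1) / (b - 2)) * (A / E / F)
      = ((b - 2 - (a - 1)) * A) / ((b - 2) * (E * F)) := by
    rw [one_sub_div hb2, div_div, div_mul_div_comm]
  have T2 : (b - 1) * ((a - 1) * A * (b - 1 + kk) / ((b - 2) * ((b - 1) * E) * ((kk + 1) * F))
        - A * (a + kk) / (E * (b + kk)) / ((kk + 1) * F))
      = ((b - 1) * ((a - 1) * A * (b - 1 + kk) * (E * (b + kk) * ((kk + 1) * F))
          - ((b - 2) * ((b - 1) * E) * ((kk + 1) * F)) * (A * (a + kk))))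
        / ((b - 2) * ((b - 1) * E) * ((kk + 1) * F) * (E * (b + kk) * ((kk + 1) * F))) := by
    rw [div_div (A * (a + kk)), div_sub_div _ _ hD3 hD1, ← mul_div_assoc]
  rw [L, T1, T2, div_add_div _ _ hD2 (mul_ne_zero hD3 hD1),
    div_eq_div_iff hD1 (mul_ne_zero hD2 (mul_ne_zero hD3 hD1))]
  ring

lemma termwise (a b : ℂ) (hb : ∀ n : ℕ, b + n ≠ 0) (hb1 : ∀ n : ℕ, b - 1 + n ≠ 0)
    (hb2 : b - 2 ≠ 0) (k : ℕ) :
    ((k : ℂ) + 1) * kc a b (k + 1)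
      = (1 - (a - 1) / (b - 2)) * kc a b k
        + (b - 1) * (kc (a - 1) (b - 2) (k + 1) - kc a b (k + 1)) := by
  have hBk := eval_ne b hb k
  have hbk := hb k
  have hb1k := hb1 k
  have hb1' : b - 1 ≠ 0 := by simpa using hb1 0
  have hfac : ((k.factorial : ℂ)) ≠ 0 := Nat.cast_ne_zero.2 k.factorial_ne_zero
  have hk1 : ((k : ℂ) + 1) ≠ 0 := by
    have : ((k + 1 : ℕ) : ℂ) ≠ 0 := Nat.cast_ne_zero.2 (Nat.succ_ne_zero k)
    push_cast at this
    exact this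
  have e3 : (ascPochhammer ℂ (k + 1)).eval (a - 1) = (a - 1) * (ascPochhammer ℂ k).eval a := by
    rw [eval_succ_left, show a - 1 + 1 = a by ring]
  have e4 : (ascPochhammer ℂ (k + 1)).eval (b - 2)
      = (b - 2) * ((b - 1) * (ascPochhammer ℂ k).eval b) / (b - 1 + k) := by
    rw [eq_div_iff hb1k, eval_sub_two]
  have hc : kc a b k
      = (ascPochhammer ℂ k).eval a / (ascPochhammer ℂ k).eval b / (k.factorial : ℂ) := rfl
  have hck : kc a b (k + 1)
      = (ascPochhammer ℂ k).eval a * (a + k)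
          / ((ascPochhammer ℂ k).eval b * (b + k)) / (((k : ℂ) + 1) * (k.factorial : ℂ)) := by
    simp only [kc, ascPochhammer_succ_eval, Nat.factorial_succ]
    push_cast
    ring
  have hd : kc (a - 1) (b - 2) (k + 1)
      = (a - 1) * (ascPochhammer ℂ k).eval a * (b - 1 + k)
          / ((b - 2) * ((b - 1) * (ascPochhammer ℂ k).eval b)
            * (((k : ℂ) + 1) * (k.factorial : ℂ))) := by
    simp only [kc, Nat.factorial_succ]
    rw [e3, e4]
    push_cast
    rw [div_div_eq_mul_div, div_div]
  rw [hck, hd, hc]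
  exact field_id _ _ _ a b (k : ℂ) hBk hbk hb2 hb1' hfac hk1

end KummerAux

open KummerAux

/-- For real `α > -1/2`, `α ≠ 0` and purely imaginary `β`, for every nonzero `z ∈ ℂ` one has
`φ'(1+α+β, 2+2α; z) = (1 - (α+β)/(2α) - (1+2α)/z) φ(1+α+β, 2+2α; z)
  + ((1+2α)/z) φ(α+β, 2α; z)`. -/
theorem kummer_deriv_identity_P (α : ℝ) (hα : -1/2 < α) (hα0 : α ≠ 0)
    (β : ℂ) (hβ : β.re = 0) (z : ℂ) (hz : z ≠ 0) :
    HasDerivAt (fun w : ℂ => kummerPhi (1 + (α : ℂ) + β) (2 + 2 * (α : ℂ)) w)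
      ((1 - ((α : ℂ) + β) / (2 * (α : ℂ)) - (1 + 2 * (α : ℂ)) / z) *
          kummerPhi (1 + (α : ℂ) + β) (2 + 2 * (α : ℂ)) z
        + (1 + 2 * (α : ℂ)) / z * kummerPhi ((α : ℂ) + β) (2 * (α : ℂ)) z) z := by
  set a : ℂ := 1 + (α : ℂ) + β with ha_def
  set b : ℂ := 2 + 2 * (α : ℂ) with hb_def
  have hre_ne : ∀ (x : ℂ), x.re ≠ 0 → x ≠ 0 := fun x h hx => h (by rw [hx]; simp)
  have hb : ∀ n : ℕ, b + n ≠ 0 := by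
    intro n
    apply hre_ne
    simp only [hb_def, Complex.add_re, Complex.mul_re, Complex.natCast_re, Complex.ofReal_re,
      Complex.ofReal_im, Complex.natCast_im]
    norm_num
    linarith [Nat.cast_nonneg (α := ℝ) n]
  have hb1 : ∀ n : ℕ, b - 1 + n ≠ 0 := by
    intro n
    apply hre_ne
    simp only [hb_def, Complex.add_re, Complex.sub_re, Complex.one_re, Complex.mul_re,
      Complex.natCast_re, Complex.ofReal_re, Complex.ofReal_im, Complex.natCast_im]
    norm_num
    linarith [Nat.cast_nonneg (α := ℝ) n]
  have hb2 : b - 2 ≠ 0 := by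
    apply hre_ne
    simp only [hb_def]
    simp [Complex.sub_re, Complex.mul_re]
    exact hα0
  have ea : a - 1 = (α : ℂ) + β := by rw [ha_def]; ring
  have eb : b - 2 = 2 * (α : ℂ) := by rw [hb_def]; ring
  have eb1 : b - 1 = 1 + 2 * (α : ℂ) := by rw [hb_def]; ring
  have s1 : Summable (fun k : ℕ => kc a b k * z ^ k) := summable_term a b z
  have s2 : Summable (fun k : ℕ => kc (a - 1) (b - 2) k * z ^ k) := summable_term _ _ z
  have s3 : Summable (fun n : ℕ => kc a b n * ((n : ℂ) * z ^ (n - 1))) :=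
    summable_deriv_term a b z
  have s1f : Summable (fun k : ℕ => kc a b k * z ^ k - kc (a - 1) (b - 2) k * z ^ k) := s1.sub s2
  have sft : Summable (fun k : ℕ =>
      kc (a - 1) (b - 2) (k + 1) * z ^ (k + 1) - kc a b (k + 1) * z ^ (k + 1)) :=
    (summable_nat_add_iff 1).2 (s2.sub s1)
  have hD := hasDerivAt_kummerPhi a b z
  have hsum : (∑' n : ℕ, kc a b n * ((n : ℂ) * z ^ (n - 1)))
      = (1 - ((α : ℂ) + β) / (2 * (α : ℂ)) - (1 + 2 * (α : ℂ)) / z) * kummerPhi a b z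
        + (1 + 2 * (α : ℂ)) / z * kummerPhi ((α : ℂ) + β) (2 * (α : ℂ)) z := by
    have hΨ : kummerPhi ((α : ℂ) + β) (2 * (α : ℂ)) z
        = ∑' k : ℕ, kc (a - 1) (b - 2) k * z ^ k := by
      rw [ea, eb, kummerPhi_eq]
    rw [kummerPhi_eq a b z, hΨ, ← ea, ← eb1, ← eb]
    calc ∑' n : ℕ, kc a b n * ((n : ℂ) * z ^ (n - 1))
        = kc a b 0 * ((0 : ℕ) * z ^ (0 - 1))
          + ∑' k : ℕ, kc a b (k + 1) * (((k + 1 : ℕ) : ℂ) * z ^ (k + 1 - 1)) :=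
          Summable.tsum_eq_zero_add s3
      _ = ∑' k : ℕ, kc a b (k + 1) * (((k : ℂ) + 1) * z ^ k) := by
          simp only [Nat.cast_zero, zero_mul, mul_zero, zero_add]
          exact tsum_congr fun k => by rw [Nat.add_sub_cancel]; push_cast; ring
      _ = ∑' k : ℕ, ((1 - (a - 1) / (b - 2)) * (kc a b k * z ^ k)
            + (b - 1) / z * (kc (a - 1) (b - 2) (k + 1) * z ^ (k + 1)
              - kc a b (k + 1) * z ^ (k + 1))) := by
          refine tsum_congr fun k => ?_
          have ht := termwise a b hb hb1 hb2 k
          have hzp : z ^ (k + 1) / z = z ^ k := by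
            rw [pow_succ, mul_div_cancel_right₀ _ hz]
          calc kc a b (k + 1) * (((k : ℂ) + 1) * z ^ k)
              = (((k : ℂ) + 1) * kc a b (k + 1)) * z ^ k := by ring
            _ = ((1 - (a - 1) / (b - 2)) * kc a b k
                  + (b - 1) * (kc (a - 1) (b - 2) (k + 1) - kc a b (k + 1))) * z ^ k := by
                rw [ht]
            _ = (1 - (a - 1) / (b - 2)) * (kc a b k * z ^ k)
                  + (b - 1) * ((kc (a - 1) (b - 2) (k + 1) - kc a b (k + 1)) * (z ^ (k + 1) / z)) := by
                rw [hzp]; ring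
            _ = (1 - (a - 1) / (b - 2)) * (kc a b k * z ^ k)
                  + (b - 1) / z * (kc (a - 1) (b - 2) (k + 1) * z ^ (k + 1)
                      - kc a b (k + 1) * z ^ (k + 1)) := by ring
      _ = (1 - (a - 1) / (b - 2)) * (∑' k : ℕ, kc a b k * z ^ k)
          + (b - 1) / z * (∑' k : ℕ, (kc (a - 1) (b - 2) (k + 1) * z ^ (k + 1)
              - kc a b (k + 1) * z ^ (k + 1))) := by
          rw [Summable.tsum_add (s1.mul_left _) (sft.mul_left _), tsum_mul_left, tsum_mul_left]
      _ = (1 - (a - 1) / (b - 2)) * (∑' k : ℕ, kc a b k * z ^ k)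
          + (b - 1) / z * ((∑' k : ℕ, kc (a - 1) (b - 2) k * z ^ k)
              - ∑' k : ℕ, kc a b k * z ^ k) := by
          congr 1
          congr 1
          have h0 := Summable.tsum_eq_zero_add (s2.sub s1)
          simp only [kc_zero, pow_zero, mul_one, sub_self, zero_add] at h0
          rw [← h0, Summable.tsum_sub s2 s1]
      _ = (1 - (a - 1) / (b - 2) - (b - 1) / z) * (∑' k : ℕ, kc a b k * z ^ k)
          + (b - 1) / z * ∑' k : ℕ, kc (a - 1) (b - 2) k * z ^ k := by ring
  rw [← hsum]
  exact hD
end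

section
/- Let α be real with α > −1/2 and α ≠ 0 and let β be purely imaginary. For every nonzero real x, the following identities hold: (i) x·𝒫(x) = ((1+2α)/(2i)) · χ_β(x)^{−1/2} |2x|^{−α} e^{ix} (A(x) − B(x)); (ii) 𝒬(x) = (1/2) · χ_β(x)^{−1/2} |2x|^{−α} e^{ix} [ (1 + β/α) A(x) + (1 − β/α) B(x) ]. -/
open Complex Polynomial

/-- `χ_β(x)^{1/2}`. -/
noncomputable def chiHalf (β : ℂ) (x : ℝ) : ℂ :=
  if 0 ≤ x then Complex.exp (-(Real.pi * Complex.I * β) / 2)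
  else Complex.exp ((Real.pi * Complex.I * β) / 2)

/-- `A(x) = χ_β(x)^{1/2} |2x|^α e^{-ix} φ(1+α+β, 1+2α; 2ix)`. -/
noncomputable def funA (α : ℝ) (β : ℂ) (x : ℝ) : ℂ :=
  chiHalf β x * ((|2 * x| ^ α : ℝ) : ℂ) * Complex.exp (-(Complex.I * x)) *
    kummerPhi (1 + (α : ℂ) + β) (1 + 2 * (α : ℂ)) (2 * Complex.I * x)

/-- `B(x) = χ_β(x)^{1/2} |2x|^α e^{ix} φ(1+α-β, 1+2α; -2ix)`. -/
noncomputable def funB (α : ℝ) (β : ℂ) (x : ℝ) : ℂ :=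
  chiHalf β x * ((|2 * x| ^ α : ℝ) : ℂ) * Complex.exp (Complex.I * x) *
    kummerPhi (1 + (α : ℂ) - β) (1 + 2 * (α : ℂ)) (-(2 * Complex.I * x))

/-- The confluent hypergeometric kernel `K^{(α,β)}(x,y)`. -/
noncomputable def chKernel (α : ℝ) (β : ℂ) (x y : ℝ) : ℂ :=
  (1 / (2 * Real.pi * Complex.I)) *
    (Complex.Gamma (1 + (α : ℂ) + β) * Complex.Gamma (1 + (α : ℂ) - β) /
      Complex.Gamma (1 + 2 * (α : ℂ)) ^ 2) *
    ((funA α β x * funB α β y - funA α β y * funB α β x) / ((x : ℂ) - (y : ℂ)))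


/-- `𝒫(x) = φ(1+α+β, 2+2α; 2ix)`. -/
noncomputable def funP (α : ℝ) (β : ℂ) (x : ℝ) : ℂ :=
  kummerPhi (1 + (α : ℂ) + β) (2 + 2 * (α : ℂ)) (2 * Complex.I * x)

/-- `𝒬(x) = φ(α+β, 2α; 2ix)`. -/
noncomputable def funQ (α : ℝ) (β : ℂ) (x : ℝ) : ℂ :=
  kummerPhi ((α : ℂ) + β) (2 * (α : ℂ)) (2 * Complex.I * x)

/-! ### Auxiliary lemmas -/

lemma asc_eval_succ_left (x : ℂ) (j : ℕ) :
    (ascPochhammer ℂ (j+1)).eval x = x * (ascPochhammer ℂ j).eval (x + 1) := by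
  rw [ascPochhammer_succ_left]
  simp [eval_comp]

lemma asc_ne_zero {b : ℂ} (hb : ∀ j : ℕ, b + (j:ℂ) ≠ 0) (k : ℕ) :
    (ascPochhammer ℂ k).eval b ≠ 0 := by
  rw [Ne, ascPochhammer_eval_eq_zero_iff]
  rintro ⟨j, -, hj⟩
  exact hb j (by rw [hj]; ring)

lemma kummer_summable_norm (a b z : ℂ) (hb : ∀ j : ℕ, b + (j:ℂ) ≠ 0) :
    Summable (fun k : ℕ =>
      ‖((ascPochhammer ℂ k).eval a / (ascPochhammer ℂ k).eval b) * z ^ k / (k.factorial : ℂ)‖) := by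
  obtain ⟨N, hN⟩ := exists_nat_ge (max ‖a‖ (‖b‖ + 4 * ‖z‖ + 1))
  apply summable_of_ratio_norm_eventually_le (r := 1/2) (by norm_num)
  filter_upwards [Filter.eventually_ge_atTop N] with k hk
  have hbk : (ascPochhammer ℂ k).eval b ≠ 0 := asc_ne_zero hb k
  have hfac : ((k.factorial : ℂ)) ≠ 0 := by exact_mod_cast k.factorial_ne_zero
  have hk1 : ((k:ℂ) + 1) ≠ 0 := by
    have : ((k+1:ℕ):ℂ) ≠ 0 := Nat.cast_ne_zero.mpr (Nat.succ_ne_zero k)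
    push_cast at this; exact this
  have key : ((ascPochhammer ℂ (k+1)).eval a / (ascPochhammer ℂ (k+1)).eval b) * z ^ (k+1)
        / ((k+1).factorial : ℂ)
      = (((ascPochhammer ℂ k).eval a / (ascPochhammer ℂ k).eval b) * z ^ k / (k.factorial : ℂ))
        * ((a + k) * z / ((b + k) * (k + 1))) := by
    rw [ascPochhammer_succ_eval, ascPochhammer_succ_eval, Nat.factorial_succ, pow_succ]
    push_cast
    field_simp
  rw [norm_norm, norm_norm, key, norm_mul]
  have hNk : (max ‖a‖ (‖b‖ + 4 * ‖z‖ + 1)) ≤ (k:ℝ) := le_trans hN (by exact_mod_cast hk)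
  have ha' : ‖a‖ ≤ (k:ℝ) := le_trans (le_max_left _ _) hNk
  have hb' : ‖b‖ + 4 * ‖z‖ + 1 ≤ (k:ℝ) := le_trans (le_max_right _ _) hNk
  have hfactor : ‖(a + (k:ℂ)) * z / ((b + (k:ℂ)) * ((k:ℂ) + 1))‖ ≤ 1/2 := by
    rw [norm_div, norm_mul, norm_mul]
    have hknorm : ‖(k:ℂ)‖ = (k:ℝ) := by
      rw [Complex.norm_natCast]
    have h1 : ‖a + (k:ℂ)‖ ≤ 2 * (k:ℝ) := by
      calc ‖a + (k:ℂ)‖ ≤ ‖a‖ + ‖(k:ℂ)‖ := norm_add_le _ _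
        _ ≤ (k:ℝ) + (k:ℝ) := by rw [hknorm]; linarith
        _ = 2 * (k:ℝ) := by ring
    have h2 : 4 * ‖z‖ + 1 ≤ ‖b + (k:ℂ)‖ := by
      have ht : ‖(k:ℂ)‖ ≤ ‖b + (k:ℂ)‖ + ‖b‖ := by
        calc ‖(k:ℂ)‖ = ‖(b + (k:ℂ)) + (-b)‖ := by ring_nf
          _ ≤ ‖b + (k:ℂ)‖ + ‖(-b)‖ := norm_add_le _ _
          _ = ‖b + (k:ℂ)‖ + ‖b‖ := by rw [norm_neg]
      rw [hknorm] at ht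
      linarith
    have h3 : ‖(k:ℂ) + 1‖ = (k:ℝ) + 1 := by
      have : ((k:ℂ) + 1) = ((k + 1 : ℕ) : ℂ) := by push_cast; ring
      rw [this, Complex.norm_natCast]; push_cast; ring
    have hkpos : (0:ℝ) < k := by linarith [norm_nonneg b, norm_nonneg z]
    have hbkpos : (0:ℝ) < ‖b + (k:ℂ)‖ := by linarith [norm_nonneg z]
    rw [div_le_iff₀ (by rw [h3]; positivity)]
    rw [h3]
    calc ‖a + (k:ℂ)‖ * ‖z‖ ≤ (2 * (k:ℝ)) * ‖z‖ :=
          mul_le_mul_of_nonneg_right h1 (norm_nonneg z)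
      _ ≤ 1/2 * ((4*‖z‖+1) * ((k:ℝ)+1)) := by nlinarith [norm_nonneg z]
      _ ≤ 1/2 * (‖b + (k:ℂ)‖ * ((k:ℝ)+1)) := by nlinarith
  calc ‖((ascPochhammer ℂ k).eval a / (ascPochhammer ℂ k).eval b) * z ^ k / (k.factorial : ℂ)‖
        * ‖(a + (k:ℂ)) * z / ((b + (k:ℂ)) * ((k:ℂ) + 1))‖
      ≤ ‖((ascPochhammer ℂ k).eval a / (ascPochhammer ℂ k).eval b) * z ^ k / (k.factorial : ℂ)‖ * (1/2) :=
        mul_le_mul_of_nonneg_left hfactor (norm_nonneg _)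
    _ = 1/2 * ‖((ascPochhammer ℂ k).eval a / (ascPochhammer ℂ k).eval b) * z ^ k / (k.factorial : ℂ)‖ := by ring

lemma kummer_summable (a b z : ℂ) (hb : ∀ j : ℕ, b + (j:ℂ) ≠ 0) :
    Summable (fun k : ℕ =>
      ((ascPochhammer ℂ k).eval a / (ascPochhammer ℂ k).eval b) * z ^ k / (k.factorial : ℂ)) :=
  (kummer_summable_norm a b z hb).of_norm

lemma alt_vandermonde (k : ℕ) : ∀ a b : ℂ,
    ∑ j ∈ Finset.range (k+1), ((-1:ℂ)^j * (k.choose j : ℂ) *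
      (ascPochhammer ℂ j).eval (b - a) * (ascPochhammer ℂ (k - j)).eval (b + j)) =
    (ascPochhammer ℂ k).eval a := by
  induction k with
  | zero => intro a b; simp
  | succ k ih =>
    intro a b
    rw [Finset.sum_range_succ']
    have hf0 : ((-1:ℂ)^0 * ((k+1).choose 0 : ℂ) *
        (ascPochhammer ℂ 0).eval (b - a) * (ascPochhammer ℂ (k + 1 - 0)).eval (b + (0:ℕ))) =
        (ascPochhammer ℂ (k+1)).eval b := by
      simp
    rw [hf0]
    have hsplit : ∀ j ∈ Finset.range (k+1),
        ((-1:ℂ)^(j+1) * ((k+1).choose (j+1) : ℂ) *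
          (ascPochhammer ℂ (j+1)).eval (b - a) * (ascPochhammer ℂ (k + 1 - (j+1))).eval (b + (j+1:ℕ))) =
        (-((b - a) * ((-1:ℂ)^j * (k.choose j : ℂ) *
            (ascPochhammer ℂ j).eval ((b+1) - a) * (ascPochhammer ℂ (k - j)).eval ((b+1) + j))))
        + ((-1:ℂ)^(j+1) * (k.choose (j+1) : ℂ) *
            (ascPochhammer ℂ (j+1)).eval (b - a) * (ascPochhammer ℂ (k - j)).eval (b + (j+1:ℕ))) := by
      intro j hj
      have hkj : k + 1 - (j+1) = k - j := by omega
      rw [hkj, Nat.choose_succ_succ, asc_eval_succ_left]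
      push_cast
      have e1 : b - a + 1 = (b+1) - a := by ring
      have e2 : (b:ℂ) + ((j:ℂ)+1) = (b+1) + j := by ring
      rw [e1, e2]
      ring
    rw [Finset.sum_congr rfl hsplit, Finset.sum_add_distrib]
    have hs1 : ∑ j ∈ Finset.range (k+1),
        (-((b - a) * ((-1:ℂ)^j * (k.choose j : ℂ) *
            (ascPochhammer ℂ j).eval ((b+1) - a) * (ascPochhammer ℂ (k - j)).eval ((b+1) + j)))) =
        -((b - a) * (ascPochhammer ℂ k).eval a) := by
      rw [Finset.sum_neg_distrib, ← Finset.mul_sum, ih a (b+1)]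
    rw [hs1]
    have hs2 : ∑ j ∈ Finset.range (k+1),
        ((-1:ℂ)^(j+1) * (k.choose (j+1) : ℂ) *
            (ascPochhammer ℂ (j+1)).eval (b - a) * (ascPochhammer ℂ (k - j)).eval (b + (j+1:ℕ)))
        + (ascPochhammer ℂ (k+1)).eval b =
        (b + k) * (ascPochhammer ℂ k).eval a := by
      rw [Finset.sum_range_succ]
      have hlast : ((-1:ℂ)^(k+1) * (k.choose (k+1) : ℂ) *
            (ascPochhammer ℂ (k+1)).eval (b - a) * (ascPochhammer ℂ (k - k)).eval (b + (k+1:ℕ))) = 0 := by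
        simp [Nat.choose_succ_self]
      rw [hlast, add_zero]
      have hh : ∑ j ∈ Finset.range k,
          ((-1:ℂ)^(j+1) * (k.choose (j+1) : ℂ) *
            (ascPochhammer ℂ (j+1)).eval (b - a) * (ascPochhammer ℂ (k - j)).eval (b + (j+1:ℕ)))
          + (ascPochhammer ℂ (k+1)).eval b =
          ∑ j ∈ Finset.range (k+1),
          ((-1:ℂ)^j * (k.choose j : ℂ) *
            (ascPochhammer ℂ j).eval (b - a) * (ascPochhammer ℂ (k + 1 - j)).eval (b + j)) := by
        rw [Finset.sum_range_succ']
        congr 1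
        · apply Finset.sum_congr rfl
          intro j hj
          have : k + 1 - (j+1) = k - j := by omega
          rw [this]
        · simp
      rw [hh]
      have hterm : ∀ j ∈ Finset.range (k+1),
          ((-1:ℂ)^j * (k.choose j : ℂ) *
            (ascPochhammer ℂ j).eval (b - a) * (ascPochhammer ℂ (k + 1 - j)).eval (b + j)) =
          (b + k) * ((-1:ℂ)^j * (k.choose j : ℂ) *
            (ascPochhammer ℂ j).eval (b - a) * (ascPochhammer ℂ (k - j)).eval (b + j)) := by
        intro j hj
        simp only [Finset.mem_range] at hj
        have hj' : j ≤ k := by omega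
        have h1 : k + 1 - j = (k - j) + 1 := by omega
        rw [h1, ascPochhammer_succ_eval]
        have h2 : (b + (j:ℂ)) + ((k - j : ℕ) : ℂ) = b + k := by
          have : ((k - j : ℕ):ℂ) = (k:ℂ) - (j:ℂ) := by
            push_cast [Nat.cast_sub hj']
            ring
          rw [this]; ring
        rw [h2]; ring
      rw [Finset.sum_congr rfl hterm, ← Finset.mul_sum, ih a b]
    have final : (ascPochhammer ℂ (k+1)).eval b + ∑ j ∈ Finset.range (k+1),
        ((-1:ℂ)^(j+1) * (k.choose (j+1) : ℂ) *
            (ascPochhammer ℂ (j+1)).eval (b - a) * (ascPochhammer ℂ (k - j)).eval (b + (j+1:ℕ)))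
        = (b + k) * (ascPochhammer ℂ k).eval a := by
      rw [add_comm]; exact hs2
    calc -((b - a) * (ascPochhammer ℂ k).eval a) + ∑ j ∈ Finset.range (k+1),
          ((-1:ℂ)^(j+1) * (k.choose (j+1) : ℂ) *
            (ascPochhammer ℂ (j+1)).eval (b - a) * (ascPochhammer ℂ (k - j)).eval (b + (j+1:ℕ)))
          + (ascPochhammer ℂ (k+1)).eval b
        = -((b - a) * (ascPochhammer ℂ k).eval a) + ((ascPochhammer ℂ (k+1)).eval b + ∑ j ∈ Finset.range (k+1),
          ((-1:ℂ)^(j+1) * (k.choose (j+1) : ℂ) *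
            (ascPochhammer ℂ (j+1)).eval (b - a) * (ascPochhammer ℂ (k - j)).eval (b + (j+1:ℕ)))) := by ring
      _ = -((b - a) * (ascPochhammer ℂ k).eval a) + (b + k) * (ascPochhammer ℂ k).eval a := by rw [final]
      _ = (ascPochhammer ℂ (k+1)).eval a := by
          rw [ascPochhammer_succ_eval]; ring

lemma exp_summable_norm (z : ℂ) : Summable (fun n : ℕ => ‖z ^ n / (n.factorial : ℂ)‖) := by
  have := Real.summable_pow_div_factorial ‖z‖
  apply this.congr
  intro n
  rw [norm_div, norm_pow]
  congr 1
  simp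

lemma exp_eq_tsum' (z : ℂ) : Complex.exp z = ∑' n : ℕ, z ^ n / (n.factorial : ℂ) := by
  rw [Complex.exp_eq_exp_ℂ, NormedSpace.exp_eq_tsum_div]

/-- Kummer's transformation `e^z φ(b-a, b; -z) = φ(a, b; z)`. -/
lemma kummer_transform (a b z : ℂ) (hb : ∀ j : ℕ, b + (j:ℂ) ≠ 0) :
    Complex.exp z * kummerPhi (b - a) b (-z) = kummerPhi a b z := by
  rw [exp_eq_tsum' z, kummerPhi, kummerPhi,
    tsum_mul_tsum_eq_tsum_sum_range_of_summable_norm (exp_summable_norm z)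
      (kummer_summable_norm (b-a) b (-z) hb)]
  apply tsum_congr
  intro k
  have hrefl : ∑ i ∈ Finset.range (k+1),
      (z ^ i / (i.factorial : ℂ)) *
        (((ascPochhammer ℂ (k-i)).eval (b-a) / (ascPochhammer ℂ (k-i)).eval b) * (-z) ^ (k-i)
          / ((k-i).factorial : ℂ)) =
      ∑ i ∈ Finset.range (k+1),
      (z ^ (k-i) / ((k-i).factorial : ℂ)) *
        (((ascPochhammer ℂ i).eval (b-a) / (ascPochhammer ℂ i).eval b) * (-z) ^ i
          / (i.factorial : ℂ)) := by
    rw [← Finset.sum_range_reflect]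
    apply Finset.sum_congr rfl
    intro i hi
    simp only [Finset.mem_range] at hi
    have h1 : k + 1 - 1 - i = k - i := by omega
    have h2 : k - (k - i) = i := by omega
    rw [h1, h2]
  rw [hrefl]
  have hterm : ∀ i ∈ Finset.range (k+1),
      (z ^ (k-i) / ((k-i).factorial : ℂ)) *
        (((ascPochhammer ℂ i).eval (b-a) / (ascPochhammer ℂ i).eval b) * (-z) ^ i
          / (i.factorial : ℂ)) =
      ((-1:ℂ)^i * (k.choose i : ℂ) *
        (ascPochhammer ℂ i).eval (b - a) * (ascPochhammer ℂ (k - i)).eval (b + i)) *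
        (z ^ k / ((ascPochhammer ℂ k).eval b * (k.factorial : ℂ))) := by
    intro i hi
    simp only [Finset.mem_range] at hi
    have hik : i ≤ k := by omega
    have hbi : (ascPochhammer ℂ i).eval b ≠ 0 := asc_ne_zero hb i
    have hbk : (ascPochhammer ℂ k).eval b ≠ 0 := asc_ne_zero hb k
    have hprod : (ascPochhammer ℂ i).eval b * (ascPochhammer ℂ (k-i)).eval (b + i) =
        (ascPochhammer ℂ k).eval b := by
      have := ascPochhammer_mul (S := ℂ) i (k - i)
      have hik' : i + (k - i) = k := by omega
      rw [hik'] at this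
      have := congrArg (Polynomial.eval b) this
      simpa [eval_comp] using this
    have hchoose : ((k.choose i : ℂ)) * (i.factorial : ℂ) * ((k-i).factorial : ℂ) = (k.factorial : ℂ) := by
      exact_mod_cast congrArg (Nat.cast : ℕ → ℂ) (Nat.choose_mul_factorial_mul_factorial hik)
    have hzp : z ^ (k-i) * z ^ i = z ^ k := by
      rw [← pow_add]
      congr 1
      omega
    have hnz : (-z) ^ i = (-1:ℂ)^i * z ^ i := by
      rw [neg_pow]
    have hfi : ((i.factorial : ℂ)) ≠ 0 := by exact_mod_cast i.factorial_ne_zero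
    have hfki : (((k-i).factorial : ℂ)) ≠ 0 := by exact_mod_cast (k-i).factorial_ne_zero
    have hfk : ((k.factorial : ℂ)) ≠ 0 := by exact_mod_cast k.factorial_ne_zero
    have hR : (ascPochhammer ℂ (k-i)).eval (b + i) ≠ 0 := by
      intro h0
      rw [h0, mul_zero] at hprod
      exact hbk hprod.symm
    have hC : ((k.choose i : ℕ) : ℂ) ≠ 0 := Nat.cast_ne_zero.mpr (Nat.choose_pos hik).ne'
    rw [hnz, ← hprod, ← hzp, ← hchoose]
    field_simp
  rw [Finset.sum_congr rfl hterm, ← Finset.sum_mul, alt_vandermonde k a b]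
  field_simp

/-- Contiguous relation: `φ(a,b;z) - φ(a-1,b;z) = (z/b) φ(a,b+1;z)`. -/
lemma contiguous1 (a b z : ℂ) (hb : ∀ j : ℕ, b + (j:ℂ) ≠ 0) :
    kummerPhi a b z - kummerPhi (a-1) b z = (z / b) * kummerPhi a (b+1) z := by
  have hb0 : b ≠ 0 := by have := hb 0; simpa using this
  have hb1 : ∀ j : ℕ, (b + 1) + (j:ℂ) ≠ 0 := by
    intro j
    have := hb (j+1)
    push_cast at this
    intro h; apply this; rw [← h]; ring
  have hsf := kummer_summable a b z hb
  have hsg := kummer_summable (a-1) b z hb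
  have hsh := kummer_summable a (b+1) z hb1
  rw [kummerPhi, kummerPhi, kummerPhi, ← Summable.tsum_sub hsf hsg]
  have hd : Summable (fun k : ℕ =>
      ((ascPochhammer ℂ k).eval a / (ascPochhammer ℂ k).eval b) * z ^ k / (k.factorial : ℂ)
      - ((ascPochhammer ℂ k).eval (a-1) / (ascPochhammer ℂ k).eval b) * z ^ k / (k.factorial : ℂ)) :=
    hsf.sub hsg
  rw [Summable.tsum_eq_zero_add hd]
  have h0 : ((ascPochhammer ℂ 0).eval a / (ascPochhammer ℂ 0).eval b) * z ^ 0 / ((0:ℕ).factorial : ℂ)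
      - ((ascPochhammer ℂ 0).eval (a-1) / (ascPochhammer ℂ 0).eval b) * z ^ 0 / ((0:ℕ).factorial : ℂ) = 0 := by
    simp
  rw [h0, zero_add]
  rw [← tsum_mul_left]
  apply tsum_congr
  intro k
  have hbk1 : (ascPochhammer ℂ (k+1)).eval b ≠ 0 := asc_ne_zero hb (k+1)
  have hbk : (ascPochhammer ℂ k).eval (b+1) ≠ 0 := asc_ne_zero hb1 k
  have hfk : ((k.factorial : ℂ)) ≠ 0 := by exact_mod_cast k.factorial_ne_zero
  have hk1 : ((k:ℂ) + 1) ≠ 0 := by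
    have : ((k+1:ℕ):ℂ) ≠ 0 := Nat.cast_ne_zero.mpr (Nat.succ_ne_zero k)
    push_cast at this; exact this
  have e1 : (ascPochhammer ℂ (k+1)).eval a = (ascPochhammer ℂ k).eval a * (a + k) :=
    ascPochhammer_succ_eval k a
  have e2 : (ascPochhammer ℂ (k+1)).eval (a-1) = (a-1) * (ascPochhammer ℂ k).eval a := by
    rw [asc_eval_succ_left]
    congr 2
    ring
  have e3 : (ascPochhammer ℂ (k+1)).eval b = b * (ascPochhammer ℂ k).eval (b+1) :=
    asc_eval_succ_left b k
  rw [e1, e2, e3, Nat.factorial_succ, pow_succ]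
  push_cast
  field_simp
  ring

/-- Contiguous relation: `φ(a+b, 2a; z) = ½[(1+b/a)φ(1+a+b,1+2a;z) + (1-b/a)φ(a+b,1+2a;z)]`. -/
lemma contiguous2 (a b z : ℂ) (ha : a ≠ 0)
    (h2a : ∀ j : ℕ, 2*a + (j:ℂ) ≠ 0) :
    kummerPhi (a + b) (2*a) z =
      (1/2 : ℂ) * ((1 + b/a) * kummerPhi (1 + a + b) (1 + 2*a) z
        + (1 - b/a) * kummerPhi (a + b) (1 + 2*a) z) := by
  have h2a' : ∀ j : ℕ, (1 + 2*a) + (j:ℂ) ≠ 0 := by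
    intro j h
    apply h2a (j+1)
    push_cast
    linear_combination h
  have hs1 := kummer_summable (1 + a + b) (1 + 2*a) z h2a'
  have hs2 := kummer_summable (a + b) (1 + 2*a) z h2a'
  rw [kummerPhi, kummerPhi, kummerPhi, ← tsum_mul_left (a := 1 + b/a), ← tsum_mul_left (a := 1 - b/a),
    ← Summable.tsum_add (hs1.mul_left _) (hs2.mul_left _), ← tsum_mul_left]
  apply tsum_congr
  intro k
  have hbk : (ascPochhammer ℂ k).eval (2*a) ≠ 0 := asc_ne_zero h2a k
  have hbk1 : (ascPochhammer ℂ k).eval (1 + 2*a) ≠ 0 := asc_ne_zero h2a' k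
  have hfk : ((k.factorial : ℂ)) ≠ 0 := by exact_mod_cast k.factorial_ne_zero
  have f1 : (a + b) * (ascPochhammer ℂ k).eval (1 + a + b) =
      (ascPochhammer ℂ k).eval (a + b) * ((a + b) + k) := by
    have h1 : (a+b) * (ascPochhammer ℂ k).eval ((a+b) + 1) = (ascPochhammer ℂ k).eval (a+b) * ((a+b) + k) := by
      rw [← asc_eval_succ_left, ascPochhammer_succ_eval]
    rw [show (1 + a + b) = (a+b) + 1 by ring]
    exact h1
  have f2 : (2*a) * (ascPochhammer ℂ k).eval (1 + 2*a) =
      (ascPochhammer ℂ k).eval (2*a) * (2*a + k) := by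
    have h1 : (2*a) * (ascPochhammer ℂ k).eval ((2*a) + 1) = (ascPochhammer ℂ k).eval (2*a) * (2*a + k) := by
      rw [← asc_eval_succ_left, ascPochhammer_succ_eval]
    rw [show (1 + 2*a) = (2*a) + 1 by ring]
    exact h1
  have key : 2 * a * ((ascPochhammer ℂ k).eval (1+2*a)) * ((ascPochhammer ℂ k).eval (a+b)) =
      (ascPochhammer ℂ k).eval (2*a) * ((a+b) * (ascPochhammer ℂ k).eval (1+a+b)
        + (a-b) * (ascPochhammer ℂ k).eval (a+b)) := by
    linear_combination (-((ascPochhammer ℂ k).eval (2*a))) * f1 + ((ascPochhammer ℂ k).eval (a+b)) * f2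
  generalize (ascPochhammer ℂ k).eval (a+b) = A at *
  generalize (ascPochhammer ℂ k).eval (1+a+b) = B at *
  generalize (ascPochhammer ℂ k).eval (2*a) = C at *
  generalize (ascPochhammer ℂ k).eval (1+2*a) = D at *
  generalize (k.factorial : ℂ) = F at *
  field_simp
  linear_combination (z^k) * key

lemma cancel_combo (c r E Em u v X1 X2 : ℂ) (hc : c ≠ 0) (hr : r ≠ 0) (h1 : E * Em = 1) :
    c⁻¹ * r⁻¹ * E * (u * (c * r * Em * X1) + v * (c * r * E * X2)) =
    u * X1 + v * ((E * E) * X2) := by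
  field_simp
  linear_combination (u * X1) * h1


/-- For real `α > -1/2`, `α ≠ 0`, purely imaginary `β` and nonzero real `x`:
(i) `x𝒫(x) = ((1+2α)/(2i)) χ_β(x)^{-1/2} |2x|^{-α} e^{ix} (A(x) - B(x))`;
(ii) `𝒬(x) = (1/2) χ_β(x)^{-1/2} |2x|^{-α} e^{ix} [(1+β/α)A(x) + (1-β/α)B(x)]`. -/
theorem funP_funQ_relations (α : ℝ) (hα : -1/2 < α) (hα0 : α ≠ 0)
    (β : ℂ) (hβ : β.re = 0) (x : ℝ) (hx : x ≠ 0) :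
    (x : ℂ) * funP α β x =
      ((1 + 2 * (α : ℂ)) / (2 * Complex.I)) * (chiHalf β x)⁻¹ * ((|2 * x| ^ (-α) : ℝ) : ℂ) *
        Complex.exp (Complex.I * x) * (funA α β x - funB α β x) ∧
    funQ α β x =
      (1 / 2 : ℂ) * (chiHalf β x)⁻¹ * ((|2 * x| ^ (-α) : ℝ) : ℂ) * Complex.exp (Complex.I * x) *
        ((1 + β / (α : ℂ)) * funA α β x + (1 - β / (α : ℂ)) * funB α β x) := by
  have hαc : (α:ℂ) ≠ 0 := Complex.ofReal_ne_zero.mpr hα0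
  have H1 : ∀ j : ℕ, (1 + 2*(α:ℂ)) + (j:ℂ) ≠ 0 := by
    intro j h
    have h' : ((1 + 2*α + j : ℝ) : ℂ) = 0 := by push_cast; linear_combination h
    rw [Complex.ofReal_eq_zero] at h'
    have hj : (0:ℝ) ≤ j := j.cast_nonneg
    linarith
  have H3 : ∀ j : ℕ, 2*(α:ℂ) + (j:ℂ) ≠ 0 := by
    intro j h
    have h' : ((2*α + j : ℝ) : ℂ) = 0 := by push_cast; linear_combination h
    rw [Complex.ofReal_eq_zero] at h'
    rcases Nat.eq_zero_or_pos j with hj | hj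
    · subst hj
      simp only [Nat.cast_zero, add_zero] at h'
      exact hα0 (by linarith)
    · have : (1:ℝ) ≤ j := by exact_mod_cast hj
      linarith
  have h1p2a : (1 + 2*(α:ℂ)) ≠ 0 := by simpa using H1 0
  have hc : chiHalf β x ≠ 0 := by
    unfold chiHalf
    split_ifs <;> exact Complex.exp_ne_zero _
  have habs : (0:ℝ) < |2 * x| := abs_pos.mpr (mul_ne_zero two_ne_zero hx)
  have hr : ((|2 * x| ^ α : ℝ) : ℂ) ≠ 0 :=
    Complex.ofReal_ne_zero.mpr (ne_of_gt (Real.rpow_pos_of_pos habs α))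
  have hrinv : ((|2 * x| ^ (-α) : ℝ) : ℂ) = ((|2 * x| ^ α : ℝ) : ℂ)⁻¹ := by
    rw [Real.rpow_neg (abs_nonneg _), Complex.ofReal_inv]
  have hE1 : Complex.exp (Complex.I * x) * Complex.exp (-(Complex.I * x)) = 1 := by
    rw [← Complex.exp_add]; simp
  have hEE : Complex.exp (Complex.I * x) * Complex.exp (Complex.I * x)
      = Complex.exp (2 * Complex.I * x) := by
    rw [← Complex.exp_add]; congr 1; ring
  have hK : Complex.exp (2 * Complex.I * x) *
      kummerPhi (1 + (α:ℂ) - β) (1 + 2*(α:ℂ)) (-(2 * Complex.I * x)) =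
      kummerPhi ((α:ℂ) + β) (1 + 2*(α:ℂ)) (2 * Complex.I * x) := by
    have := kummer_transform ((α:ℂ) + β) (1 + 2*(α:ℂ)) (2 * Complex.I * x) H1
    rw [show (1 + 2*(α:ℂ)) - ((α:ℂ) + β) = 1 + (α:ℂ) - β by ring] at this
    exact this
  have hC1 : kummerPhi (1 + (α:ℂ) + β) (1 + 2*(α:ℂ)) (2 * Complex.I * x)
      - kummerPhi ((α:ℂ) + β) (1 + 2*(α:ℂ)) (2 * Complex.I * x) =
      ((2 * Complex.I * x) / (1 + 2*(α:ℂ))) *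
        kummerPhi (1 + (α:ℂ) + β) (2 + 2*(α:ℂ)) (2 * Complex.I * x) := by
    have := contiguous1 (1 + (α:ℂ) + β) (1 + 2*(α:ℂ)) (2 * Complex.I * x) H1
    rw [show (1 + (α:ℂ) + β) - 1 = (α:ℂ) + β by ring,
        show (1 + 2*(α:ℂ)) + 1 = 2 + 2*(α:ℂ) by ring] at this
    exact this
  have hC2 := contiguous2 (α:ℂ) β (2 * Complex.I * x) hαc H3
  have h6 : ((1 + 2*(α:ℂ)) / (2 * Complex.I)) * ((2 * Complex.I * x) / (1 + 2*(α:ℂ))) = (x:ℂ) := by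
    field_simp
  have hG1 := cancel_combo (chiHalf β x) ((|2 * x| ^ α : ℝ) : ℂ)
      (Complex.exp (Complex.I * x)) (Complex.exp (-(Complex.I * x)))
      1 (-1)
      (kummerPhi (1 + (α:ℂ) + β) (1 + 2*(α:ℂ)) (2 * Complex.I * x))
      (kummerPhi (1 + (α:ℂ) - β) (1 + 2*(α:ℂ)) (-(2 * Complex.I * x)))
      hc hr hE1
  have hG2 := cancel_combo (chiHalf β x) ((|2 * x| ^ α : ℝ) : ℂ)
      (Complex.exp (Complex.I * x)) (Complex.exp (-(Complex.I * x)))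
      (1 + β / (α:ℂ)) (1 - β / (α:ℂ))
      (kummerPhi (1 + (α:ℂ) + β) (1 + 2*(α:ℂ)) (2 * Complex.I * x))
      (kummerPhi (1 + (α:ℂ) - β) (1 + 2*(α:ℂ)) (-(2 * Complex.I * x)))
      hc hr hE1
  constructor
  · rw [funP, funA, funB, hrinv]
    linear_combination (-((1 + 2*(α:ℂ)) / (2 * Complex.I))) * hG1
      + (((1 + 2*(α:ℂ)) / (2 * Complex.I)) *
          kummerPhi (1 + (α:ℂ) - β) (1 + 2*(α:ℂ)) (-(2 * Complex.I * x))) * hEE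
      + (((1 + 2*(α:ℂ)) / (2 * Complex.I))) * hK
      + (-((1 + 2*(α:ℂ)) / (2 * Complex.I))) * hC1
      + (-(kummerPhi (1 + (α:ℂ) + β) (2 + 2*(α:ℂ)) (2 * Complex.I * x))) * h6
  · rw [funQ, funA, funB, hrinv]
    linear_combination hC2 + (-(1/2 : ℂ)) * hG2
      + (-(1/2 : ℂ) * (1 - β / (α:ℂ)) *
          kummerPhi (1 + (α:ℂ) - β) (1 + 2*(α:ℂ)) (-(2 * Complex.I * x))) * hEE
      + (-(1/2 : ℂ) * (1 - β / (α:ℂ))) * hK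
end

section
/- Let α be real with α > −1/2 and α ≠ 0 and let β be purely imaginary. For all nonzero real x, y with x ≠ y, the confluent hypergeometric kernel admits the equivalent form K^{(α,β)}(x,y) = (1/π) · (Γ(1+α+β)Γ(1+α−β)/((1+2α)Γ(1+2α)²)) · χ_β(x)^{1/2} χ_β(y)^{1/2} e^{−i(x+y)} · 4^α |xy|^α · (x𝒫(x)𝒬(y) − y𝒫(y)𝒬(x))/(x−y). -/
open Complex Polynomial

/-! ### Auxiliary machinery for the kernel identity -/

namespace ChKernelAux

open Filter Finset

/-- The `k`-th term of the Kummer series. -/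
noncomputable def kTerm (a b z : ℂ) (k : ℕ) : ℂ :=
  ((ascPochhammer ℂ k).eval a / (ascPochhammer ℂ k).eval b) * z ^ k / (k.factorial : ℂ)

lemma kummerPhi_eq_tsum (a b z : ℂ) : kummerPhi a b z = ∑' k, kTerm a b z k := rfl

lemma poch_ne_zero {a : ℂ} (h : ∀ j : ℕ, a + j ≠ 0) (k : ℕ) :
    (ascPochhammer ℂ k).eval a ≠ 0 := by
  induction k with
  | zero => simp
  | succ k ih =>
    rw [ascPochhammer_succ_eval]
    exact mul_ne_zero ih (h k)

lemma poch_succ_left_eval (a : ℂ) (k : ℕ) :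
    (ascPochhammer ℂ (k+1)).eval a = a * (ascPochhammer ℂ k).eval (a + 1) := by
  rw [ascPochhammer_succ_left]
  simp [eval_comp]

lemma shift_ne {c : ℂ} (h : ∀ j : ℕ, c + j ≠ 0) : ∀ j : ℕ, (c + 1) + j ≠ 0 := by
  intro j
  have e : (c+1) + (j:ℂ) = c + ((j+1:ℕ):ℂ) := by push_cast; ring
  rw [e]; exact h (j+1)

lemma kTerm_ne_zero {a b z : ℂ} (ha : ∀ j : ℕ, a + j ≠ 0) (hb : ∀ j : ℕ, b + j ≠ 0)
    (hz : z ≠ 0) (k : ℕ) : kTerm a b z k ≠ 0 := by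
  unfold kTerm
  exact div_ne_zero (mul_ne_zero (div_ne_zero (poch_ne_zero ha k) (poch_ne_zero hb k))
    (pow_ne_zero k hz)) (Nat.cast_ne_zero.mpr k.factorial_ne_zero)

lemma kTerm_succ {a b z : ℂ} (hb : ∀ j : ℕ, b + j ≠ 0) (k : ℕ) :
    kTerm a b z (k+1) = kTerm a b z k * ((a + k) * z / ((b + k) * (k+1))) := by
  unfold kTerm
  rw [ascPochhammer_succ_eval, ascPochhammer_succ_eval, Nat.factorial_succ]
  have h1 : (ascPochhammer ℂ k).eval b ≠ 0 := poch_ne_zero hb k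
  have h2 : (b + k) ≠ 0 := hb k
  have h3 : ((k:ℂ)+1) ≠ 0 := by
    have : ((k+1:ℕ):ℂ) ≠ 0 := Nat.cast_ne_zero.mpr k.succ_ne_zero
    push_cast at this; exact this
  have h4 : ((k.factorial : ℂ)) ≠ 0 := Nat.cast_ne_zero.mpr k.factorial_ne_zero
  push_cast
  field_simp
  ring

lemma summable_norm_kTerm {a b : ℂ} (ha : ∀ j : ℕ, a + j ≠ 0) (hb : ∀ j : ℕ, b + j ≠ 0)
    {z : ℂ} (hz : z ≠ 0) : Summable fun k => ‖kTerm a b z k‖ := by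
  have hne := kTerm_ne_zero ha hb hz
  apply summable_of_ratio_test_tendsto_lt_one one_pos
    (Eventually.of_forall fun n => by simpa using hne n)
  have heq : ∀ n : ℕ, ‖‖kTerm a b z (n+1)‖‖ / ‖‖kTerm a b z n‖‖
      = ‖(a + n) * z / ((b + n) * (n+1))‖ := by
    intro n
    rw [norm_norm, norm_norm, kTerm_succ hb, norm_mul, mul_comm,
      mul_div_assoc, div_self (norm_ne_zero_iff.mpr (hne n)), mul_one]
  simp only [heq]
  have hupper : ∀ᶠ n : ℕ in atTop, ‖(a + n) * z / ((b + n) * (n+1))‖ ≤ (4 * ‖z‖) / n := by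
    have hN : ∀ᶠ n : ℕ in atTop, (2 * ‖b‖ + ‖a‖ + 1 : ℝ) ≤ n := by
      exact_mod_cast (tendsto_natCast_atTop_atTop (R := ℝ)).eventually_ge_atTop _
    filter_upwards [hN] with n hn
    have hb0 : (0:ℝ) ≤ ‖b‖ := norm_nonneg b
    have ha0 : (0:ℝ) ≤ ‖a‖ := norm_nonneg a
    have hn1 : (1:ℝ) ≤ n := by linarith
    have hbn : (n:ℝ)/2 ≤ ‖b + n‖ := by
      have : (n:ℝ) - ‖b‖ ≤ ‖b + n‖ := by
        have := norm_sub_norm_le ((n:ℂ)) (-b)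
        simpa [Complex.norm_natCast, add_comm] using this
      linarith
    have han : ‖a + (n:ℂ)‖ ≤ 2 * n := by
      calc ‖a + (n:ℂ)‖ ≤ ‖a‖ + ‖(n:ℂ)‖ := norm_add_le _ _
        _ = ‖a‖ + n := by rw [Complex.norm_natCast]
        _ ≤ 2 * n := by linarith
    rw [norm_div, norm_mul, norm_mul]
    have hden : (n:ℝ)/2 * n ≤ ‖b + (n:ℂ)‖ * ‖((n:ℂ)+1)‖ := by
      have : ‖((n:ℂ)+1)‖ = (n:ℝ)+1 := by
        rw [show ((n:ℂ)+1) = ((n+1:ℕ):ℂ) by push_cast; ring, Complex.norm_natCast]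
        push_cast; ring
      rw [this]
      have : (n:ℝ) ≤ (n:ℝ) + 1 := by linarith
      calc (n:ℝ)/2 * n ≤ (n:ℝ)/2 * ((n:ℝ)+1) := by nlinarith
        _ ≤ ‖b + (n:ℂ)‖ * ((n:ℝ)+1) := by nlinarith
    have hdpos : (0:ℝ) < (n:ℝ)/2 * n := by nlinarith
    calc ‖a + (n:ℂ)‖ * ‖z‖ / (‖b + (n:ℂ)‖ * ‖((n:ℂ)+1)‖)
        ≤ (2 * n) * ‖z‖ / ((n:ℝ)/2 * n) := by
          apply div_le_div₀ (by positivity) (by nlinarith [norm_nonneg z]) hdpos hden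
      _ = (4 * ‖z‖) / n := by field_simp; ring
  have hlow : ∀ n : ℕ, (0:ℝ) ≤ ‖(a + n) * z / ((b + n) * (n+1))‖ := fun n => norm_nonneg _
  have h0 : Tendsto (fun n : ℕ => (4 * ‖z‖) / n) atTop (nhds 0) :=
    tendsto_const_div_atTop_nhds_zero_nat _
  exact squeeze_zero' (Eventually.of_forall hlow) hupper h0

lemma kTerm_rec1 {a b z : ℂ} (hb : ∀ j : ℕ, b + j ≠ 0) (k : ℕ) :
    kTerm a b z (k+1) - kTerm (a-1) b z (k+1) = z / b * kTerm a (b+1) z k := by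
  have e1 : (ascPochhammer ℂ (k+1)).eval a = (ascPochhammer ℂ k).eval a * (a + k) :=
    ascPochhammer_succ_eval k a
  have e2 : (ascPochhammer ℂ (k+1)).eval (a-1) = (a-1) * (ascPochhammer ℂ k).eval a := by
    rw [poch_succ_left_eval, sub_add_cancel]
  have e3 : (ascPochhammer ℂ (k+1)).eval b = b * (ascPochhammer ℂ k).eval (b+1) :=
    poch_succ_left_eval b k
  have hb0 : b ≠ 0 := by simpa using hb 0
  have hB1 : (ascPochhammer ℂ k).eval (b+1) ≠ 0 := poch_ne_zero (shift_ne hb) k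
  have h3 : ((k:ℂ)+1) ≠ 0 := by
    have : ((k+1:ℕ):ℂ) ≠ 0 := Nat.cast_ne_zero.mpr k.succ_ne_zero
    push_cast at this; exact this
  have h4 : ((k.factorial : ℂ)) ≠ 0 := Nat.cast_ne_zero.mpr k.factorial_ne_zero
  unfold kTerm
  rw [e1, e2, e3, Nat.factorial_succ]
  push_cast
  field_simp
  ring

lemma kTerm_rec2 {a b z : ℂ} (hb : ∀ j : ℕ, b + j ≠ 0) (k : ℕ) :
    kTerm a b z (k+1) - kTerm a (b+1) z (k+1) = a * z / (b * (b+1)) * kTerm (a+1) (b+2) z k := by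
  have e1 : (ascPochhammer ℂ (k+1)).eval a = a * (ascPochhammer ℂ k).eval (a+1) :=
    poch_succ_left_eval a k
  have e3 : (ascPochhammer ℂ (k+1)).eval b = b * (ascPochhammer ℂ k).eval (b+1) :=
    poch_succ_left_eval b k
  have e4 : (ascPochhammer ℂ (k+1)).eval (b+1) = (b+1) * (ascPochhammer ℂ k).eval (b+2) := by
    rw [poch_succ_left_eval]; ring_nf
  have hrel : (ascPochhammer ℂ k).eval (b+1) * (b+1+k)
      = (b+1) * (ascPochhammer ℂ k).eval (b+2) := by
    rw [← e4, ascPochhammer_succ_eval]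
  have hb0 : b ≠ 0 := by simpa using hb 0
  have hb1 : (b+1) ≠ 0 := by simpa using hb 1
  have hB1 : (ascPochhammer ℂ k).eval (b+1) ≠ 0 := poch_ne_zero (shift_ne hb) k
  have hB2 : (ascPochhammer ℂ k).eval (b+2) ≠ 0 := by
    have : ∀ j : ℕ, (b+2) + (j:ℂ) ≠ 0 := by
      have := shift_ne (shift_ne hb)
      intro j; have h := this j; rw [show (b+1+1) = b+2 by ring] at h; exact h
    exact poch_ne_zero this k
  have h3 : ((k:ℂ)+1) ≠ 0 := by
    have : ((k+1:ℕ):ℂ) ≠ 0 := Nat.cast_ne_zero.mpr k.succ_ne_zero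
    push_cast at this; exact this
  have h4 : ((k.factorial : ℂ)) ≠ 0 := Nat.cast_ne_zero.mpr k.factorial_ne_zero
  have hbk : (b+1+(k:ℂ)) ≠ 0 := by
    have := hb (k+1); push_cast at this
    intro h; apply this; rw [← h]; ring
  have hB2eq : (ascPochhammer ℂ k).eval (b+2)
      = (ascPochhammer ℂ k).eval (b+1) * (b+1+k) / (b+1) := by
    field_simp
    linear_combination -hrel
  unfold kTerm
  rw [e1, e3, e4, hB2eq, Nat.factorial_succ]
  push_cast
  field_simp
  ring

lemma kummer_rec1 {a b z : ℂ} (ha : ∀ j : ℕ, a + j ≠ 0) (ha' : ∀ j : ℕ, (a-1) + j ≠ 0)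
    (hb : ∀ j : ℕ, b + j ≠ 0) (hz : z ≠ 0) :
    kummerPhi a b z - kummerPhi (a-1) b z = z / b * kummerPhi a (b+1) z := by
  have S1 : Summable (kTerm a b z) := (summable_norm_kTerm ha hb hz).of_norm
  have S2 : Summable (kTerm (a-1) b z) := (summable_norm_kTerm ha' hb hz).of_norm
  rw [kummerPhi_eq_tsum, kummerPhi_eq_tsum, kummerPhi_eq_tsum, ← Summable.tsum_sub S1 S2, ← tsum_mul_left]
  rw [Summable.tsum_eq_zero_add (S1.sub S2)]
  have h0 : kTerm a b z 0 - kTerm (a-1) b z 0 = 0 := by simp [kTerm]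
  rw [h0, zero_add]
  exact tsum_congr (kTerm_rec1 hb)

lemma kummer_rec2 {a b z : ℂ} (ha : ∀ j : ℕ, a + j ≠ 0)
    (hb : ∀ j : ℕ, b + j ≠ 0) (hz : z ≠ 0) :
    kummerPhi a b z - kummerPhi a (b+1) z = a * z / (b * (b+1)) * kummerPhi (a+1) (b+2) z := by
  have hb1 := shift_ne hb
  have S1 : Summable (kTerm a b z) := (summable_norm_kTerm ha hb hz).of_norm
  have S2 : Summable (kTerm a (b+1) z) := (summable_norm_kTerm ha hb1 hz).of_norm
  rw [kummerPhi_eq_tsum, kummerPhi_eq_tsum, kummerPhi_eq_tsum, ← Summable.tsum_sub S1 S2, ← tsum_mul_left]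
  rw [Summable.tsum_eq_zero_add (S1.sub S2)]
  have h0 : kTerm a b z 0 - kTerm a (b+1) z 0 = 0 := by simp [kTerm]
  rw [h0, zero_add]
  exact tsum_congr (kTerm_rec2 hb)

lemma chu (m : ℕ) : ∀ b c : ℂ, (∀ j : ℕ, b + j ≠ 0) →
    ∑ k ∈ Finset.range (m+1),
        ((-1)^k * (m.choose k : ℂ)) * ((ascPochhammer ℂ k).eval c / (ascPochhammer ℂ k).eval b)
      = (ascPochhammer ℂ m).eval (b - c) / (ascPochhammer ℂ m).eval b := by
  induction m with
  | zero => intro b c hb; simp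
  | succ m ih =>
    intro b c hb
    have hb1 := shift_ne hb
    have hb0 : b ≠ 0 := by simpa using hb 0
    have hB1 : ∀ k, (ascPochhammer ℂ k).eval (b+1) ≠ 0 := poch_ne_zero hb1
    set t2 : ℕ → ℂ := fun k =>
      ((-1)^k * (m.choose k : ℂ)) * ((ascPochhammer ℂ k).eval c / (ascPochhammer ℂ k).eval b)
      with ht2
    set t1 : ℕ → ℂ := fun k =>
      ((-1)^k * (m.choose k : ℂ)) *
        ((ascPochhammer ℂ k).eval (c+1) / (ascPochhammer ℂ k).eval (b+1)) with ht1
    have hsplit : ∀ i : ℕ,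
        ((-1)^(i+1) * ((m+1).choose (i+1) : ℂ)) *
          ((ascPochhammer ℂ (i+1)).eval c / (ascPochhammer ℂ (i+1)).eval b)
        = (-(c/b)) * t1 i + t2 (i+1) := by
      intro i
      rw [Nat.choose_succ_succ']
      rw [poch_succ_left_eval c, poch_succ_left_eval b]
      push_cast
      rw [ht1, ht2]
      simp only []
      rw [poch_succ_left_eval c, poch_succ_left_eval b]
      field_simp
      ring
    calc ∑ k ∈ Finset.range (m+1+1),
          ((-1)^k * ((m+1).choose k : ℂ)) *
            ((ascPochhammer ℂ k).eval c / (ascPochhammer ℂ k).eval b)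
        = (∑ i ∈ Finset.range (m+1),
            ((-1)^(i+1) * ((m+1).choose (i+1) : ℂ)) *
              ((ascPochhammer ℂ (i+1)).eval c / (ascPochhammer ℂ (i+1)).eval b)) + 1 := by
          rw [Finset.sum_range_succ']; simp
      _ = (∑ i ∈ Finset.range (m+1), ((-(c/b)) * t1 i + t2 (i+1))) + 1 := by
          rw [Finset.sum_congr rfl fun i _ => hsplit i]
      _ = (-(c/b)) * (∑ i ∈ Finset.range (m+1), t1 i)
            + ((∑ i ∈ Finset.range (m+1), t2 (i+1)) + t2 0) := by
          rw [Finset.sum_add_distrib, ← Finset.mul_sum]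
          have : t2 0 = 1 := by simp [ht2]
          rw [this]; ring
      _ = (-(c/b)) * (∑ i ∈ Finset.range (m+1), t1 i) + ∑ k ∈ Finset.range (m+1), t2 k := by
          have ht2sum : (∑ i ∈ Finset.range (m+1), t2 (i+1)) + t2 0
              = ∑ k ∈ Finset.range (m+1), t2 k := by
            calc (∑ i ∈ Finset.range (m+1), t2 (i+1)) + t2 0
                = ∑ k ∈ Finset.range (m+1+1), t2 k := (Finset.sum_range_succ' t2 (m+1)).symm
              _ = (∑ k ∈ Finset.range (m+1), t2 k) + t2 (m+1) := Finset.sum_range_succ t2 (m+1)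
              _ = ∑ k ∈ Finset.range (m+1), t2 k := by
                  have : t2 (m+1) = 0 := by simp [ht2, Nat.choose_succ_self]
                  rw [this, add_zero]
          rw [ht2sum]
      _ = (-(c/b)) * ((ascPochhammer ℂ m).eval ((b+1) - (c+1)) / (ascPochhammer ℂ m).eval (b+1))
            + (ascPochhammer ℂ m).eval (b - c) / (ascPochhammer ℂ m).eval b := by
          rw [ih (b+1) (c+1) hb1, ih b c hb]
      _ = (ascPochhammer ℂ (m+1)).eval (b - c) / (ascPochhammer ℂ (m+1)).eval b := by
          rw [show (b+1) - (c+1) = b - c by ring]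
          rw [ascPochhammer_succ_eval, poch_succ_left_eval b]
          have hrel : (ascPochhammer ℂ m).eval b * (b + m)
              = b * (ascPochhammer ℂ m).eval (b+1) := by
            rw [← ascPochhammer_succ_eval, poch_succ_left_eval]
          have hBm : (ascPochhammer ℂ m).eval b ≠ 0 := poch_ne_zero hb m
          have hbm : b + (m:ℂ) ≠ 0 := hb m
          have hsub : (ascPochhammer ℂ m).eval (b+1)
              = (ascPochhammer ℂ m).eval b * (b+m) / b := by
            field_simp
            linear_combination -hrel
          rw [hsub]
          field_simp
          ring

lemma kummer_transform {a b z : ℂ} (hb : ∀ j : ℕ, b + j ≠ 0)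
    (hba : ∀ j : ℕ, (b - a) + j ≠ 0) (hz : z ≠ 0) :
    Complex.exp z * kummerPhi (b - a) b (-z) = kummerPhi a b z := by
  have hsa : Summable fun k => ‖kTerm (b-a) b (-z) k‖ :=
    summable_norm_kTerm hba hb (neg_ne_zero.mpr hz)
  have hexp : Summable fun n : ℕ => ‖z ^ n / (n.factorial : ℂ)‖ := by
    have := Real.summable_pow_div_factorial ‖z‖
    simpa [norm_div, norm_pow, Complex.norm_natCast] using this
  have hexpz : Complex.exp z = ∑' n : ℕ, z ^ n / (n.factorial : ℂ) := by
    rw [Complex.exp_eq_exp_ℂ, NormedSpace.exp_eq_tsum_div]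
  rw [hexpz, kummerPhi_eq_tsum, kummerPhi_eq_tsum,
    tsum_mul_tsum_eq_tsum_sum_range_of_summable_norm hexp hsa]
  apply tsum_congr
  intro n
  have hrefl := Finset.sum_range_reflect
    (fun k => z ^ k / (k.factorial : ℂ) * kTerm (b-a) b (-z) (n - k)) (n+1)
  simp only [Nat.add_sub_cancel] at hrefl
  rw [← hrefl]
  have hterm : ∀ j ∈ Finset.range (n+1),
      z ^ (n - j) / ((n - j).factorial : ℂ) * kTerm (b-a) b (-z) (n - (n - j))
      = (z ^ n / (n.factorial : ℂ)) *
          (((-1)^j * (n.choose j : ℂ)) *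
            ((ascPochhammer ℂ j).eval (b-a) / (ascPochhammer ℂ j).eval b)) := by
    intro j hj
    have hjn : j ≤ n := Nat.lt_succ_iff.mp (Finset.mem_range.mp hj)
    rw [Nat.sub_sub_self hjn]
    unfold kTerm
    have hfac : ((n.choose j : ℂ)) * (j.factorial : ℂ) * ((n-j).factorial : ℂ)
        = (n.factorial : ℂ) := by
      exact_mod_cast congrArg (Nat.cast (R := ℂ)) (Nat.choose_mul_factorial_mul_factorial hjn)
    have hzn : z ^ (n - j) * z ^ j = z ^ n := by
      rw [← pow_add, Nat.sub_add_cancel hjn]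
    have hnegz : (-z) ^ j = (-1)^j * z ^ j := by rw [neg_pow]
    have h1 : ((j.factorial : ℂ)) ≠ 0 := Nat.cast_ne_zero.mpr j.factorial_ne_zero
    have h2 : (((n-j).factorial : ℂ)) ≠ 0 := Nat.cast_ne_zero.mpr (n-j).factorial_ne_zero
    have h3 : ((n.factorial : ℂ)) ≠ 0 := Nat.cast_ne_zero.mpr n.factorial_ne_zero
    have hEb : (ascPochhammer ℂ j).eval b ≠ 0 := poch_ne_zero hb j
    rw [hnegz]
    field_simp
    linear_combination
      ((ascPochhammer ℂ j).eval (b-a) * (n.factorial : ℂ)) * hzn +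
      (-((ascPochhammer ℂ j).eval (b-a) * z^n)) * hfac
  rw [Finset.sum_congr rfl hterm, ← Finset.mul_sum, chu n b (b-a) hb,
    show b - (b - a) = a by ring]
  unfold kTerm
  ring

end ChKernelAux

open ChKernelAux in
/-- For real `α > -1/2`, `α ≠ 0`, purely imaginary `β`, and all nonzero reals `x ≠ y`, the
confluent hypergeometric kernel admits the equivalent form
`K^{(α,β)}(x,y) = (1/π)·(Γ(1+α+β)Γ(1+α-β)/((1+2α)Γ(1+2α)²))·χ_β(x)^{1/2} χ_β(y)^{1/2}
  ·e^{-i(x+y)}·4^α |xy|^α·(x𝒫(x)𝒬(y) - y𝒫(y)𝒬(x))/(x-y)`. -/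
theorem chKernel_equiv_form (α : ℝ) (hα : -1/2 < α) (hα0 : α ≠ 0)
    (β : ℂ) (hβ : β.re = 0) (x y : ℝ) (hx : x ≠ 0) (hy : y ≠ 0) (hxy : x ≠ y) :
    chKernel α β x y =
      (1 / (Real.pi : ℂ)) *
        (Complex.Gamma (1 + (α : ℂ) + β) * Complex.Gamma (1 + (α : ℂ) - β) /
          ((1 + 2 * (α : ℂ)) * Complex.Gamma (1 + 2 * (α : ℂ)) ^ 2)) *
        chiHalf β x * chiHalf β y * Complex.exp (-(Complex.I * ((x : ℂ) + (y : ℂ)))) *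
        (((4 : ℝ) ^ α : ℝ) : ℂ) * ((|x * y| ^ α : ℝ) : ℂ) *
        (((x : ℂ) * funP α β x * funQ α β y - (y : ℂ) * funP α β y * funQ α β x) /
          ((x : ℂ) - (y : ℂ))) := by
  have hβ' : (-β).re = 0 := by simp [hβ]
  have key : ∀ (c : ℂ), c.re = 0 → ∀ t : ℝ, t ≠ 0 → ((t:ℂ) + c) ≠ 0 := by
    intro c hc t ht h
    apply ht
    have := congrArg Complex.re h
    simpa [hc] using this
  have ha1 : ∀ j : ℕ, (1 + (α:ℂ) + β) + j ≠ 0 := by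
    intro j
    have e : (1 + (α:ℂ) + β) + j = ((1 + α + j : ℝ) : ℂ) + β := by push_cast; ring
    rw [e]
    refine key β hβ _ ?_
    have hj : (0:ℝ) ≤ j := Nat.cast_nonneg j
    nlinarith
  have ha3 : ∀ j : ℕ, (1 + (α:ℂ) - β) + j ≠ 0 := by
    intro j
    have e : (1 + (α:ℂ) - β) + j = ((1 + α + j : ℝ) : ℂ) + (-β) := by push_cast; ring
    rw [e]
    refine key (-β) hβ' _ ?_
    have hj : (0:ℝ) ≤ j := Nat.cast_nonneg j
    nlinarith
  have ha2 : ∀ j : ℕ, ((α:ℂ) + β) + j ≠ 0 := by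
    intro j
    have e : ((α:ℂ) + β) + j = ((α + j : ℝ) : ℂ) + β := by push_cast; ring
    rw [e]
    refine key β hβ _ ?_
    cases j with
    | zero => simpa using hα0
    | succ m =>
      have hm : (0:ℝ) ≤ m := Nat.cast_nonneg m
      push_cast
      nlinarith
  have hb1 : ∀ j : ℕ, (1 + 2*(α:ℂ)) + j ≠ 0 := by
    intro j
    have e : (1 + 2*(α:ℂ)) + j = ((1 + 2*α + j : ℝ) : ℂ) := by push_cast; ring
    rw [e, Complex.ofReal_ne_zero]
    have hj : (0:ℝ) ≤ j := Nat.cast_nonneg j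
    nlinarith
  have hb2 : ∀ j : ℕ, (2*(α:ℂ)) + j ≠ 0 := by
    intro j
    have e : (2*(α:ℂ)) + j = ((2*α + j : ℝ) : ℂ) := by push_cast; ring
    rw [e, Complex.ofReal_ne_zero]
    cases j with
    | zero =>
      push_cast
      intro h; exact hα0 (by linarith)
    | succ m =>
      have hm : (0:ℝ) ≤ m := Nat.cast_nonneg m
      push_cast
      nlinarith
  have hzt : ∀ t : ℝ, t ≠ 0 → (2*Complex.I*(t:ℂ)) ≠ 0 := fun t ht =>
    mul_ne_zero (mul_ne_zero two_ne_zero Complex.I_ne_zero) (Complex.ofReal_ne_zero.mpr ht)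
  -- the Kummer transform applied to funB
  have hfunB : ∀ t : ℝ, t ≠ 0 →
      funB α β t = chiHalf β t * ((|2*t| ^ α : ℝ) : ℂ) * Complex.exp (-(Complex.I*(t:ℂ))) *
        kummerPhi ((α:ℂ)+β) (1 + 2*(α:ℂ)) (2*Complex.I*(t:ℂ)) := by
    intro t ht
    have hba : ∀ j : ℕ, ((1 + 2*(α:ℂ)) - ((α:ℂ)+β)) + j ≠ 0 := by
      intro j
      rw [show (1 + 2*(α:ℂ)) - ((α:ℂ)+β) = 1 + (α:ℂ) - β by ring]
      exact ha3 j
    have h := kummer_transform (a := (α:ℂ)+β) (b := 1 + 2*(α:ℂ)) hb1 hba (hzt t ht)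
    rw [show (1 + 2*(α:ℂ)) - ((α:ℂ)+β) = 1 + (α:ℂ) - β by ring] at h
    have hsplit : Complex.exp (Complex.I*(t:ℂ))
        = Complex.exp (-(Complex.I*(t:ℂ))) * Complex.exp (2*Complex.I*(t:ℂ)) := by
      rw [← Complex.exp_add]; congr 1; ring
    unfold funB
    rw [hsplit, mul_assoc (chiHalf β t * _), mul_assoc, mul_assoc, h, ← mul_assoc, ← mul_assoc]
  -- the two contiguous relations
  have hMrec : ∀ t : ℝ, t ≠ 0 →
      kummerPhi (1+(α:ℂ)+β) (1+2*(α:ℂ)) (2*Complex.I*(t:ℂ))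
        - kummerPhi ((α:ℂ)+β) (1+2*(α:ℂ)) (2*Complex.I*(t:ℂ))
      = (2*Complex.I*(t:ℂ)) / (1+2*(α:ℂ)) * funP α β t := by
    intro t ht
    have ha' : ∀ j : ℕ, ((1+(α:ℂ)+β) - 1) + j ≠ 0 := by
      intro j
      rw [show (1+(α:ℂ)+β) - 1 = (α:ℂ)+β by ring]
      exact ha2 j
    have h := kummer_rec1 (a := 1+(α:ℂ)+β) (b := 1+2*(α:ℂ)) ha1 ha' hb1 (hzt t ht)
    rw [show (1+(α:ℂ)+β) - 1 = (α:ℂ)+β by ring,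
      show (1+2*(α:ℂ))+1 = 2+2*(α:ℂ) by ring] at h
    unfold funP
    exact h
  have hQrec : ∀ t : ℝ, t ≠ 0 →
      funQ α β t - kummerPhi ((α:ℂ)+β) (1+2*(α:ℂ)) (2*Complex.I*(t:ℂ))
      = ((α:ℂ)+β) * (2*Complex.I*(t:ℂ)) / (2*(α:ℂ) * (1+2*(α:ℂ))) * funP α β t := by
    intro t ht
    have h := kummer_rec2 (a := (α:ℂ)+β) (b := 2*(α:ℂ)) ha2 hb2 (hzt t ht)
    rw [show (2*(α:ℂ))+1 = 1+2*(α:ℂ) by ring, show (2*(α:ℂ))+2 = 2+2*(α:ℂ) by ring,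
      show ((α:ℂ)+β)+1 = 1+(α:ℂ)+β by ring] at h
    unfold funP funQ
    exact h
  -- the key algebraic identity for the numerator
  have key2 :
      kummerPhi (1+(α:ℂ)+β) (1+2*(α:ℂ)) (2*Complex.I*(x:ℂ)) *
          kummerPhi ((α:ℂ)+β) (1+2*(α:ℂ)) (2*Complex.I*(y:ℂ))
        - kummerPhi (1+(α:ℂ)+β) (1+2*(α:ℂ)) (2*Complex.I*(y:ℂ)) *
          kummerPhi ((α:ℂ)+β) (1+2*(α:ℂ)) (2*Complex.I*(x:ℂ))
      = (2*Complex.I/(1+2*(α:ℂ))) *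
          ((x:ℂ) * funP α β x * funQ α β y - (y:ℂ) * funP α β y * funQ α β x) := by
    linear_combination
      (kummerPhi ((α:ℂ)+β) (1+2*(α:ℂ)) (2*Complex.I*(y:ℂ))) * (hMrec x hx)
      - (kummerPhi ((α:ℂ)+β) (1+2*(α:ℂ)) (2*Complex.I*(x:ℂ))) * (hMrec y hy)
      - (2*Complex.I*(x:ℂ)/(1+2*(α:ℂ))) * funP α β x * (hQrec y hy)
      + (2*Complex.I*(y:ℂ)/(1+2*(α:ℂ))) * funP α β y * (hQrec x hx)
  have hnum : funA α β x * funB α β y - funA α β y * funB α β x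
      = chiHalf β x * chiHalf β y * ((|2*x| ^ α : ℝ) : ℂ) * ((|2*y| ^ α : ℝ) : ℂ) *
        (Complex.exp (-(Complex.I*(x:ℂ))) * Complex.exp (-(Complex.I*(y:ℂ)))) *
        (2*Complex.I/(1+2*(α:ℂ))) *
        ((x:ℂ) * funP α β x * funQ α β y - (y:ℂ) * funP α β y * funQ α β x) := by
    rw [hfunB x hx, hfunB y hy]
    unfold funA
    linear_combination
      (chiHalf β x * ((|2*x| ^ α : ℝ) : ℂ) * Complex.exp (-(Complex.I*(x:ℂ))) *
        (chiHalf β y * ((|2*y| ^ α : ℝ) : ℂ) * Complex.exp (-(Complex.I*(y:ℂ))))) * key2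
  have hexp2 : Complex.exp (-(Complex.I*((x:ℂ)+(y:ℂ))))
      = Complex.exp (-(Complex.I*(x:ℂ))) * Complex.exp (-(Complex.I*(y:ℂ))) := by
    rw [← Complex.exp_add]; congr 1; ring
  have hpow : ((|2*x| ^ α : ℝ) : ℂ) * ((|2*y| ^ α : ℝ) : ℂ)
      = (((4:ℝ)^α : ℝ) : ℂ) * ((|x*y| ^ α : ℝ) : ℂ) := by
    rw [← Complex.ofReal_mul, ← Complex.ofReal_mul]
    congr 1
    rw [← Real.mul_rpow (abs_nonneg _) (abs_nonneg _),
      ← Real.mul_rpow (by norm_num) (abs_nonneg _)]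
    congr 1
    rw [abs_mul, abs_mul, abs_mul]
    norm_num
    ring
  have hπ : ((Real.pi : ℝ) : ℂ) ≠ 0 := Complex.ofReal_ne_zero.mpr Real.pi_ne_zero
  have h2a : (1 + 2*(α:ℂ)) ≠ 0 := by simpa using hb1 0
  have hIcancel : (1 / (2 * (Real.pi:ℂ) * Complex.I)) * (2*Complex.I) = 1/(Real.pi:ℂ) := by
    field_simp
  unfold chKernel
  rw [hnum, hexp2,
    show Complex.Gamma (1 + (α:ℂ) + β) * Complex.Gamma (1 + (α:ℂ) - β) /
        ((1 + 2*(α:ℂ)) * Complex.Gamma (1 + 2*(α:ℂ)) ^ 2)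
      = Complex.Gamma (1 + (α:ℂ) + β) * Complex.Gamma (1 + (α:ℂ) - β) /
          Complex.Gamma (1 + 2*(α:ℂ)) ^ 2 * (1 + 2*(α:ℂ))⁻¹
      from by rw [div_mul_eq_div_div_swap, div_eq_mul_inv]]
  linear_combination
    ((Complex.Gamma (1 + (α:ℂ) + β) * Complex.Gamma (1 + (α:ℂ) - β)) *
      chiHalf β x * chiHalf β y *
      (Complex.exp (-(Complex.I*(x:ℂ))) * Complex.exp (-(Complex.I*(y:ℂ)))) *
      ((x:ℂ) * funP α β x * funQ α β y - (y:ℂ) * funP α β y * funQ α β x) *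
      (1 + 2*(α:ℂ))⁻¹ * ((Complex.Gamma (1 + 2*(α:ℂ)))^2)⁻¹ * ((x:ℂ) - (y:ℂ))⁻¹) *
      (((|2*x| ^ α : ℝ) : ℂ) * ((|2*y| ^ α : ℝ) : ℂ)) * hIcancel
    + ((Complex.Gamma (1 + (α:ℂ) + β) * Complex.Gamma (1 + (α:ℂ) - β)) *
      chiHalf β x * chiHalf β y *
      (Complex.exp (-(Complex.I*(x:ℂ))) * Complex.exp (-(Complex.I*(y:ℂ)))) *
      ((x:ℂ) * funP α β x * funQ α β y - (y:ℂ) * funP α β y * funQ α β x) *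
      (1 + 2*(α:ℂ))⁻¹ * ((Complex.Gamma (1 + 2*(α:ℂ)))^2)⁻¹ * ((x:ℂ) - (y:ℂ))⁻¹ *
      (1/(Real.pi:ℂ))) * hpow
end

section
/- If q is a real polynomial of degree at most n such that ∫_{a_j}^{b_j} q(x)/|R(x)|^{1/2} dx = 0 for every j = 0, 1, …, n, then q is the zero polynomial. -/
open Polynomial Finset

open MeasureTheory Set in
/-- Integrability with a one-sided inverse-square-root bound at the left endpoint. -/
lemma aux_int_left {c m : ℝ} (hcm : c ≤ m) {f : ℝ → ℝ}
    (hf : AEStronglyMeasurable f (volume.restrict (Set.uIoc c m))) {C : ℝ}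
    (hb : ∀ x ∈ Set.Ioc c m, ‖f x‖ ≤ C * (x - c) ^ (-(1/2) : ℝ)) :
    IntervalIntegrable f volume c m := by
  have h0 : IntervalIntegrable (fun x : ℝ => x ^ (-(1/2) : ℝ)) volume 0 (m - c) :=
    intervalIntegral.intervalIntegrable_rpow' (by norm_num)
  have hg : IntervalIntegrable (fun x => C * (x - c) ^ (-(1/2) : ℝ)) volume c m := by
    have := (h0.comp_sub_right c).const_mul C
    simpa using this
  refine hg.mono_fun' hf ?_
  filter_upwards [MeasureTheory.ae_restrict_mem measurableSet_uIoc] with x hx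
  exact hb x (by rwa [Set.uIoc_of_le hcm] at hx)

open MeasureTheory Set in
/-- Integrability with a one-sided inverse-square-root bound at the right endpoint. -/
lemma aux_int_right {m d : ℝ} (hmd : m ≤ d) {f : ℝ → ℝ}
    (hf : AEStronglyMeasurable f (volume.restrict (Set.uIoc m d))) {C : ℝ}
    (hb : ∀ x ∈ Set.Ioc m d, ‖f x‖ ≤ C * (d - x) ^ (-(1/2) : ℝ)) :
    IntervalIntegrable f volume m d := by
  have h0 : IntervalIntegrable (fun x : ℝ => x ^ (-(1/2) : ℝ)) volume 0 (d - m) :=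
    intervalIntegral.intervalIntegrable_rpow' (by norm_num)
  have hg : IntervalIntegrable (fun x => C * (d - x) ^ (-(1/2) : ℝ)) volume m d := by
    have := ((h0.comp_sub_left d).const_mul C).symm
    simpa using this
  refine hg.mono_fun' hf ?_
  filter_upwards [MeasureTheory.ae_restrict_mem measurableSet_uIoc] with x hx
  exact hb x (by rwa [Set.uIoc_of_le hmd] at hx)

/-- If `q` is a real polynomial of degree at most `n` such that
`∫_{a_j}^{b_j} q(x)/|R(x)|^{1/2} dx = 0` for every `j = 0,…,n`, where
`R(x) = ∏_{j=0}^n (x-a_j)(x-b_j)` and `a_0 < b_0 < a_1 < b_1 < ⋯ < a_n < b_n`,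
then `q` is the zero polynomial. -/
theorem zero_of_band_integrals_eq_zero (n : ℕ) (a b : ℕ → ℝ)
    (hab : ∀ j ≤ n, a j < b j) (hba : ∀ j < n, b j < a (j + 1))
    (q : Polynomial ℝ) (hq : q.degree ≤ (n : ℕ))
    (hint : ∀ j ≤ n,
      (∫ x in (a j)..(b j),
        q.eval x / Real.sqrt |∏ i ∈ Finset.range (n + 1), ((x - a i) * (x - b i))|) = 0) :
    q = 0 := by
  by_contra hq0
  set P : ℝ → ℝ := fun x => ∏ i ∈ Finset.range (n + 1), ((x - a i) * (x - b i)) with hPdef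
  set f : ℝ → ℝ := fun x => q.eval x / Real.sqrt |P x| with hfdef
  -- ordering across bands
  have key : ∀ j ≤ n, ∀ i < j, b i < a j := by
    intro j hj
    induction j with
    | zero => intro i hi; omega
    | succ k ih =>
      intro i hi
      rcases Nat.lt_succ_iff_lt_or_eq.mp hi with h | h
      · exact (ih (by omega) i h).trans ((hab k (by omega)).trans (hba k (by omega)))
      · subst h; exact hba i (by omega)
  have hPc : Continuous P := by
    apply continuous_finset_prod
    intro i _
    exact ((continuous_id.sub continuous_const).mul (continuous_id.sub continuous_const))
  have hfm : Measurable f := by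
    exact (Polynomial.continuous q).measurable.div
      (Real.continuous_sqrt.comp (continuous_abs.comp hPc)).measurable
  -- nonvanishing of P on each open band
  have hPne : ∀ j ≤ n, ∀ x ∈ Set.Ioo (a j) (b j), P x ≠ 0 := by
    intro j hj x hx
    refine Finset.prod_ne_zero_iff.mpr ?_
    intro i hi
    have hin : i ≤ n := Nat.lt_succ_iff.mp (Finset.mem_range.mp hi)
    rcases lt_trichotomy i j with h | h | h
    · have h1 : b i < a j := key j hj i h
      have h2 : a i < b i := hab i hin
      exact mul_ne_zero (sub_ne_zero.mpr (by nlinarith [hx.1])) (sub_ne_zero.mpr (by nlinarith [hx.1]))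
    · subst h
      exact mul_ne_zero (sub_ne_zero.mpr (ne_of_gt hx.1)) (sub_ne_zero.mpr (ne_of_lt hx.2))
    · have h1 : b j < a i := key i hin j h
      have h2 : a i < b i := hab i hin
      exact mul_ne_zero (sub_ne_zero.mpr (by nlinarith [hx.2])) (sub_ne_zero.mpr (by nlinarith [hx.2]))
  -- integrability on each band
  have hInt : ∀ j ≤ n, IntervalIntegrable f MeasureTheory.volume (a j) (b j) := by
    intro j hj
    have hjm : j ∈ Finset.range (n + 1) := Finset.mem_range.mpr (by omega)
    have hcd : a j < b j := hab j hj
    set c := a j with hc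
    set d := b j with hd
    set m0 : ℝ := (c + d) / 2 with hm0
    have hcm : c < m0 := by simp only [hm0]; linarith
    have hmd : m0 < d := by simp only [hm0]; linarith
    -- the remaining factors
    set G : ℝ → ℝ := fun x => (x - d) * ∏ i ∈ (Finset.range (n + 1)).erase j,
      ((x - a i) * (x - b i)) with hGdef
    set H : ℝ → ℝ := fun x => (x - c) * ∏ i ∈ (Finset.range (n + 1)).erase j,
      ((x - a i) * (x - b i)) with hHdef
    have hprodc : Continuous fun x : ℝ => ∏ i ∈ (Finset.range (n + 1)).erase j,
        ((x - a i) * (x - b i)) := by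
      apply continuous_finset_prod
      intro i _
      exact ((continuous_id.sub continuous_const).mul (continuous_id.sub continuous_const))
    have hGc : Continuous G := (continuous_id.sub continuous_const).mul hprodc
    have hHc : Continuous H := (continuous_id.sub continuous_const).mul hprodc
    have hPG : ∀ x, P x = (x - c) * G x := by
      intro x
      rw [hPdef, hGdef]
      simp only
      rw [← Finset.mul_prod_erase _ _ hjm]
      ring
    have hPH : ∀ x, P x = (x - d) * H x := by
      intro x
      rw [hPdef, hHdef]
      simp only
      rw [← Finset.mul_prod_erase _ _ hjm]
      ring
    have hrestne : ∀ x, c ≤ x → x ≤ d →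
        (∏ i ∈ (Finset.range (n + 1)).erase j, ((x - a i) * (x - b i))) ≠ 0 := by
      intro x hx1 hx2
      refine Finset.prod_ne_zero_iff.mpr ?_
      intro i hi
      obtain ⟨hij, hir⟩ := Finset.mem_erase.mp hi
      have hin : i ≤ n := Nat.lt_succ_iff.mp (Finset.mem_range.mp hir)
      have h2 : a i < b i := hab i hin
      rcases lt_or_gt_of_ne hij with h | h
      · have h1 : b i < c := key j hj i h
        exact mul_ne_zero (sub_ne_zero.mpr (by nlinarith)) (sub_ne_zero.mpr (by nlinarith))
      · have h1 : d < a i := key i hin j h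
        exact mul_ne_zero (sub_ne_zero.mpr (by nlinarith)) (sub_ne_zero.mpr (by nlinarith))
    have hGne : ∀ x ∈ Set.Icc c m0, G x ≠ 0 := by
      intro x hx
      exact mul_ne_zero (sub_ne_zero.mpr (ne_of_lt (lt_of_le_of_lt hx.2 hmd)))
        (hrestne x hx.1 (le_of_lt (lt_of_le_of_lt hx.2 hmd)))
    have hHne : ∀ x ∈ Set.Icc m0 d, H x ≠ 0 := by
      intro x hx
      exact mul_ne_zero (sub_ne_zero.mpr (ne_of_gt (lt_of_lt_of_le hcm hx.1)))
        (hrestne x (le_of_lt (lt_of_lt_of_le hcm hx.1)) hx.2)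
    -- global bound for |q| on [c, d]
    obtain ⟨y₀, hy₀, hmax⟩ := isCompact_Icc.exists_isMaxOn (Set.nonempty_Icc.mpr hcd.le)
      ((continuous_abs.comp (Polynomial.continuous q)).continuousOn)
    set M : ℝ := |q.eval y₀| with hM
    have hM0 : 0 ≤ M := abs_nonneg _
    have hMb : ∀ x, c ≤ x → x ≤ d → |q.eval x| ≤ M := fun x h1 h2 => hmax ⟨h1, h2⟩
    -- left half
    have hleft : IntervalIntegrable f MeasureTheory.volume c m0 := by
      obtain ⟨x₀, hx₀, hmin⟩ := isCompact_Icc.exists_isMinOn (Set.nonempty_Icc.mpr hcm.le)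
        ((continuous_abs.comp hGc).continuousOn)
      set δ : ℝ := |G x₀| with hδdef
      have hδ : 0 < δ := abs_pos.mpr (hGne x₀ hx₀)
      have hsδ : 0 < Real.sqrt δ := Real.sqrt_pos.mpr hδ
      refine aux_int_left hcm.le (hfm.aestronglyMeasurable.restrict) (C := M / Real.sqrt δ) ?_
      intro x hx
      have hx1 : 0 < x - c := sub_pos.mpr hx.1
      have hxd : x ≤ d := hx.2.trans hmd.le
      have hGx : δ ≤ |G x| := hmin ⟨hx.1.le, hx.2⟩
      have hPx : (x - c) * δ ≤ |P x| := by
        rw [hPG x, abs_mul, abs_of_pos hx1]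
        exact mul_le_mul_of_nonneg_left hGx hx1.le
      have hs1 : Real.sqrt (x - c) * Real.sqrt δ ≤ Real.sqrt |P x| := by
        rw [← Real.sqrt_mul hx1.le]
        exact Real.sqrt_le_sqrt hPx
      have hs3 : 0 < Real.sqrt (x - c) * Real.sqrt δ :=
        mul_pos (Real.sqrt_pos.mpr hx1) hsδ
      have hnorm : ‖f x‖ = |q.eval x| / Real.sqrt |P x| := by
        rw [hfdef]
        simp only [Real.norm_eq_abs, abs_div, abs_of_nonneg (Real.sqrt_nonneg _)]
      rw [hnorm]
      have hstep : |q.eval x| / Real.sqrt |P x| ≤ M / (Real.sqrt (x - c) * Real.sqrt δ) := by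
        gcongr
        exact hMb x hx.1.le hxd
      refine hstep.trans (le_of_eq ?_)
      rw [Real.rpow_neg hx1.le, ← Real.sqrt_eq_rpow, mul_comm (Real.sqrt (x - c)),
        ← div_div, div_eq_mul_inv]
    have hright : IntervalIntegrable f MeasureTheory.volume m0 d := by
      obtain ⟨x₀, hx₀, hmin⟩ := isCompact_Icc.exists_isMinOn (Set.nonempty_Icc.mpr hmd.le)
        ((continuous_abs.comp hHc).continuousOn)
      set δ : ℝ := |H x₀| with hδdef
      have hδ : 0 < δ := abs_pos.mpr (hHne x₀ hx₀)
      have hsδ : 0 < Real.sqrt δ := Real.sqrt_pos.mpr hδ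
      refine aux_int_right hmd.le (hfm.aestronglyMeasurable.restrict) (C := M / Real.sqrt δ) ?_
      intro x hx
      rcases eq_or_lt_of_le hx.2 with heq | hxd
      · -- x = d : both sides vanish
        have hP0 : P x = 0 := by rw [hPH x, heq]; simp
        have h1 : ‖f x‖ = 0 := by
          rw [hfdef]; simp [hP0]
        rw [h1, heq, sub_self, Real.zero_rpow (by norm_num), mul_zero]
      · have hx1 : 0 < d - x := sub_pos.mpr hxd
        have hxc : c ≤ x := (hcm.trans_le hx.1.le).le
        have hHx : δ ≤ |H x| := hmin ⟨hx.1.le, hx.2⟩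
        have hPx : (d - x) * δ ≤ |P x| := by
          rw [hPH x, abs_mul, abs_sub_comm, abs_of_pos hx1]
          exact mul_le_mul_of_nonneg_left hHx hx1.le
        have hs1 : Real.sqrt (d - x) * Real.sqrt δ ≤ Real.sqrt |P x| := by
          rw [← Real.sqrt_mul hx1.le]
          exact Real.sqrt_le_sqrt hPx
        have hs3 : 0 < Real.sqrt (d - x) * Real.sqrt δ :=
          mul_pos (Real.sqrt_pos.mpr hx1) hsδ
        have hnorm : ‖f x‖ = |q.eval x| / Real.sqrt |P x| := by
          rw [hfdef]
          simp only [Real.norm_eq_abs, abs_div, abs_of_nonneg (Real.sqrt_nonneg _)]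
        rw [hnorm]
        have hstep : |q.eval x| / Real.sqrt |P x| ≤ M / (Real.sqrt (d - x) * Real.sqrt δ) := by
          gcongr
          exact hMb x hxc hxd.le
        refine hstep.trans (le_of_eq ?_)
        rw [Real.rpow_neg hx1.le, ← Real.sqrt_eq_rpow, mul_comm (Real.sqrt (d - x)),
          ← div_div, div_eq_mul_inv]
    exact hleft.trans hright
  -- each band contains a root of q
  have hroot : ∀ j ≤ n, ∃ x ∈ Set.Ioo (a j) (b j), q.eval x = 0 := by
    intro j hj
    by_contra hno
    push_neg at hno
    have hcd : a j < b j := hab j hj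
    set m0 : ℝ := (a j + b j) / 2 with hm0
    have hm0mem : m0 ∈ Set.Ioo (a j) (b j) := ⟨by simp only [hm0]; linarith, by simp only [hm0]; linarith⟩
    have hfpos : ∀ x ∈ Set.Ioo (a j) (b j), q.eval x ≠ 0 → (0 < q.eval x ↔ 0 < f x) := by
      intro x hx hne
      have hP : 0 < Real.sqrt |P x| := Real.sqrt_pos.mpr (abs_pos.mpr (hPne j hj x hx))
      constructor
      · intro h; exact div_pos h hP
      · intro h
        by_contra hle
        push_neg at hle
        have : f x ≤ 0 := div_nonpos_of_nonpos_of_nonneg hle (Real.sqrt_nonneg _)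
        linarith
    -- q has constant sign on the band
    have hsign : (∀ x ∈ Set.Ioo (a j) (b j), 0 < q.eval x) ∨
        (∀ x ∈ Set.Ioo (a j) (b j), q.eval x < 0) := by
      rcases (hno m0 hm0mem).lt_or_gt with hneg | hpos
      · right
        intro x hx
        by_contra hle
        push_neg at hle
        have hxpos : 0 < q.eval x := lt_of_le_of_ne hle (Ne.symm (hno x hx))
        rcases lt_trichotomy x m0 with h | h | h
        · have hsub : Set.Ioo x m0 ⊆ Set.Ioo (a j) (b j) :=
            Set.Ioo_subset_Ioo hx.1.le hm0mem.2.le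
          have := intermediate_value_Ioo' h.le (Polynomial.continuous q).continuousOn
            (Set.mem_Ioo.mpr ⟨hneg, hxpos⟩)
          obtain ⟨y, hy, hy0⟩ := this
          exact hno y (hsub hy) hy0
        · subst h; linarith
        · have hsub : Set.Ioo m0 x ⊆ Set.Ioo (a j) (b j) :=
            Set.Ioo_subset_Ioo hm0mem.1.le hx.2.le
          have := intermediate_value_Ioo h.le (Polynomial.continuous q).continuousOn
            (Set.mem_Ioo.mpr ⟨hneg, hxpos⟩)
          obtain ⟨y, hy, hy0⟩ := this
          exact hno y (hsub hy) hy0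
      · left
        intro x hx
        by_contra hle
        push_neg at hle
        have hxneg : q.eval x < 0 := lt_of_le_of_ne hle (hno x hx)
        rcases lt_trichotomy x m0 with h | h | h
        · have hsub : Set.Ioo x m0 ⊆ Set.Ioo (a j) (b j) :=
            Set.Ioo_subset_Ioo hx.1.le hm0mem.2.le
          have := intermediate_value_Ioo h.le (Polynomial.continuous q).continuousOn
            (Set.mem_Ioo.mpr ⟨hxneg, hpos⟩)
          obtain ⟨y, hy, hy0⟩ := this
          exact hno y (hsub hy) hy0
        · subst h; linarith
        · have hsub : Set.Ioo m0 x ⊆ Set.Ioo (a j) (b j) :=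
            Set.Ioo_subset_Ioo hm0mem.1.le hx.2.le
          have := intermediate_value_Ioo' h.le (Polynomial.continuous q).continuousOn
            (Set.mem_Ioo.mpr ⟨hxneg, hpos⟩)
          obtain ⟨y, hy, hy0⟩ := this
          exact hno y (hsub hy) hy0
    rcases hsign with hall | hall
    · have hfpos' : ∀ x ∈ Set.Ioo (a j) (b j), 0 < f x := fun x hx =>
        (hfpos x hx (ne_of_gt (hall x hx))).mp (hall x hx)
      have := intervalIntegral.intervalIntegral_pos_of_pos_on (hInt j hj) hfpos' hcd
      rw [hint j hj] at this
      exact lt_irrefl 0 this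
    · have hfneg' : ∀ x ∈ Set.Ioo (a j) (b j), 0 < (-f) x := by
        intro x hx
        have hP : 0 < Real.sqrt |P x| := Real.sqrt_pos.mpr (abs_pos.mpr (hPne j hj x hx))
        have : f x < 0 := div_neg_of_neg_of_pos (hall x hx) hP
        simpa using this
      have h2 := intervalIntegral.intervalIntegral_pos_of_pos_on ((hInt j hj).neg) hfneg' hcd
      have h3 : (0 : ℝ) < -∫ x in (a j)..(b j), f x := by
        rw [← intervalIntegral.integral_neg]; exact h2
      rw [hint j hj] at h3
      simp at h3
  -- pick a root in each band; they are distinct, giving n+1 roots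
  have hroot' : ∀ j : Fin (n + 1), ∃ x, x ∈ Set.Ioo (a j) (b j) ∧ q.eval x = 0 := by
    intro j
    obtain ⟨x, hx1, hx2⟩ := hroot j (Nat.lt_succ_iff.mp j.isLt)
    exact ⟨x, hx1, hx2⟩
  choose r hr1 hr2 using hroot'
  have hmono : ∀ i j : Fin (n + 1), i < j → r i < r j := by
    intro i j hij
    have h1 : r i < b i := (hr1 i).2
    have h2 : b i < a j := key j (Nat.lt_succ_iff.mp j.isLt) i hij
    have h3 : a j < r j := (hr1 j).1
    linarith
  have hinj : Function.Injective r := by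
    intro i j h
    by_contra hne
    rcases lt_or_gt_of_ne hne with hlt | hlt
    · exact absurd h (ne_of_lt (hmono i j hlt))
    · exact absurd h.symm (ne_of_lt (hmono j i hlt))
  have hsub : Finset.image r Finset.univ ⊆ q.roots.toFinset := by
    intro y hy
    obtain ⟨j, _, rfl⟩ := Finset.mem_image.mp hy
    rw [Multiset.mem_toFinset, Polynomial.mem_roots']
    exact ⟨hq0, hr2 j⟩
  have hcard : n + 1 ≤ n := by
    calc n + 1 = (Finset.image r Finset.univ).card := by
          rw [Finset.card_image_of_injective _ hinj, Finset.card_univ, Fintype.card_fin]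
      _ ≤ q.roots.toFinset.card := Finset.card_le_card hsub
      _ ≤ Multiset.card q.roots := Multiset.toFinset_card_le _
      _ ≤ q.natDegree := Polynomial.card_roots' q
      _ ≤ n := Polynomial.natDegree_le_iff_degree_le.mpr hq
  omega
end

section
/- Let p be a monic real polynomial of degree n+1 such that ∫_{a_j}^{b_j} p(x)/|R(x)|^{1/2} dx = 0 for every j = 0, 1, …, n. Then for each j there is exactly one point x_j ∈ (a_j, b_j) with p(x_j) = 0, each x_j is a simple zero of p, and p(z) = ∏_{j=0}^{n} (z − x_j); in particular p has no zeros (real or complex) outside the bands (a_j, b_j). -/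
open Polynomial Finset

open MeasureTheory Set in
private lemma sqrt_bound_integrable (A B : ℝ) (hAB : A < B) (g : ℝ → ℝ)
    (hm : AEStronglyMeasurable g (volume.restrict (Set.uIoc A B))) (K : ℝ)
    (hbd : ∀ x ∈ Set.Ioc A B, |g x| ≤ K * ((x - A) ^ (-2⁻¹ : ℝ) + (B - x) ^ (-2⁻¹ : ℝ))) :
    IntervalIntegrable g volume A B := by
  have h1 : IntervalIntegrable (fun x => (x - A) ^ (-2⁻¹ : ℝ)) volume A B := by
    simpa using (intervalIntegral.intervalIntegrable_rpow' (a := A - A) (b := B - A)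
      (r := -2⁻¹) (by norm_num)).comp_sub_right A
  have h2 : IntervalIntegrable (fun x => (B - x) ^ (-2⁻¹ : ℝ)) volume A B := by
    simpa using ((intervalIntegral.intervalIntegrable_rpow' (a := B - B) (b := B - A)
      (r := -2⁻¹) (by norm_num)).comp_sub_left B).symm
  refine ((h1.add h2).const_mul K).mono_fun hm ?_
  rw [Set.uIoc_of_le hAB.le]
  refine (MeasureTheory.ae_restrict_mem measurableSet_Ioc).mono fun x hx => ?_
  simp only [Real.norm_eq_abs]
  exact (hbd x hx).trans (le_abs_self _)

/-- Let `p` be a monic real polynomial of degree `n+1` with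
`∫_{a_j}^{b_j} p(x)/|R(x)|^{1/2} dx = 0` for every `j = 0,…,n`, where
`R(x) = ∏_{j=0}^n (x-a_j)(x-b_j)` and `a_0 < b_0 < a_1 < b_1 < ⋯ < a_n < b_n`.
Then for each `j` there is exactly one zero `x_j ∈ (a_j, b_j)` of `p`, each `x_j` is a simple
zero, `p(z) = ∏_{j=0}^n (z - x_j)`, and `p` has no zeros (real or complex) outside the bands. -/
theorem zeros_of_monic_with_vanishing_band_integrals (n : ℕ) (a b : ℕ → ℝ)
    (hab : ∀ j ≤ n, a j < b j) (hba : ∀ j < n, b j < a (j + 1))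
    (p : Polynomial ℝ) (hmonic : p.Monic) (hdeg : p.natDegree = n + 1)
    (hint : ∀ j ≤ n,
      (∫ x in (a j)..(b j),
        p.eval x / Real.sqrt |∏ i ∈ Finset.range (n + 1), ((x - a i) * (x - b i))|) = 0) :
    ∃ x : ℕ → ℝ,
      (∀ j ≤ n, x j ∈ Set.Ioo (a j) (b j)) ∧
      (∀ j ≤ n, ∀ y ∈ Set.Ioo (a j) (b j), p.eval y = 0 → y = x j) ∧
      (∀ j ≤ n, (Polynomial.derivative p).eval (x j) ≠ 0) ∧
      p = ∏ j ∈ Finset.range (n + 1), (Polynomial.X - Polynomial.C (x j)) ∧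
      (∀ w : ℂ, Polynomial.aeval w p = 0 → ∃ j ≤ n, w = ((x j : ℝ) : ℂ)) := by
  have hchain : ∀ i j : ℕ, i < j → j ≤ n → b i < a j := by
    intro i j
    induction j with
    | zero => intro h1 _; exact absurd h1 (Nat.not_lt_zero i)
    | succ k ih =>
      intro hik hkn
      rcases Nat.lt_succ_iff_lt_or_eq.mp hik with h | h
      · exact lt_trans (lt_trans (ih h (by omega)) (hab k (by omega))) (hba k (by omega))
      · subst h; exact hba i (by omega)
  have hcont : Continuous fun x : ℝ => p.eval x := p.continuous
  have hRcont : Continuous fun x : ℝ => ∏ i ∈ Finset.range (n + 1), ((x - a i) * (x - b i)) :=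
    continuous_finset_prod _ fun i _ =>
      (continuous_id.sub continuous_const).mul (continuous_id.sub continuous_const)
  -- Step 1: each band contains a zero of p
  have hroot : ∀ j ≤ n, ∃ y ∈ Set.Ioo (a j) (b j), p.eval y = 0 := by
    intro j hj
    by_contra hcon
    push_neg at hcon
    have hAB := hab j hj
    set A := a j with hA
    set B := b j with hB
    set R : ℝ → ℝ := fun x => ∏ i ∈ Finset.range (n + 1), ((x - a i) * (x - b i)) with hR
    set Q : ℝ → ℝ := fun x => ∏ i ∈ (Finset.range (n + 1)).erase j,
      ((x - a i) * (x - b i)) with hQdef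
    have hQcont : Continuous Q := continuous_finset_prod _ fun i _ =>
      (continuous_id.sub continuous_const).mul (continuous_id.sub continuous_const)
    have hjmem : j ∈ Finset.range (n + 1) := Finset.mem_range.mpr (by omega)
    have hfac : ∀ x : ℝ, R x = ((x - A) * (x - B)) * Q x := fun x =>
      (Finset.mul_prod_erase _ _ hjmem).symm
    have hQne : ∀ x ∈ Set.Icc A B, Q x ≠ 0 := by
      intro x hx
      refine Finset.prod_ne_zero_iff.mpr fun i hi => ?_
      obtain ⟨hij, hirange⟩ := Finset.mem_erase.mp hi
      have hin : i ≤ n := by have := Finset.mem_range.mp hirange; omega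
      rcases lt_or_gt_of_ne hij with h | h
      · have hbix : b i < x := lt_of_lt_of_le (hchain i j h hj) hx.1
        have haix : a i < x := (hab i hin).trans hbix
        exact mul_ne_zero (sub_ne_zero.mpr haix.ne') (sub_ne_zero.mpr hbix.ne')
      · have hxai : x < a i := lt_of_le_of_lt hx.2 (hchain j i h hin)
        have hxbi : x < b i := hxai.trans (hab i hin)
        exact mul_ne_zero (sub_ne_zero.mpr hxai.ne) (sub_ne_zero.mpr hxbi.ne)
    obtain ⟨z, hzmem, hzmin⟩ := isCompact_Icc.exists_isMinOn (Set.nonempty_Icc.mpr hAB.le)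
      (hQcont.abs.continuousOn)
    set c := |Q z| with hc
    have hcpos : 0 < c := abs_pos.mpr (hQne z hzmem)
    have hcle : ∀ x ∈ Set.Icc A B, c ≤ |Q x| := fun x hx => hzmin hx
    obtain ⟨w, hwmem, hwmax⟩ := isCompact_Icc.exists_isMaxOn (Set.nonempty_Icc.mpr hAB.le)
      (hcont.abs.continuousOn)
    set M := |p.eval w| with hM
    have hMnonneg : 0 ≤ M := abs_nonneg _
    have hMle : ∀ x ∈ Set.Icc A B, |p.eval x| ≤ M := fun x hx => hwmax hx
    set g : ℝ → ℝ := fun x => p.eval x / Real.sqrt |R x| with hgdef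
    have hgm : Measurable g := hcont.measurable.div
      ((Real.continuous_sqrt.comp (continuous_abs.comp hRcont)).measurable)
    have hRpos : ∀ x ∈ Set.Ioo A B, 0 < |R x| := by
      intro x hx
      rw [hfac x]
      have h1 : 0 < x - A := sub_pos.mpr hx.1
      have h2 : x - B < 0 := sub_neg.mpr hx.2
      exact abs_pos.mpr (mul_ne_zero (mul_ne_zero h1.ne' h2.ne)
        (hQne x (Set.Ioo_subset_Icc_self hx)))
    have hLpos : (0:ℝ) < B - A := sub_pos.mpr hAB
    have key : ∀ u v : ℝ, 0 < u → 0 < v → u + v = B - A →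
        1 / (Real.sqrt u * Real.sqrt v) ≤
          Real.sqrt (2 / (B - A)) * (1 / Real.sqrt u + 1 / Real.sqrt v) := by
      have main : ∀ u v : ℝ, 0 < u → 0 < v → u + v = B - A → (B - A) / 2 ≤ v →
          1 / (Real.sqrt u * Real.sqrt v) ≤
            Real.sqrt (2 / (B - A)) * (1 / Real.sqrt u + 1 / Real.sqrt v) := by
        intro u v hu hv huv hv2
        have hsu : 0 < Real.sqrt u := Real.sqrt_pos.mpr hu
        have hsv : 0 < Real.sqrt v := Real.sqrt_pos.mpr hv
        have hS : 0 ≤ Real.sqrt (2 / (B - A)) := Real.sqrt_nonneg _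
        have h1 : 1 / Real.sqrt v ≤ Real.sqrt (2 / (B - A)) := by
          rw [show 2 / (B - A) = ((B - A) / 2)⁻¹ by field_simp, Real.sqrt_inv, one_div]
          exact inv_anti₀ (Real.sqrt_pos.mpr (by linarith)) (Real.sqrt_le_sqrt hv2)
        calc 1 / (Real.sqrt u * Real.sqrt v)
            = (1 / Real.sqrt u) * (1 / Real.sqrt v) := by rw [div_mul_div_comm, one_mul]
          _ ≤ (1 / Real.sqrt u) * Real.sqrt (2 / (B - A)) :=
              mul_le_mul_of_nonneg_left h1 (by positivity)
          _ ≤ Real.sqrt (2 / (B - A)) * (1 / Real.sqrt u + 1 / Real.sqrt v) := by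
              rw [mul_comm]
              exact mul_le_mul_of_nonneg_left (le_add_of_nonneg_right (by positivity)) hS
      intro u v hu hv huv
      rcases le_total u v with h | h
      · exact main u v hu hv huv (by linarith)
      · have h2 := main v u hv hu (by linarith) (by linarith)
        calc 1 / (Real.sqrt u * Real.sqrt v) = 1 / (Real.sqrt v * Real.sqrt u) := by
              rw [mul_comm]
          _ ≤ Real.sqrt (2 / (B - A)) * (1 / Real.sqrt v + 1 / Real.sqrt u) := h2
          _ = Real.sqrt (2 / (B - A)) * (1 / Real.sqrt u + 1 / Real.sqrt v) := by ring
    set K := (M / Real.sqrt c) * Real.sqrt (2 / (B - A)) with hK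
    have hKnonneg : 0 ≤ K := by positivity
    have hbound : ∀ x ∈ Set.Ioc A B,
        |g x| ≤ K * ((x - A) ^ (-2⁻¹ : ℝ) + (B - x) ^ (-2⁻¹ : ℝ)) := by
      intro x hx
      rcases eq_or_lt_of_le hx.2 with hxB | hxB
      · have hR0 : R x = 0 := by rw [hfac, hxB]; ring
        have hg0 : g x = 0 := by simp [hgdef, hR0]
        rw [hg0, abs_zero]
        exact mul_nonneg hKnonneg (add_nonneg
          (Real.rpow_nonneg (by linarith [hx.1]) _)
          (Real.rpow_nonneg (by linarith [hx.2]) _))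
      · have hxIoo : x ∈ Set.Ioo A B := ⟨hx.1, hxB⟩
        have hu : 0 < x - A := sub_pos.mpr hx.1
        have hv : 0 < B - x := sub_pos.mpr hxB
        have habs : |R x| = (x - A) * (B - x) * |Q x| := by
          rw [hfac, abs_mul, abs_mul, abs_of_pos hu, abs_of_neg (sub_neg.mpr hxB)]
          ring
        have hsqrt : Real.sqrt |R x| =
            Real.sqrt (x - A) * Real.sqrt (B - x) * Real.sqrt |Q x| := by
          rw [habs, Real.sqrt_mul (by positivity), Real.sqrt_mul hu.le]
        have hgle : |g x| ≤ M / (Real.sqrt (x - A) * Real.sqrt (B - x) * Real.sqrt c) := by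
          simp only [hgdef]
          rw [abs_div, abs_of_nonneg (Real.sqrt_nonneg _), hsqrt]
          apply div_le_div₀ hMnonneg (hMle x (Set.Ioo_subset_Icc_self hxIoo)) (by positivity)
          exact mul_le_mul_of_nonneg_left
            (Real.sqrt_le_sqrt (hcle x (Set.Ioo_subset_Icc_self hxIoo))) (by positivity)
        have hrw1 : (x - A) ^ (-2⁻¹ : ℝ) = 1 / Real.sqrt (x - A) := by
          rw [Real.rpow_neg hu.le, Real.sqrt_eq_rpow, one_div]; norm_num
        have hrw2 : (B - x) ^ (-2⁻¹ : ℝ) = 1 / Real.sqrt (B - x) := by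
          rw [Real.rpow_neg hv.le, Real.sqrt_eq_rpow, one_div]; norm_num
        rw [hrw1, hrw2]
        calc |g x| ≤ M / (Real.sqrt (x - A) * Real.sqrt (B - x) * Real.sqrt c) := hgle
          _ = (M / Real.sqrt c) * (1 / (Real.sqrt (x - A) * Real.sqrt (B - x))) := by
              rw [div_mul_div_comm, mul_one,
                mul_comm (Real.sqrt c) (Real.sqrt (x - A) * Real.sqrt (B - x))]
          _ ≤ (M / Real.sqrt c) *
              (Real.sqrt (2 / (B - A)) * (1 / Real.sqrt (x - A) + 1 / Real.sqrt (B - x))) :=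
              mul_le_mul_of_nonneg_left (key _ _ hu hv (by ring)) (by positivity)
          _ = K * (1 / Real.sqrt (x - A) + 1 / Real.sqrt (B - x)) := by rw [hK]; ring
    have hgint : IntervalIntegrable g MeasureTheory.volume A B :=
      sqrt_bound_integrable A B hAB g hgm.aestronglyMeasurable.restrict K hbound
    have hmidmem : (A + B) / 2 ∈ Set.Ioo A B := ⟨by linarith, by linarith⟩
    have hIoo : Set.OrdConnected (Set.Ioo A B) := Set.ordConnected_Ioo
    have ivt : ∀ y ∈ Set.Ioo A B, ∀ z ∈ Set.Ioo A B, p.eval y < 0 → 0 < p.eval z → False := by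
      intro y hy z hz hy0 hz0
      have h0mem : (0:ℝ) ∈ Set.uIcc (p.eval y) (p.eval z) :=
        Set.mem_uIcc.mpr (Or.inl ⟨hy0.le, hz0.le⟩)
      obtain ⟨t, ht, ht0⟩ := intermediate_value_uIcc (hcont.continuousOn) h0mem
      exact hcon t (hIoo.uIcc_subset hy hz ht) ht0
    obtain ⟨ε, hεpos⟩ : ∃ ε : ℝ, ∀ x ∈ Set.Ioo A B, 0 < ε * p.eval x := by
      rcases (hcon _ hmidmem).lt_or_gt with hneg | hpos
      · refine ⟨-1, fun x hx => ?_⟩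
        rcases (hcon x hx).lt_or_gt with h | h
        · nlinarith
        · exact absurd (ivt _ hmidmem _ hx hneg h) not_false
      · refine ⟨1, fun x hx => ?_⟩
        rcases (hcon x hx).lt_or_gt with h | h
        · exact absurd (ivt _ hx _ hmidmem h hpos) not_false
        · simpa using h
    have hpos : ∀ x ∈ Set.Ioo A B, 0 < ε * g x := by
      intro x hx
      simp only [hgdef]
      rw [← mul_div_assoc]
      exact div_pos (hεpos x hx) (Real.sqrt_pos.mpr (hRpos x hx))
    have h0 : (∫ x in A..B, g x) = 0 := by
      simp only [hgdef, hR, hA, hB]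
      exact hint j hj
    have hposint := intervalIntegral.intervalIntegral_pos_of_pos_on
      (hgint.const_mul ε) hpos hAB
    rw [intervalIntegral.integral_const_mul, h0, mul_zero] at hposint
    exact lt_irrefl 0 hposint
  choose! x hx1 hx2 using hroot
  have hlt : ∀ i j, i ≤ n → j ≤ n → i < j → x i < x j := by
    intro i j hi hj hij
    have h1 := (hx1 i hi).2
    have h2 := hchain i j hij hj
    have h3 := (hx1 j hj).1
    linarith
  have hinj : ∀ i ∈ Finset.range (n + 1), ∀ j ∈ Finset.range (n + 1), x i = x j → i = j := by
    intro i hi j hj hxy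
    have hi' : i ≤ n := by have := Finset.mem_range.mp hi; omega
    have hj' : j ≤ n := by have := Finset.mem_range.mp hj; omega
    by_contra hne
    rcases lt_or_gt_of_ne hne with h | h
    · exact absurd hxy (hlt i j hi' hj' h).ne
    · exact absurd hxy.symm (hlt j i hj' hi' h).ne
  have hprod : p = ∏ j ∈ Finset.range (n + 1), (X - C (x j)) := by
    set q := ∏ j ∈ Finset.range (n + 1), (X - C (x j)) with hqdef
    have hqmonic : q.Monic := monic_prod_of_monic _ _ fun i _ => monic_X_sub_C _
    have hqdeg : q.natDegree = n + 1 := by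
      rw [hqdef, natDegree_prod_of_monic _ _ fun i _ => monic_X_sub_C _]
      simp [natDegree_X_sub_C]
    have hdvd : q ∣ p := by
      apply Finset.prod_dvd_of_coprime
      · intro i hi j hj hij
        exact Polynomial.isCoprime_X_sub_C_of_isUnit_sub
          (IsUnit.mk0 _ (sub_ne_zero.mpr fun h => hij (hinj i hi j hj h)))
      · intro i hi
        exact dvd_iff_isRoot.mpr (hx2 i (by have := Finset.mem_range.mp hi; omega))
    obtain ⟨r, hr⟩ := hdvd
    have hp0 : p ≠ 0 := hmonic.ne_zero
    have hr0 : r ≠ 0 := by rintro rfl; rw [mul_zero] at hr; exact hp0 hr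
    have hdegr : r.natDegree = 0 := by
      have h := Polynomial.natDegree_mul hqmonic.ne_zero hr0
      rw [← hr, hdeg, hqdeg] at h
      omega
    have hrC : r = C (r.coeff 0) := Polynomial.eq_C_of_natDegree_eq_zero hdegr
    have hlead : r.coeff 0 = 1 := by
      have h2 : p.leadingCoeff = q.leadingCoeff * r.leadingCoeff := by
        rw [hr, leadingCoeff_mul]
      rw [hmonic.leadingCoeff, hqmonic.leadingCoeff, one_mul] at h2
      rw [Polynomial.leadingCoeff, hdegr] at h2
      exact h2.symm
    rw [hr, hrC, hlead, map_one, mul_one]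
  have hsep : p.Separable := by
    rw [hprod]
    exact Polynomial.separable_prod_X_sub_C_iff'.mpr hinj
  have hder : ∀ j ≤ n, (Polynomial.derivative p).eval (x j) ≠ 0 := by
    intro j hj hd0
    obtain ⟨u, v, huv⟩ := hsep
    have h := congrArg (Polynomial.eval (x j)) huv
    simp [hx2 j hj, hd0] at h
  have huniq : ∀ j ≤ n, ∀ y ∈ Set.Ioo (a j) (b j), p.eval y = 0 → y = x j := by
    intro j hj y hy hy0
    rw [hprod, eval_prod] at hy0
    obtain ⟨i, hi, h0⟩ := Finset.prod_eq_zero_iff.mp hy0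
    have hin : i ≤ n := by have := Finset.mem_range.mp hi; omega
    have hyx : y = x i := by simpa [sub_eq_zero] using h0
    rcases lt_trichotomy i j with h | h | h
    · exfalso
      have h1 := (hx1 i hin).2
      have h2 := hchain i j h hj
      have h3 := hy.1
      rw [hyx] at h3
      linarith
    · rw [hyx, h]
    · exfalso
      have h1 := (hx1 i hin).1
      have h2 := hchain j i h hin
      have h3 := hy.2
      rw [hyx] at h3
      linarith
  have hcplx : ∀ w : ℂ, Polynomial.aeval w p = 0 → ∃ j ≤ n, w = ((x j : ℝ) : ℂ) := by
    intro w hw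
    rw [hprod, map_prod] at hw
    obtain ⟨i, hi, h0⟩ := Finset.prod_eq_zero_iff.mp hw
    refine ⟨i, by have := Finset.mem_range.mp hi; omega, ?_⟩
    simpa [sub_eq_zero, Polynomial.aeval_X, Polynomial.aeval_C] using h0
  exact ⟨x, hx1, huniq, hder, hprod, hcplx⟩
end

section
/- Assume n ≥ 1 and let p be a monic real polynomial of degree n+1 such that ∫_{a_j}^{b_j} p(x)/|R(x)|^{1/2} dx = 0 for every j = 0, 1, …, n. Then for each k = 0, 1, …, n−1 one has (−1)^{n−k} p(x) > 0 for all x in the closed gap [b_k, a_{k+1}]; consequently the quantity Ω̂_k := 2(−1)^{n−k} ∫_{b_k}^{a_{k+1}} p(x)/|R(x)|^{1/2} dx is strictly positive. -/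
open Polynomial Finset MeasureTheory intervalIntegral

lemma aux_onesided (f F : ℝ → ℝ) (hf : Continuous f) (hF : Measurable F)
    {c e : ℝ} (hce : c < e) {m' : ℝ} (hm : 0 < m')
    (hbound : ∀ x ∈ Set.Ioc c e, m' * (x - c) ≤ |F x|) :
    IntervalIntegrable (fun x => f x / Real.sqrt |F x|) volume c e := by
  obtain ⟨C, hC⟩ : ∃ C, ∀ x ∈ Set.Icc c e, ‖f x‖ ≤ C :=
    isCompact_Icc.exists_bound_of_continuousOn hf.continuousOn
  set M := max C 0 with hM
  have hM0 : 0 ≤ M := le_max_right _ _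
  have hCM : ∀ x ∈ Set.Icc c e, |f x| ≤ M := fun x hx => (hC x hx).trans (le_max_left _ _)
  have hmeas : AEStronglyMeasurable (fun x => f x / Real.sqrt |F x|)
      (volume.restrict (Set.uIoc c e)) :=
    ((hf.measurable.div ((Real.continuous_sqrt.measurable).comp hF.abs))).aestronglyMeasurable
  have hmaj : IntervalIntegrable (fun x => (M / Real.sqrt m') * (x - c) ^ (-(1/2) : ℝ))
      volume c e := by
    have h0 : IntervalIntegrable (fun x : ℝ => x ^ (-(1/2) : ℝ)) volume 0 (e - c) :=
      intervalIntegral.intervalIntegrable_rpow' (by norm_num)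
    have := (h0.comp_sub_right c).const_mul (M / Real.sqrt m')
    simpa using this
  refine hmaj.mono_fun hmeas ?_
  rw [Set.uIoc_of_le hce.le]
  filter_upwards [ae_restrict_mem measurableSet_Ioc] with x hx
  have hx1 : 0 < x - c := by linarith [hx.1]
  have hFx : m' * (x - c) ≤ |F x| := hbound x hx
  have hFx0 : 0 < |F x| := lt_of_lt_of_le (by positivity) hFx
  have hs1 : Real.sqrt m' * Real.sqrt (x - c) ≤ Real.sqrt |F x| := by
    rw [← Real.sqrt_mul hm.le]
    exact Real.sqrt_le_sqrt hFx
  have hs0 : 0 < Real.sqrt m' * Real.sqrt (x - c) := by positivity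
  have habs : ‖f x / Real.sqrt |F x|‖ = |f x| / Real.sqrt |F x| := by
    rw [Real.norm_eq_abs, abs_div, abs_of_nonneg (Real.sqrt_nonneg _)]
  rw [habs]
  have hrw : (x - c) ^ (-(1/2) : ℝ) = (Real.sqrt (x - c))⁻¹ := by
    rw [Real.rpow_neg hx1.le, Real.sqrt_eq_rpow]
  have : |f x| / Real.sqrt |F x| ≤ M / (Real.sqrt m' * Real.sqrt (x - c)) :=
    div_le_div₀ hM0 (hCM x ⟨hx.1.le, hx.2⟩) hs0 hs1
  refine this.trans (le_of_eq ?_)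
  rw [Real.norm_eq_abs, abs_of_nonneg (by positivity), hrw]
  field_simp

lemma aux_onesided' (f F : ℝ → ℝ) (hf : Continuous f) (hF : Measurable F)
    {e d : ℝ} (hed : e < d) {m' : ℝ} (hm : 0 < m')
    (hbound : ∀ x ∈ Set.Ico e d, m' * (d - x) ≤ |F x|) :
    IntervalIntegrable (fun x => f x / Real.sqrt |F x|) volume e d := by
  obtain ⟨C, hC⟩ : ∃ C, ∀ x ∈ Set.Icc e d, ‖f x‖ ≤ C :=
    isCompact_Icc.exists_bound_of_continuousOn hf.continuousOn
  set M := max C 0 with hM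
  have hM0 : 0 ≤ M := le_max_right _ _
  have hCM : ∀ x ∈ Set.Icc e d, |f x| ≤ M := fun x hx => (hC x hx).trans (le_max_left _ _)
  have hmeas : AEStronglyMeasurable (fun x => f x / Real.sqrt |F x|)
      (volume.restrict (Set.uIoc e d)) :=
    ((hf.measurable.div ((Real.continuous_sqrt.measurable).comp hF.abs))).aestronglyMeasurable
  have hmaj : IntervalIntegrable (fun x => (M / Real.sqrt m') * (d - x) ^ (-(1/2) : ℝ))
      volume e d := by
    have h0 : IntervalIntegrable (fun x : ℝ => x ^ (-(1/2) : ℝ)) volume (d - e) 0 :=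
      intervalIntegral.intervalIntegrable_rpow' (by norm_num)
    have := (h0.comp_sub_left d).const_mul (M / Real.sqrt m')
    simpa using this
  refine hmaj.mono_fun hmeas ?_
  rw [Set.uIoc_of_le hed.le]
  have hne : ∀ᵐ x : ℝ ∂volume, x ≠ d := by
    refine (ae_iff.2 ?_); simpa using (measure_singleton (d : ℝ))
  filter_upwards [ae_restrict_mem measurableSet_Ioc, ae_restrict_of_ae hne] with x hx hxd
  have hx1 : 0 < d - x := sub_pos.mpr (lt_of_le_of_ne hx.2 hxd)
  have hFx : m' * (d - x) ≤ |F x| := hbound x ⟨hx.1.le, by linarith⟩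
  have hFx0 : 0 < |F x| := lt_of_lt_of_le (by positivity) hFx
  have hs1 : Real.sqrt m' * Real.sqrt (d - x) ≤ Real.sqrt |F x| := by
    rw [← Real.sqrt_mul hm.le]
    exact Real.sqrt_le_sqrt hFx
  have hs0 : 0 < Real.sqrt m' * Real.sqrt (d - x) := by positivity
  have habs : ‖f x / Real.sqrt |F x|‖ = |f x| / Real.sqrt |F x| := by
    rw [Real.norm_eq_abs, abs_div, abs_of_nonneg (Real.sqrt_nonneg _)]
  rw [habs]
  have hrw : (d - x) ^ (-(1/2) : ℝ) = (Real.sqrt (d - x))⁻¹ := by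
    rw [Real.rpow_neg hx1.le, Real.sqrt_eq_rpow]
  have : |f x| / Real.sqrt |F x| ≤ M / (Real.sqrt m' * Real.sqrt (d - x)) :=
    div_le_div₀ hM0 (hCM x ⟨hx.1.le, hx.2⟩) hs0 hs1
  refine this.trans (le_of_eq ?_)
  rw [Real.norm_eq_abs, abs_of_nonneg (by positivity), hrw]
  field_simp

lemma aux_integrable (f F : ℝ → ℝ) (hf : Continuous f) (hF : Measurable F)
    {c d m : ℝ} (hcd : c < d) (hm : 0 < m)
    (hbound : ∀ x ∈ Set.Ioo c d, m * ((x - c) * (d - x)) ≤ |F x|) :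
    IntervalIntegrable (fun x => f x / Real.sqrt |F x|) volume c d := by
  set e := (c + d) / 2 with he
  have hce : c < e := by rw [he]; linarith
  have hed : e < d := by rw [he]; linarith
  have h1 : IntervalIntegrable (fun x => f x / Real.sqrt |F x|) volume c e := by
    refine aux_onesided f F hf hF hce (m' := m * (d - e)) (mul_pos hm (by linarith)) ?_
    intro x hx
    have hxd : x < d := lt_of_le_of_lt hx.2 hed
    have := hbound x ⟨hx.1, hxd⟩
    nlinarith [mul_nonneg (mul_nonneg hm.le (sub_pos.mpr hx.1).le) (sub_nonneg.mpr hx.2)]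
  have h2 : IntervalIntegrable (fun x => f x / Real.sqrt |F x|) volume e d := by
    refine aux_onesided' f F hf hF hed (m' := m * (e - c)) (mul_pos hm (by linarith)) ?_
    intro x hx
    have hxc : c < x := lt_of_lt_of_le hce hx.1
    have := hbound x ⟨hxc, hx.2⟩
    nlinarith [mul_nonneg (mul_nonneg hm.le (sub_nonneg.mpr hx.1)) (sub_pos.mpr hx.2).le]
  exact h1.trans h2

/-- Assume `n ≥ 1` and let `p` be a monic real polynomial of degree `n+1` with
`∫_{a_j}^{b_j} p(x)/|R(x)|^{1/2} dx = 0` for every `j = 0,…,n`, where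
`R(x) = ∏_{j=0}^n (x-a_j)(x-b_j)` and `a_0 < b_0 < a_1 < b_1 < ⋯ < a_n < b_n`.
Then for each `k = 0,…,n-1`, `(-1)^{n-k} p(x) > 0` on the closed gap `[b_k, a_{k+1}]`, and
`Ω̂_k = 2(-1)^{n-k} ∫_{b_k}^{a_{k+1}} p(x)/|R(x)|^{1/2} dx > 0`. -/
theorem gap_sign_and_Omega_pos (n : ℕ) (hn : 1 ≤ n) (a b : ℕ → ℝ)
    (hab : ∀ j ≤ n, a j < b j) (hba : ∀ j < n, b j < a (j + 1))
    (p : Polynomial ℝ) (hmonic : p.Monic) (hdeg : p.natDegree = n + 1)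
    (hint : ∀ j ≤ n,
      (∫ x in (a j)..(b j),
        p.eval x / Real.sqrt |∏ i ∈ Finset.range (n + 1), ((x - a i) * (x - b i))|) = 0) :
    ∀ k < n,
      (∀ x ∈ Set.Icc (b k) (a (k + 1)), 0 < (-1 : ℝ) ^ (n - k) * p.eval x) ∧
      0 < 2 * (-1 : ℝ) ^ (n - k) *
        (∫ x in (b k)..(a (k + 1)),
          p.eval x / Real.sqrt |∏ i ∈ Finset.range (n + 1), ((x - a i) * (x - b i))|) := by
  classical
  set R : ℝ → ℝ := fun x => ∏ i ∈ Finset.range (n + 1), ((x - a i) * (x - b i)) with hRdef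
  have hRc : Continuous R := by
    apply continuous_finset_prod
    intro i _
    exact (continuous_id.sub continuous_const).mul (continuous_id.sub continuous_const)
  have hpc : Continuous fun x => p.eval x := p.continuous_aeval
  -- ordering facts
  have key : ∀ i j, i < j → j ≤ n → b i < a j := by
    intro i j hij hjn
    induction j with
    | zero => omega
    | succ j ih =>
      rcases Nat.lt_succ_iff_lt_or_eq.mp hij with h | h
      · have h1 : b i < a j := ih h (by omega)
        have h2 : a j < b j := hab j (by omega)
        have h3 : b j < a (j + 1) := hba j (by omega)
        linarith
      · subst h; exact hba i (by omega)
  -- R is nonzero away from all a i, b i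
  have hRne : ∀ x : ℝ, (∀ i ≤ n, x ≠ a i ∧ x ≠ b i) → R x ≠ 0 := by
    intro x hx
    rw [hRdef]
    refine Finset.prod_ne_zero_iff.mpr ?_
    intro i hi
    have hi' : i ≤ n := by simpa [Nat.lt_succ_iff] using hi
    exact mul_ne_zero (sub_ne_zero.mpr (hx i hi').1) (sub_ne_zero.mpr (hx i hi').2)
  -- R nonzero on band interiors
  have hRband : ∀ j ≤ n, ∀ x ∈ Set.Ioo (a j) (b j), R x ≠ 0 := by
    intro j hj x hx
    refine hRne x ?_
    intro i hi
    rcases lt_trichotomy i j with h | h | h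
    · have h1 : b i < a j := key i j h hj
      have h2 : a i < b i := hab i (by omega)
      refine ⟨fun hEq => ?_, fun hEq => ?_⟩ <;> rw [hEq] at hx <;> linarith [hx.1, hx.2]
    · subst h
      exact ⟨ne_of_gt hx.1, ne_of_lt hx.2⟩
    · have h1 : b j < a i := key j i h hi
      have h2 : a i < b i := hab i hi
      refine ⟨fun hEq => ?_, fun hEq => ?_⟩ <;> rw [hEq] at hx <;> linarith [hx.1, hx.2]
  -- lower bound for |R| on each band, and integrability there
  have hbandlow : ∀ j ≤ n, ∃ m : ℝ, 0 < m ∧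
      ∀ x ∈ Set.Ioo (a j) (b j), m * ((x - a j) * (b j - x)) ≤ |R x| := by
    intro j hj
    set W : ℝ → ℝ := fun x => ∏ i ∈ (Finset.range (n + 1)).erase j, ((x - a i) * (x - b i))
      with hWdef
    have hWc : Continuous W := by
      apply continuous_finset_prod
      intro i _
      exact (continuous_id.sub continuous_const).mul (continuous_id.sub continuous_const)
    have hWne : ∀ x ∈ Set.Icc (a j) (b j), W x ≠ 0 := by
      intro x hx
      rw [hWdef]
      refine Finset.prod_ne_zero_iff.mpr ?_
      intro i hi
      rw [Finset.mem_erase, Finset.mem_range, Nat.lt_succ_iff] at hi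
      rcases lt_or_gt_of_ne hi.1 with h | h
      · have h1 : b i < a j := key i j h hj
        have h2 : a i < b i := hab i (by omega)
        refine mul_ne_zero (sub_ne_zero.mpr fun hEq => ?_) (sub_ne_zero.mpr fun hEq => ?_) <;>
          rw [hEq] at hx <;> linarith [hx.1, hx.2]
      · have h1 : b j < a i := key j i h hi.2
        have h2 : a i < b i := hab i hi.2
        refine mul_ne_zero (sub_ne_zero.mpr fun hEq => ?_) (sub_ne_zero.mpr fun hEq => ?_) <;>
          rw [hEq] at hx <;> linarith [hx.1, hx.2]
    obtain ⟨x₀, hx₀, hmin⟩ := isCompact_Icc.exists_isMinOn (s := Set.Icc (a j) (b j))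
      (Set.nonempty_Icc.mpr (hab j hj).le) (hWc.abs.continuousOn)
    refine ⟨|W x₀|, abs_pos.mpr (hWne x₀ hx₀), ?_⟩
    intro x hx
    have hfac : R x = ((x - a j) * (x - b j)) * W x := by
      rw [hRdef, hWdef]
      exact (Finset.mul_prod_erase _ _ (Finset.mem_range.mpr (Nat.lt_succ_of_le hj))).symm
    have habs : |R x| = ((x - a j) * (b j - x)) * |W x| := by
      rw [hfac, abs_mul, abs_mul]
      rw [abs_of_pos (sub_pos.mpr hx.1), abs_of_neg (sub_neg.mpr hx.2)]
      ring
    rw [habs]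
    have h1 : |W x₀| ≤ |W x| := hmin ⟨hx.1.le, hx.2.le⟩
    have h2 : 0 ≤ (x - a j) * (b j - x) :=
      mul_nonneg (sub_pos.mpr hx.1).le (sub_pos.mpr hx.2).le
    nlinarith
  have hIntBand : ∀ j ≤ n, IntervalIntegrable
      (fun x => p.eval x / Real.sqrt |R x|) volume (a j) (b j) := by
    intro j hj
    obtain ⟨m, hm, hb⟩ := hbandlow j hj
    exact aux_integrable _ R hpc hRc.measurable (hab j hj) hm hb
  -- p has a root in each open band
  have hroot : ∀ j ≤ n, ∃ x ∈ Set.Ioo (a j) (b j), p.eval x = 0 := by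
    intro j hj
    by_contra hcon
    push_neg at hcon
    have hcd : a j < b j := hab j hj
    set x₀ := (a j + b j) / 2 with hx₀def
    have hx₀ : x₀ ∈ Set.Ioo (a j) (b j) := ⟨by rw [hx₀def]; linarith, by rw [hx₀def]; linarith⟩
    have hIVT : ∀ x ∈ Set.Ioo (a j) (b j), ∀ y ∈ Set.Ioo (a j) (b j),
        p.eval x < 0 → 0 < p.eval y → False := by
      intro x hx y hy h1 h2
      have h0 : (0 : ℝ) ∈ Set.uIcc (p.eval x) (p.eval y) :=
        Set.mem_uIcc.mpr (Or.inl ⟨h1.le, h2.le⟩)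
      obtain ⟨z, hz, hz0⟩ := intermediate_value_uIcc
        (f := fun t => p.eval t) (a := x) (b := y) hpc.continuousOn h0
      exact hcon z ((Set.ordConnected_Ioo.uIcc_subset hx hy) hz) hz0
    have habs0 := hint j hj
    rcases (hcon x₀ hx₀).lt_or_gt with h | h
    · -- p < 0 on the band
      have hneg : ∀ x ∈ Set.Ioo (a j) (b j), p.eval x < 0 := by
        intro x hx
        rcases (hcon x hx).lt_or_gt with h' | h'
        · exact h'
        · exact absurd (hIVT x₀ hx₀ x hx h h') (fun t => t)
      have hpos' : 0 < ∫ x in (a j)..(b j), -(p.eval x / Real.sqrt |R x|) := by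
        refine intervalIntegral_pos_of_pos_on (hIntBand j hj).neg ?_ hcd
        intro x hx
        have hR : 0 < Real.sqrt |R x| := Real.sqrt_pos.mpr (abs_pos.mpr (hRband j hj x hx))
        have := div_neg_of_neg_of_pos (hneg x hx) hR
        linarith
      rw [intervalIntegral.integral_neg] at hpos'
      have : (∫ x in (a j)..(b j), p.eval x / Real.sqrt |R x|) < 0 := by linarith
      exact absurd habs0 (ne_of_lt this)
    · -- p > 0 on the band
      have hpos : ∀ x ∈ Set.Ioo (a j) (b j), 0 < p.eval x := by
        intro x hx
        rcases (hcon x hx).lt_or_gt with h' | h'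
        · exact absurd (hIVT x hx x₀ hx₀ h' h) (fun t => t)
        · exact h'
      have : 0 < ∫ x in (a j)..(b j), p.eval x / Real.sqrt |R x| := by
        refine intervalIntegral_pos_of_pos_on (hIntBand j hj) ?_ hcd
        intro x hx
        have hR : 0 < Real.sqrt |R x| := Real.sqrt_pos.mpr (abs_pos.mpr (hRband j hj x hx))
        exact div_pos (hpos x hx) hR
      exact absurd habs0 (ne_of_gt this)
  have hroot' : ∀ j, ∃ x, j ≤ n → x ∈ Set.Ioo (a j) (b j) ∧ p.eval x = 0 := by
    intro j
    by_cases hj : j ≤ n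
    · obtain ⟨x, hx1, hx2⟩ := hroot j hj
      exact ⟨x, fun _ => ⟨hx1, hx2⟩⟩
    · exact ⟨0, fun h => absurd h hj⟩
  choose r hr using hroot'
  have hrI : ∀ j ≤ n, r j ∈ Set.Ioo (a j) (b j) := fun j hj => (hr j hj).1
  have hr0 : ∀ j ≤ n, p.eval (r j) = 0 := fun j hj => (hr j hj).2
  have hrmono : ∀ i j, i < j → j ≤ n → r i < r j := by
    intro i j hij hjn
    have h1 := hrI i (by omega)
    have h2 := hrI j hjn
    have h3 : b i < a j := key i j hij hjn
    have := h1.2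
    have := h2.1
    linarith
  -- p factors as the product of (X - r j)
  have hfact : p = ∏ j ∈ Finset.range (n + 1), (X - C (r j)) := by
    set q : Polynomial ℝ := ∏ j ∈ Finset.range (n + 1), (X - C (r j)) with hq
    have hqmonic : q.Monic := monic_prod_of_monic _ _ (fun i _ => monic_X_sub_C (r i))
    have hqdeg : q.natDegree = n + 1 := by
      rw [hq, natDegree_prod _ _ (fun i _ => X_sub_C_ne_zero (r i))]
      simp [natDegree_X_sub_C]
    by_contra hne
    have hsub : p - q ≠ 0 := sub_ne_zero.mpr hne
    have hdlt : (p - q).degree < ((n + 1 : ℕ) : WithBot ℕ) := by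
      have h1 : p.degree = q.degree := by
        rw [Polynomial.degree_eq_natDegree hmonic.ne_zero,
          Polynomial.degree_eq_natDegree hqmonic.ne_zero, hdeg, hqdeg]
      have := Polynomial.degree_sub_lt h1 hmonic.ne_zero
        (by rw [hmonic.leadingCoeff, hqmonic.leadingCoeff])
      rwa [Polynomial.degree_eq_natDegree hmonic.ne_zero, hdeg] at this
    have hndlt : (p - q).natDegree < n + 1 :=
      (Polynomial.natDegree_lt_iff_degree_lt hsub).mpr hdlt
    have hrinj : Function.Injective (fun j : Fin (n + 1) => r j) := by
      intro i j hij
      by_contra hne'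
      rcases Fin.lt_or_lt_of_ne hne' with h | h
      · exact absurd hij (ne_of_lt (hrmono i j h (Nat.lt_succ_iff.mp j.isLt)))
      · exact absurd hij.symm (ne_of_lt (hrmono j i h (Nat.lt_succ_iff.mp i.isLt)))
    have heval : ∀ i : Fin (n + 1), (p - q).eval (r i) = 0 := by
      intro i
      rw [eval_sub, hr0 i (Nat.lt_succ_iff.mp i.isLt), hq, eval_prod]
      have : ∏ j ∈ Finset.range (n + 1), ((r (i : ℕ)) - r j) = 0 := by
        apply Finset.prod_eq_zero (Finset.mem_range.mpr i.isLt)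
        simp
      simp only [eval_sub, eval_X, eval_C]
      rw [this]
      ring
    have := Polynomial.eq_zero_of_natDegree_lt_card_of_eval_eq_zero (p - q) hrinj heval
      (by simpa using hndlt)
    exact hsub this
  -- sign of p on each closed gap
  have hsign : ∀ k, k < n → ∀ x ∈ Set.Icc (b k) (a (k + 1)),
      0 < (-1 : ℝ) ^ (n - k) * p.eval x := by
    intro k hk x hx
    have hpe : p.eval x = ∏ j ∈ Finset.range (n + 1), (x - r j) := by
      rw [hfact, eval_prod]
      simp
    have hsplit : (∏ j ∈ Finset.range (k + 1), (x - r j)) *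
        ∏ j ∈ Finset.Ico (k + 1) (n + 1), (x - r j)
        = ∏ j ∈ Finset.range (n + 1), (x - r j) :=
      Finset.prod_range_mul_prod_Ico _ (by omega)
    have hP1 : 0 < ∏ j ∈ Finset.range (k + 1), (x - r j) := by
      apply Finset.prod_pos
      intro j hj
      rw [Finset.mem_range, Nat.lt_succ_iff] at hj
      have h1 : r j < b j := (hrI j (by omega)).2
      have h2 : b j ≤ b k := by
        rcases eq_or_lt_of_le hj with h | h
        · subst h; exact le_refl _
        · have h3 := key j k h (by omega)
          have h4 := hab k (by omega)
          linarith
      linarith [hx.1]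
    have hP2 : 0 < ∏ j ∈ Finset.Ico (k + 1) (n + 1), (r j - x) := by
      apply Finset.prod_pos
      intro j hj
      rw [Finset.mem_Ico] at hj
      have hjn : j ≤ n := by omega
      have h1 : a j < r j := (hrI j hjn).1
      have h2 : a (k + 1) ≤ a j := by
        rcases eq_or_lt_of_le hj.1 with h | h
        · subst h; exact le_refl _
        · have h3 := key (k + 1) j h hjn
          have h4 := hab (k + 1) (by omega)
          linarith
      linarith [hx.2]
    have hcard : (Finset.Ico (k + 1) (n + 1)).card = n - k := by
      rw [Nat.card_Ico]; omega
    have hneg : ∏ j ∈ Finset.Ico (k + 1) (n + 1), (x - r j)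
        = (-1 : ℝ) ^ (n - k) * ∏ j ∈ Finset.Ico (k + 1) (n + 1), (r j - x) := by
      rw [← hcard, ← Finset.prod_const (-1 : ℝ), ← Finset.prod_mul_distrib]
      apply Finset.prod_congr rfl
      intro j _
      ring
    have hsq : ((-1 : ℝ) ^ (n - k)) * ((-1 : ℝ) ^ (n - k)) = 1 := by
      rw [← mul_pow]; norm_num
    have heq : (-1 : ℝ) ^ (n - k) * ((∏ j ∈ Finset.range (k + 1), (x - r j)) *
        ((-1 : ℝ) ^ (n - k) * ∏ j ∈ Finset.Ico (k + 1) (n + 1), (r j - x)))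
        = (∏ j ∈ Finset.range (k + 1), (x - r j)) *
          (∏ j ∈ Finset.Ico (k + 1) (n + 1), (r j - x)) := by
      linear_combination (∏ j ∈ Finset.range (k + 1), (x - r j)) *
        (∏ j ∈ Finset.Ico (k + 1) (n + 1), (r j - x)) * hsq
    rw [hpe, ← hsplit, hneg, heq]
    exact mul_pos hP1 hP2
  -- conclusion
  intro k hk
  refine ⟨hsign k hk, ?_⟩
  have hgap : b k < a (k + 1) := hba k hk
  have hkmem : k ∈ Finset.range (n + 1) := Finset.mem_range.mpr (by omega)
  have hk1mem : (k + 1) ∈ (Finset.range (n + 1)).erase k := by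
    rw [Finset.mem_erase]
    exact ⟨by omega, Finset.mem_range.mpr (by omega)⟩
  set U : ℝ → ℝ := fun x => ((x - a k) * (x - b (k + 1))) *
      ∏ i ∈ ((Finset.range (n + 1)).erase k).erase (k + 1), ((x - a i) * (x - b i)) with hUdef
  have hUc : Continuous U := by
    apply Continuous.mul
    · exact (continuous_id.sub continuous_const).mul (continuous_id.sub continuous_const)
    · apply continuous_finset_prod
      intro i _
      exact (continuous_id.sub continuous_const).mul (continuous_id.sub continuous_const)
  have hfacU : ∀ x : ℝ, R x = ((x - b k) * (x - a (k + 1))) * U x := by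
    intro x
    show (∏ i ∈ Finset.range (n + 1), ((x - a i) * (x - b i))) = _
    rw [← Finset.mul_prod_erase _ _ hkmem, ← Finset.mul_prod_erase _ _ hk1mem, hUdef]
    ring
  have hUne : ∀ x ∈ Set.Icc (b k) (a (k + 1)), U x ≠ 0 := by
    intro x hx
    rw [hUdef]
    have hbk : a k < b k := hab k (by omega)
    have hak1 : a (k + 1) < b (k + 1) := hab (k + 1) (by omega)
    refine mul_ne_zero (mul_ne_zero ?_ ?_) ?_
    · exact sub_ne_zero.mpr (by intro hEq; rw [hEq] at hx; linarith [hx.1])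
    · exact sub_ne_zero.mpr (by intro hEq; rw [hEq] at hx; linarith [hx.2])
    · refine Finset.prod_ne_zero_iff.mpr ?_
      intro i hi
      rw [Finset.mem_erase, Finset.mem_erase, Finset.mem_range] at hi
      have hcase : i < k ∨ k + 1 < i := by omega
      have hin : i ≤ n := by omega
      have habi : a i < b i := hab i hin
      rcases hcase with h | h
      · have h1 : b i < a k := key i k h (by omega)
        refine mul_ne_zero (sub_ne_zero.mpr fun hEq => ?_) (sub_ne_zero.mpr fun hEq => ?_) <;>
          rw [hEq] at hx <;> linarith [hx.1, hx.2]
      · have h1 : b (k + 1) < a i := key (k + 1) i h hin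
        refine mul_ne_zero (sub_ne_zero.mpr fun hEq => ?_) (sub_ne_zero.mpr fun hEq => ?_) <;>
          rw [hEq] at hx <;> linarith [hx.1, hx.2]
  obtain ⟨x₀, hx₀, hmin⟩ := isCompact_Icc.exists_isMinOn (s := Set.Icc (b k) (a (k + 1)))
    (Set.nonempty_Icc.mpr hgap.le) (hUc.abs.continuousOn)
  have hm : 0 < |U x₀| := abs_pos.mpr (hUne x₀ hx₀)
  have hboundgap : ∀ x ∈ Set.Ioo (b k) (a (k + 1)),
      |U x₀| * ((x - b k) * (a (k + 1) - x)) ≤ |R x| := by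
    intro x hx
    have habs : |R x| = ((x - b k) * (a (k + 1) - x)) * |U x| := by
      rw [hfacU x, abs_mul, abs_mul]
      rw [abs_of_pos (sub_pos.mpr hx.1), abs_of_neg (sub_neg.mpr hx.2)]
      ring
    rw [habs]
    have h1 : |U x₀| ≤ |U x| := hmin ⟨hx.1.le, hx.2.le⟩
    have h2 : 0 ≤ (x - b k) * (a (k + 1) - x) :=
      mul_nonneg (sub_pos.mpr hx.1).le (sub_pos.mpr hx.2).le
    nlinarith
  have hIntGap : IntervalIntegrable (fun x => p.eval x / Real.sqrt |R x|)
      volume (b k) (a (k + 1)) :=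
    aux_integrable _ R hpc hRc.measurable hgap hm hboundgap
  have hpos : 0 < ∫ x in (b k)..(a (k + 1)),
      (-1 : ℝ) ^ (n - k) * (p.eval x / Real.sqrt |R x|) := by
    refine intervalIntegral_pos_of_pos_on (hIntGap.const_mul _) ?_ hgap
    intro x hx
    have h1 : 0 < (-1 : ℝ) ^ (n - k) * p.eval x := hsign k hk x ⟨hx.1.le, hx.2.le⟩
    have hRx : R x ≠ 0 := by
      rw [hfacU x]
      exact mul_ne_zero (mul_ne_zero (sub_ne_zero.mpr (ne_of_gt hx.1))
        (sub_ne_zero.mpr (ne_of_lt hx.2))) (hUne x ⟨hx.1.le, hx.2.le⟩)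
    have h2 : 0 < Real.sqrt |R x| := Real.sqrt_pos.mpr (abs_pos.mpr hRx)
    rw [← mul_div_assoc]
    exact div_pos h1 h2
  rw [intervalIntegral.integral_const_mul] at hpos
  show 0 < 2 * (-1 : ℝ) ^ (n - k) *
    ∫ x in (b k)..(a (k + 1)), p.eval x / Real.sqrt |R x|
  rw [mul_assoc]
  linarith [hpos]
end

section
/- Let n ≥ 1 and define the polynomial ς(z) = ∏_{i=0}^{n} (z − b_i) − ∏_{i=0}^{n} (z − a_i). Then ς has degree exactly n, for each j = 1, …, n there is exactly one real zero z_j of ς in the gap (b_{j−1}, a_j), and z_1, …, z_n are all of the complex zeros of ς. -/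
open Polynomial Finset

lemma my_card_le_natDegree {F : Type*} [Field F] [DecidableEq F] (p : Polynomial F) (hp : p ≠ 0)
    (s : Finset F) (hs : ∀ x ∈ s, p.eval x = 0) : s.card ≤ p.natDegree := by
  have h1 : s ⊆ p.roots.toFinset := fun x hx =>
    Multiset.mem_toFinset.mpr ((Polynomial.mem_roots hp).mpr (hs x hx))
  calc s.card ≤ p.roots.toFinset.card := Finset.card_le_card h1
    _ ≤ Multiset.card p.roots := p.roots.toFinset_card_le
    _ ≤ p.natDegree := p.card_roots'

/-- Let `n ≥ 1`, `a_0 < b_0 < a_1 < b_1 < ⋯ < a_n < b_n`, and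
`ς(z) = ∏_{i=0}^n (z - b_i) - ∏_{i=0}^n (z - a_i)`. Then `ς` has degree exactly `n`, for each
`j = 1,…,n` there is exactly one real zero `z_j` of `ς` in the gap `(b_{j-1}, a_j)`, and
`z_1,…,z_n` are all of the complex zeros of `ς`. -/
theorem varsigma_zeros (n : ℕ) (hn : 1 ≤ n) (a b : ℕ → ℝ)
    (hab : ∀ j ≤ n, a j < b j) (hba : ∀ j < n, b j < a (j + 1))
    (ς : Polynomial ℝ)
    (hς : ς = (∏ i ∈ Finset.range (n + 1), (Polynomial.X - Polynomial.C (b i))) -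
      ∏ i ∈ Finset.range (n + 1), (Polynomial.X - Polynomial.C (a i))) :
    ς.degree = (n : ℕ) ∧
    ∃ z : ℕ → ℝ,
      (∀ j, 1 ≤ j → j ≤ n →
        z j ∈ Set.Ioo (b (j - 1)) (a j) ∧ ς.eval (z j) = 0 ∧
        (∀ y ∈ Set.Ioo (b (j - 1)) (a j), ς.eval y = 0 → y = z j)) ∧
      (∀ w : ℂ, Polynomial.aeval w ς = 0 → ∃ j, 1 ≤ j ∧ j ≤ n ∧ w = ((z j : ℝ) : ℂ)) := by
  classical
  -- chain inequalities
  have hba' : ∀ i j, i < j → j ≤ n → b i < a j := by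
    intro i j hij hjn
    induction j with
    | zero => omega
    | succ k ih =>
      rcases Nat.lt_succ_iff_lt_or_eq.mp hij with h | h
      · exact lt_trans (lt_trans (ih h (by omega)) (hab k (by omega))) (hba k (by omega))
      · subst h; exact hba i (by omega)
  have hab' : ∀ i j, i ≤ j → j ≤ n → a i < b j := by
    intro i j hij hjn
    rcases eq_or_lt_of_le hij with h | h
    · subst h; exact hab i hjn
    · exact lt_trans (hab i (by omega)) (lt_trans (hba' i j h hjn) (hab j hjn))
  -- degree
  have hPm : (∏ i ∈ Finset.range (n + 1), (X - C (b i))).Monic :=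
    monic_prod_of_monic _ _ (fun i _ => monic_X_sub_C _)
  have hQm : (∏ i ∈ Finset.range (n + 1), (X - C (a i))).Monic :=
    monic_prod_of_monic _ _ (fun i _ => monic_X_sub_C _)
  have hPdeg : (∏ i ∈ Finset.range (n + 1), (X - C (b i))).natDegree = n + 1 := by
    rw [natDegree_prod_of_monic _ _ (fun i _ => monic_X_sub_C _)]
    simp [natDegree_X_sub_C]
  have hQdeg : (∏ i ∈ Finset.range (n + 1), (X - C (a i))).natDegree = n + 1 := by
    rw [natDegree_prod_of_monic _ _ (fun i _ => monic_X_sub_C _)]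
    simp [natDegree_X_sub_C]
  have hcoeff : ς.coeff n = (∑ i ∈ Finset.range (n + 1), a i)
      - ∑ i ∈ Finset.range (n + 1), b i := by
    have h1 : (∏ i ∈ Finset.range (n + 1), (X - C (b i))).coeff n
        = -∑ i ∈ Finset.range (n + 1), b i := by
      have := prod_X_sub_C_nextCoeff (s := Finset.range (n + 1)) b
      rwa [nextCoeff, if_neg (by omega), hPdeg] at this
    have h2 : (∏ i ∈ Finset.range (n + 1), (X - C (a i))).coeff n
        = -∑ i ∈ Finset.range (n + 1), a i := by
      have := prod_X_sub_C_nextCoeff (s := Finset.range (n + 1)) a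
      rwa [nextCoeff, if_neg (by omega), hQdeg] at this
    rw [hς, coeff_sub, h1, h2]; ring
  have hcoeff_ne : ς.coeff n ≠ 0 := by
    rw [hcoeff]
    have : ∑ i ∈ Finset.range (n + 1), a i < ∑ i ∈ Finset.range (n + 1), b i :=
      Finset.sum_lt_sum_of_nonempty (by simp) (fun i hi => hab i (by
        simpa [Nat.lt_succ_iff] using hi))
    linarith
  have hdeg_lt : ς.degree < ((n + 1 : ℕ) : WithBot ℕ) := by
    rw [hς]
    have h := degree_sub_lt (p := ∏ i ∈ Finset.range (n + 1), (X - C (b i)))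
      (q := ∏ i ∈ Finset.range (n + 1), (X - C (a i)))
      (by rw [degree_eq_natDegree hPm.ne_zero, degree_eq_natDegree hQm.ne_zero, hPdeg, hQdeg])
      hPm.ne_zero (by rw [hPm.leadingCoeff, hQm.leadingCoeff])
    rwa [degree_eq_natDegree hPm.ne_zero, hPdeg] at h
  have hdeg : ς.degree = (n : ℕ) := by
    refine le_antisymm ?_ (le_degree_of_ne_zero hcoeff_ne)
    exact Order.le_of_lt_succ (by exact_mod_cast hdeg_lt)
  have hdn : ς.natDegree = n := natDegree_eq_of_degree_eq_some hdeg
  have hcne := hcoeff_ne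
  have hςne : ς ≠ 0 := fun h => by simp [h] at hcne
  have heval : ∀ x : ℝ, ς.eval x = (∏ i ∈ Finset.range (n+1), (x - b i))
      - ∏ i ∈ Finset.range (n+1), (x - a i) := by
    intro x; simp [hς, eval_prod]
  have hevalb : ∀ j, 1 ≤ j → j ≤ n →
      ς.eval (b (j-1)) = -∏ i ∈ Finset.range (n+1), (b (j-1) - a i) := by
    intro j h1 h2
    rw [heval, Finset.prod_eq_zero (Finset.mem_range.mpr (by omega : j - 1 < n+1)) (by ring)]
    ring
  have hevala : ∀ j, 1 ≤ j → j ≤ n →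
      ς.eval (a j) = ∏ i ∈ Finset.range (n+1), (a j - b i) := by
    intro j h1 h2
    have h0 : ∏ i ∈ Finset.range (n+1), (a j - a i) = 0 :=
      Finset.prod_eq_zero (Finset.mem_range.mpr (by omega : j < n+1)) (by ring)
    rw [heval, h0]
    ring
  have hneg : ∀ j, 1 ≤ j → j ≤ n → ς.eval (b (j-1)) * ς.eval (a j) < 0 := by
    intro j h1 h2
    have hpos : 0 < ∏ i ∈ Finset.range (n+1), ((b (j-1) - a i) * (a j - b i)) := by
      apply Finset.prod_pos
      intro i hi
      rw [Finset.mem_range] at hi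
      rcases lt_or_ge i j with h | h
      · exact mul_pos (sub_pos.mpr (hab' i (j-1) (by omega) (by omega)))
          (sub_pos.mpr (hba' i j h h2))
      · exact mul_pos_of_neg_of_neg (sub_neg.mpr (hba' (j-1) i (by omega) (by omega)))
          (sub_neg.mpr (hab' j i h (by omega)))
    rw [Finset.prod_mul_distrib] at hpos
    rw [hevalb j h1 h2, hevala j h1 h2, neg_mul]
    linarith
  have hgap : ∀ j, 1 ≤ j → j ≤ n → b (j-1) < a j := fun j h1 h2 => hba' (j-1) j (by omega) h2
  have hex : ∀ j, 1 ≤ j → j ≤ n → ∃ c ∈ Set.Ioo (b (j-1)) (a j), ς.eval c = 0 := by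
    intro j h1 h2
    have hcont : ContinuousOn (fun x => ς.eval x) (Set.Icc (b (j-1)) (a j)) :=
      (Polynomial.continuous ς).continuousOn
    have hne := hneg j h1 h2
    rcases lt_trichotomy (ς.eval (b (j-1))) 0 with h | h | h
    · have h2' : 0 < ς.eval (a j) := by nlinarith
      obtain ⟨c, hc, hc0⟩ := intermediate_value_Ioo (le_of_lt (hgap j h1 h2)) hcont ⟨h, h2'⟩
      exact ⟨c, hc, hc0⟩
    · exfalso; rw [h] at hne; simp at hne
    · have h2' : ς.eval (a j) < 0 := by nlinarith
      obtain ⟨c, hc, hc0⟩ := intermediate_value_Ioo' (le_of_lt (hgap j h1 h2)) hcont ⟨h2', h⟩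
      exact ⟨c, hc, hc0⟩
  set z : ℕ → ℝ := fun j => if h : 1 ≤ j ∧ j ≤ n then (hex j h.1 h.2).choose else 0 with hzdef
  have hz : ∀ j, 1 ≤ j → j ≤ n → z j ∈ Set.Ioo (b (j-1)) (a j) ∧ ς.eval (z j) = 0 := by
    intro j h1 h2
    have hspec := (hex j h1 h2).choose_spec
    simp only [hzdef, dif_pos (⟨h1, h2⟩ : 1 ≤ j ∧ j ≤ n)]
    exact hspec
  have hzm : ∀ j k, 1 ≤ j → j < k → k ≤ n → z j < z k := by
    intro j k h1 hjk h2
    have hj := (hz j h1 (by omega)).1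
    have hk := (hz k (by omega) h2).1
    calc z j < a j := hj.2
      _ ≤ b (k-1) := le_of_lt (hab' j (k-1) (by omega) (by omega))
      _ < z k := hk.1
  have hzinj : Set.InjOn z (Finset.Icc 1 n) := by
    intro x hx y hy hxy
    simp only [Finset.coe_Icc, Set.mem_Icc] at hx hy
    by_contra h
    rcases lt_or_gt_of_ne h with h | h
    · exact absurd hxy (ne_of_lt (hzm x y hx.1 h hy.2))
    · exact absurd hxy.symm (ne_of_lt (hzm y x hy.1 h hx.2))
  have himgcard : ((Finset.Icc 1 n).image z).card = n := by
    rw [Finset.card_image_of_injOn hzinj, Nat.card_Icc]; omega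
  have huniq : ∀ j, 1 ≤ j → j ≤ n → ∀ y ∈ Set.Ioo (b (j-1)) (a j), ς.eval y = 0 → y = z j := by
    intro j h1 h2 y hy hy0
    by_contra hne'
    have hynot : ∀ k, 1 ≤ k → k ≤ n → y ≠ z k := by
      intro k hk1 hk2
      rcases lt_trichotomy k j with h | h | h
      · have h3 : z k < a k := (hz k hk1 hk2).1.2
        have h4 : a k ≤ b (j-1) := le_of_lt (hab' k (j-1) (by omega) (by omega))
        have : z k < y := lt_of_lt_of_le (lt_of_lt_of_le h3 h4) (le_of_lt hy.1)
        exact (ne_of_gt this)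
      · subst h; exact hne'
      · have h3 : b (k-1) < z k := (hz k (by omega) hk2).1.1
        have h4 : a j ≤ b (k-1) := le_of_lt (hab' j (k-1) (by omega) (by omega))
        exact ne_of_lt (lt_of_le_of_lt (le_of_lt (lt_of_lt_of_le hy.2 h4)) h3)
    have hynotmem : y ∉ (Finset.Icc 1 n).image z := by
      simp only [Finset.mem_image, Finset.mem_Icc, not_exists]
      rintro k ⟨⟨hk1, hk2⟩, hky⟩
      exact hynot k hk1 hk2 hky.symm
    have hroots : ∀ x ∈ insert y ((Finset.Icc 1 n).image z), ς.eval x = 0 := by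
      intro x hx
      rcases Finset.mem_insert.mp hx with h | h
      · subst h; exact hy0
      · obtain ⟨k, hk, hkx⟩ := Finset.mem_image.mp h
        rw [Finset.mem_Icc] at hk
        subst hkx; exact (hz k hk.1 hk.2).2
    have hcard := my_card_le_natDegree ς hςne _ hroots
    rw [Finset.card_insert_of_notMem hynotmem, himgcard, hdn] at hcard
    omega
  have hC : ∀ w : ℂ, aeval w ς = 0 → ∃ j, 1 ≤ j ∧ j ≤ n ∧ w = ((z j : ℝ) : ℂ) := by
    intro w hw
    by_contra hcon
    push_neg at hcon
    set ςC := ς.map (algebraMap ℝ ℂ) with hςC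
    have hςCne : ςC ≠ 0 := Polynomial.map_ne_zero hςne
    have hςCdeg : ςC.natDegree = n := by
      rw [hςC, Polynomial.natDegree_map, hdn]
    have hwroot : ςC.eval w = 0 := by rwa [hςC, eval_map, ← aeval_def]
    have hzroot : ∀ k, 1 ≤ k → k ≤ n → ςC.eval (((z k : ℝ) : ℂ)) = 0 := by
      intro k hk1 hk2
      have h5 : ςC.eval ((algebraMap ℝ ℂ) (z k)) = (algebraMap ℝ ℂ) (ς.eval (z k)) := by
        rw [hςC, eval_map, eval₂_at_apply]
      rw [Complex.coe_algebraMap] at h5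
      rw [h5, (hz k hk1 hk2).2]
      simp
    have hne2 : w ∉ (Finset.Icc 1 n).image (fun k => ((z k : ℝ) : ℂ)) := by
      simp only [Finset.mem_image, Finset.mem_Icc, not_exists]
      rintro k ⟨⟨hk1, hk2⟩, hkw⟩
      exact hcon k hk1 hk2 hkw.symm
    have hinj2 : Set.InjOn (fun k => ((z k : ℝ) : ℂ)) (Finset.Icc 1 n) := by
      intro x hx y hy hxy
      exact hzinj hx hy (Complex.ofReal_inj.mp hxy)
    have hroots : ∀ x ∈ insert w ((Finset.Icc 1 n).image (fun k => ((z k : ℝ) : ℂ))),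
        ςC.eval x = 0 := by
      intro x hx
      rcases Finset.mem_insert.mp hx with h | h
      · subst h; exact hwroot
      · obtain ⟨k, hk, hkx⟩ := Finset.mem_image.mp h
        rw [Finset.mem_Icc] at hk
        subst hkx; exact hzroot k hk.1 hk.2
    have hcard := my_card_le_natDegree ςC hςCne _ hroots
    rw [Finset.card_insert_of_notMem hne2, Finset.card_image_of_injOn hinj2,
      Nat.card_Icc, hςCdeg] at hcard
    omega
  exact ⟨hdeg, z, fun j h1 h2 => ⟨(hz j h1 h2).1, (hz j h1 h2).2, huniq j h1 h2⟩, hC⟩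
end

section
/- Let Y : ℝⁿ → ℝ be continuous and ℤⁿ-periodic (Y(μ + m) = Y(μ) for all m ∈ ℤⁿ), and let ω, c ∈ ℝⁿ. Then the time average lim_{T→+∞} (1/T) ∫_0^T Y(tω + c) dt exists as a real number. -/
open Filter intervalIntegral

noncomputable section

namespace TimeAvg

/-! ### The lattice `ℤⁿ` and the torus -/

def lat (n : ℕ) : AddSubgroup (Fin n → ℝ) :=
  AddSubgroup.pi Set.univ fun _ => AddSubgroup.zmultiples (1 : ℝ)

lemma mem_lat_iff {n : ℕ} {μ : Fin n → ℝ} :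
    μ ∈ lat n ↔ ∀ i, ∃ m : ℤ, (m : ℝ) = μ i := by
  simp [lat, AddSubgroup.mem_pi, AddSubgroup.mem_zmultiples_iff, zsmul_eq_mul, mul_one]

lemma lat_exists {n : ℕ} {μ : Fin n → ℝ} (h : μ ∈ lat n) :
    ∃ m : Fin n → ℤ, (fun i => (m i : ℝ)) = μ := by
  choose m hm using mem_lat_iff.mp h
  exact ⟨m, funext hm⟩

lemma mem_lat_of_int {n : ℕ} (m : Fin n → ℤ) : (fun i => (m i : ℝ)) ∈ lat n :=
  mem_lat_iff.mpr fun i => ⟨m i, rfl⟩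

abbrev Torus (n : ℕ) := (Fin n → ℝ) ⧸ lat n

instance (n : ℕ) : IsClosed ((lat n : Set (Fin n → ℝ))) := by
  have h : (lat n : Set (Fin n → ℝ))
      = Set.pi Set.univ (fun _ : Fin n => Set.range ((↑) : ℤ → ℝ)) := by
    ext μ
    simp only [SetLike.mem_coe, mem_lat_iff, Set.mem_pi, Set.mem_univ, forall_true_left,
      Set.mem_range]
  rw [h]
  exact isClosed_set_pi fun i _ => Int.isClosedEmbedding_coe_real.isClosed_range

instance (n : ℕ) : CompactSpace (Torus n) := by
  refine ⟨?_⟩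
  have h : (Set.univ : Set (Torus n))
      = QuotientAddGroup.mk '' (Set.Icc (0 : Fin n → ℝ) 1) := by
    ext q
    simp only [Set.mem_univ, true_iff, Set.mem_image]
    obtain ⟨μ, rfl⟩ := QuotientAddGroup.mk_surjective q
    refine ⟨fun i => Int.fract (μ i), ?_, ?_⟩
    · constructor
      · intro i; exact Int.fract_nonneg _
      · intro i; exact le_of_lt (Int.fract_lt_one _)
    · rw [QuotientAddGroup.eq]
      have h2 : -(fun i => Int.fract (μ i)) + μ = fun i => ((⌊μ i⌋ : ℤ) : ℝ) := by
        funext j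
        show -Int.fract (μ j) + μ j = _
        rw [neg_add_eq_sub, Int.self_sub_fract]
      rw [h2]
      exact mem_lat_of_int _
  rw [h]
  exact isCompact_Icc.image continuous_quotient_mk'

/-! ### Descending periodic functions to the torus -/

def descend {n : ℕ} (f : (Fin n → ℝ) → ℂ)
    (hf : ∀ (μ : Fin n → ℝ) (m : Fin n → ℤ), f (μ + fun i => (m i : ℝ)) = f μ) :
    Torus n → ℂ :=
  fun q => Quotient.liftOn' q f (by
    intro a b hab
    rw [QuotientAddGroup.leftRel_apply] at hab
    obtain ⟨m, hm⟩ := lat_exists hab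
    have hb : b = a + fun i => (m i : ℝ) := by rw [hm]; abel
    rw [hb, hf])

@[simp] lemma descend_mk {n : ℕ} (f : (Fin n → ℝ) → ℂ) (hf) (μ : Fin n → ℝ) :
    descend f hf (QuotientAddGroup.mk μ) = f μ := rfl

lemma descend_continuous {n : ℕ} (f : (Fin n → ℝ) → ℂ) (hf) (h : Continuous f) :
    Continuous (descend f hf) := h.quotient_liftOn' _

/-! ### Characters -/

def ek {n : ℕ} (k : Fin n → ℤ) : (Fin n → ℝ) → ℂ :=
  fun μ => Complex.exp ((2 * Real.pi * (∑ i, (k i : ℝ) * μ i) : ℝ) * Complex.I)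

lemma ek_continuous {n : ℕ} (k : Fin n → ℤ) : Continuous (ek k) := by
  apply Complex.continuous_exp.comp
  fun_prop

lemma ek_periodic {n : ℕ} (k : Fin n → ℤ) :
    ∀ (μ : Fin n → ℝ) (m : Fin n → ℤ), ek k (μ + fun i => (m i : ℝ)) = ek k μ := by
  intro μ m
  simp only [ek, Pi.add_apply]
  have h1 : (∑ i, (k i : ℝ) * (μ i + (m i : ℝ)))
      = (∑ i, (k i : ℝ) * μ i) + ((∑ i, k i * m i : ℤ) : ℝ) := by
    push_cast
    rw [← Finset.sum_add_distrib]
    congr 1; funext i; ring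
  rw [h1]
  set N : ℤ := ∑ i, k i * m i with hN
  have h2 : ((2 * Real.pi * ((∑ i, (k i : ℝ) * μ i) + (N : ℝ)) : ℝ) : ℂ) * Complex.I
      = ((2 * Real.pi * (∑ i, (k i : ℝ) * μ i) : ℝ) : ℂ) * Complex.I
        + (N : ℂ) * (2 * (Real.pi : ℂ) * Complex.I) := by
    push_cast; ring
  rw [h2, Complex.exp_add, Complex.exp_int_mul_two_pi_mul_I, mul_one]

def chi {n : ℕ} (k : Fin n → ℤ) : C(Torus n, ℂ) :=
  ⟨descend (ek k) (ek_periodic k), descend_continuous _ _ (ek_continuous k)⟩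

@[simp] lemma chi_mk {n : ℕ} (k : Fin n → ℤ) (μ : Fin n → ℝ) :
    chi k (QuotientAddGroup.mk μ) = ek k μ := rfl

lemma chi_zero {n : ℕ} : chi (0 : Fin n → ℤ) = 1 := by
  ext q
  obtain ⟨μ, rfl⟩ := QuotientAddGroup.mk_surjective q
  simp [ek]

lemma chi_mul {n : ℕ} (k l : Fin n → ℤ) : chi k * chi l = chi (k + l) := by
  ext q
  obtain ⟨μ, rfl⟩ := QuotientAddGroup.mk_surjective q
  show ek k μ * ek l μ = ek (k + l) μ
  simp only [ek, ← Complex.exp_add]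
  congr 1
  have h : (2 * Real.pi * (∑ i, (k i : ℝ) * μ i)) + (2 * Real.pi * (∑ i, (l i : ℝ) * μ i))
      = 2 * Real.pi * (∑ i, ((k + l) i : ℝ) * μ i) := by
    rw [← mul_add, ← Finset.sum_add_distrib]
    congr 1; congr 1; funext i
    simp only [Pi.add_apply]
    push_cast; ring
  rw [← h]
  push_cast; ring

lemma chi_star {n : ℕ} (k : Fin n → ℤ) : star (chi k) = chi (-k) := by
  ext q
  obtain ⟨μ, rfl⟩ := QuotientAddGroup.mk_surjective q
  show star (ek k μ) = ek (-k) μ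
  simp only [ek]
  rw [Complex.star_def, ← Complex.exp_conj, map_mul, Complex.conj_I, Complex.conj_ofReal]
  congr 1
  have h : (∑ i, ((-k) i : ℝ) * μ i) = -(∑ i, (k i : ℝ) * μ i) := by
    rw [← Finset.sum_neg_distrib]
    congr 1; funext i; simp only [Pi.neg_apply]; push_cast; ring
  rw [h]
  push_cast
  ring

/-! ### The star subalgebra spanned by characters -/

def SS (n : ℕ) : Submodule ℂ C(Torus n, ℂ) :=
  Submodule.span ℂ (Set.range (chi (n := n)))

lemma one_mem_SS (n : ℕ) : (1 : C(Torus n, ℂ)) ∈ SS n :=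
  chi_zero (n := n) ▸ Submodule.subset_span ⟨0, rfl⟩

lemma mul_mem_SS (n : ℕ) : ∀ f g : C(Torus n, ℂ), f ∈ SS n → g ∈ SS n → f * g ∈ SS n := by
  have key : ∀ (k : Fin n → ℤ), ∀ f ∈ SS n, f * chi k ∈ SS n := by
    intro k f hf
    induction hf using Submodule.span_induction with
    | mem x hx =>
      obtain ⟨l, rfl⟩ := hx
      rw [chi_mul]
      exact Submodule.subset_span ⟨l + k, rfl⟩
    | zero => rw [zero_mul]; exact Submodule.zero_mem _
    | add x y hx hy ihx ihy => rw [add_mul]; exact Submodule.add_mem _ ihx ihy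
    | smul a x hx ih => rw [smul_mul_assoc]; exact Submodule.smul_mem _ _ ih
  intro f g hf hg
  induction hg using Submodule.span_induction with
  | mem x hx => obtain ⟨l, rfl⟩ := hx; exact key l f hf
  | zero => rw [mul_zero]; exact Submodule.zero_mem _
  | add x y hx hy ihx ihy => rw [mul_add]; exact Submodule.add_mem _ ihx ihy
  | smul a x hx ih => rw [mul_smul_comm]; exact Submodule.smul_mem _ _ ih

lemma star_mem_SS (n : ℕ) : ∀ f ∈ SS n, star f ∈ SS n := by
  intro f hf
  induction hf using Submodule.span_induction with
  | mem x hx => obtain ⟨l, rfl⟩ := hx; rw [chi_star]; exact Submodule.subset_span ⟨-l, rfl⟩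
  | zero => rw [star_zero]; exact Submodule.zero_mem _
  | add x y hx hy ihx ihy => rw [star_add]; exact Submodule.add_mem _ ihx ihy
  | smul a x hx ih => rw [star_smul]; exact Submodule.smul_mem _ _ ih

def AA (n : ℕ) : StarSubalgebra ℂ C(Torus n, ℂ) where
  toSubalgebra := (SS n).toSubalgebra (one_mem_SS n) (mul_mem_SS n)
  star_mem' := fun h => star_mem_SS n _ h

lemma mem_AA_iff {n : ℕ} {f : C(Torus n, ℂ)} : f ∈ AA n ↔ f ∈ SS n := Iff.rfl

/-! ### Separation of points and Stone–Weierstrass -/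

lemma sum_single {n : ℕ} (i : Fin n) (μ : Fin n → ℝ) :
    ∑ j, (((Pi.single i 1 : Fin n → ℤ) j : ℤ) : ℝ) * μ j = μ i := by
  have h : ∀ j, (((Pi.single i 1 : Fin n → ℤ) j : ℤ) : ℝ) * μ j = if j = i then μ j else 0 := by
    intro j
    rcases eq_or_ne j i with h | h
    · subst h; simp
    · simp [Pi.single_apply, h]
  rw [Finset.sum_congr rfl fun j _ => h j, Finset.sum_ite_eq' Finset.univ i]
  simp

lemma SW (n : ℕ) : (AA n).topologicalClosure = ⊤ := by
  apply ContinuousMap.starSubalgebra_topologicalClosure_eq_top_of_separatesPoints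
  intro x y hxy
  obtain ⟨μ, rfl⟩ := QuotientAddGroup.mk_surjective x
  obtain ⟨ν, rfl⟩ := QuotientAddGroup.mk_surjective y
  have hne : ¬(-μ + ν ∈ lat n) := fun h => hxy (QuotientAddGroup.eq.mpr h)
  rw [mem_lat_iff] at hne
  push_neg at hne
  obtain ⟨i, hi⟩ := hne
  refine ⟨_, ⟨chi (Pi.single i 1), ?_, rfl⟩, ?_⟩
  · exact Submodule.subset_span ⟨Pi.single i 1, rfl⟩
  · simp only [chi_mk, ek, sum_single]
    intro heq
    obtain ⟨m, hm⟩ := Complex.exp_eq_exp_iff_exists_int.mp heq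
    have h3 : ((2 * Real.pi * μ i : ℝ) : ℂ) = ((2 * Real.pi * ν i + m * (2 * Real.pi) : ℝ) : ℂ) := by
      apply mul_right_cancel₀ Complex.I_ne_zero
      rw [hm]; push_cast; ring
    have h4 : 2 * Real.pi * μ i = 2 * Real.pi * ν i + m * (2 * Real.pi) :=
      Complex.ofReal_injective h3
    have h4' : (2 * Real.pi) * μ i = (2 * Real.pi) * (ν i + m) := by ring_nf; ring_nf at h4; linarith
    have h5 := mul_left_cancel₀ (ne_of_gt (by positivity : (0:ℝ) < 2 * Real.pi)) h4'
    apply hi (-m)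
    rw [Pi.add_apply, Pi.neg_apply]
    push_cast
    linarith

lemma approx (n : ℕ) (f : C(Torus n, ℂ)) {ε : ℝ} (hε : 0 < ε) :
    ∃ g ∈ SS n, ‖f - g‖ < ε := by
  have h1 : f ∈ (AA n).topologicalClosure := by rw [SW n]; exact trivial
  have h2 : f ∈ closure ((AA n) : Set C(Torus n, ℂ)) := by
    rwa [← StarSubalgebra.topologicalClosure_coe]
  rw [Metric.mem_closure_iff] at h2
  obtain ⟨g, hg, hdist⟩ := h2 ε hε
  exact ⟨g, hg, by rwa [dist_eq_norm] at hdist⟩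

/-! ### Time averages -/

variable {n : ℕ} (ω c : Fin n → ℝ)

def avg (g : C(Torus n, ℂ)) (T : ℝ) : ℂ :=
  (1 / (T : ℂ)) * ∫ t in (0:ℝ)..T, g (QuotientAddGroup.mk (fun i => t * ω i + c i))

lemma integrable_comp (g : C(Torus n, ℂ)) (a b : ℝ) :
    IntervalIntegrable (fun t => g (QuotientAddGroup.mk (fun i => t * ω i + c i)))
      MeasureTheory.volume a b := by
  apply Continuous.intervalIntegrable
  exact g.continuous.comp (continuous_quotient_mk'.comp (by fun_prop))

lemma chi_flow (k : Fin n → ℤ) (t : ℝ) :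
    chi k (QuotientAddGroup.mk fun i => t * ω i + c i)
      = Complex.exp ((((2 * Real.pi * ∑ i, (k i : ℝ) * c i : ℝ)) : ℂ) * Complex.I)
        * Complex.exp ((((2 * Real.pi * ∑ i, (k i : ℝ) * ω i : ℝ)) : ℂ) * Complex.I * t) := by
  rw [chi_mk]
  unfold ek
  rw [← Complex.exp_add]
  congr 1
  have h : (∑ i, (k i : ℝ) * (t * ω i + c i))
      = t * (∑ i, (k i : ℝ) * ω i) + ∑ i, (k i : ℝ) * c i := by
    rw [Finset.mul_sum, ← Finset.sum_add_distrib]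
    congr 1; funext i; ring
  rw [h]
  push_cast; ring

lemma avg_chi_tendsto (k : Fin n → ℤ) : ∃ L, Tendsto (avg ω c (chi k)) atTop (nhds L) := by
  set al : ℝ := 2 * Real.pi * ∑ i, (k i : ℝ) * ω i with hal
  set bl : ℝ := 2 * Real.pi * ∑ i, (k i : ℝ) * c i with hbl
  have hflow : ∀ t : ℝ, chi k (QuotientAddGroup.mk fun i => t * ω i + c i)
      = Complex.exp ((bl : ℂ) * Complex.I) * Complex.exp ((al : ℂ) * Complex.I * t) :=
    fun t => chi_flow ω c k t
  by_cases hA : al = 0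
  · refine ⟨Complex.exp ((bl : ℂ) * Complex.I), ?_⟩
    have hev : ∀ᶠ T in atTop, avg ω c (chi k) T = Complex.exp ((bl : ℂ) * Complex.I) := by
      filter_upwards [eventually_ge_atTop (1:ℝ)] with T hT
      have hT0 : (0:ℝ) < T := lt_of_lt_of_le one_pos hT
      unfold avg
      simp only [hflow, hA]
      simp only [Complex.ofReal_zero, zero_mul, Complex.exp_zero, mul_one]
      rw [integral_const, sub_zero, Complex.real_smul]
      rw [← mul_assoc, one_div, inv_mul_cancel₀ (by exact_mod_cast hT0.ne' : (T:ℂ) ≠ 0), one_mul]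
    exact tendsto_const_nhds.congr' (by filter_upwards [hev] with T h using h.symm)
  · refine ⟨0, ?_⟩
    have hz : ((al : ℂ) * Complex.I) ≠ 0 :=
      mul_ne_zero (Complex.ofReal_ne_zero.mpr hA) Complex.I_ne_zero
    have hzpos : 0 < ‖(al : ℂ) * Complex.I‖ := norm_pos_iff.mpr hz
    apply squeeze_zero_norm' (a := fun T : ℝ => (2 / ‖(al : ℂ) * Complex.I‖) / T)
    · filter_upwards [eventually_ge_atTop (1:ℝ)] with T hT
      have hT0 : (0:ℝ) < T := lt_of_lt_of_le one_pos hT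
      unfold avg
      simp only [hflow]
      rw [integral_const_mul, integral_exp_mul_complex hz]
      rw [Complex.ofReal_zero, mul_zero, Complex.exp_zero]
      have hnorm1 : ∀ s : ℝ, ‖Complex.exp ((al : ℂ) * Complex.I * s)‖ = 1 := by
        intro s
        have h : (al : ℂ) * Complex.I * s = ((al * s : ℝ) : ℂ) * Complex.I := by push_cast; ring
        rw [h, Complex.norm_exp_ofReal_mul_I]
      have hnum : ‖Complex.exp ((al:ℂ) * Complex.I * (T:ℂ)) - 1‖ ≤ 2 := by
        refine (norm_sub_le _ _).trans ?_
        rw [hnorm1 T, norm_one]; norm_num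
      have h1T : ‖(1 / (T:ℂ))‖ = 1 / T := by
        rw [norm_div, norm_one, Complex.norm_real, Real.norm_eq_abs, abs_of_pos hT0]
      have hb1 : ‖Complex.exp ((bl:ℂ) * Complex.I)‖ = 1 := by
        rw [Complex.norm_exp_ofReal_mul_I]
      rw [norm_mul, norm_mul, h1T, hb1, one_mul, norm_div]
      have h2 : (1/T) * (‖Complex.exp ((al:ℂ) * Complex.I * (T:ℂ)) - 1‖ / ‖(al:ℂ) * Complex.I‖)
          ≤ (1/T) * (2 / ‖(al:ℂ) * Complex.I‖) := by
        gcongr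
      exact h2.trans (le_of_eq (by ring))
    · exact tendsto_const_nhds.div_atTop tendsto_id

lemma avg_tendsto {g : C(Torus n, ℂ)} (hg : g ∈ SS n) :
    ∃ L, Tendsto (avg ω c g) atTop (nhds L) := by
  induction hg using Submodule.span_induction with
  | mem x hx => obtain ⟨k, rfl⟩ := hx; exact avg_chi_tendsto ω c k
  | zero =>
    refine ⟨0, ?_⟩
    have h : avg ω c (0 : C(Torus n, ℂ)) = fun _ => 0 := by
      funext T; unfold avg; simp
    rw [h]; exact tendsto_const_nhds
  | add x y hx hy ihx ihy =>
    obtain ⟨L1, h1⟩ := ihx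
    obtain ⟨L2, h2⟩ := ihy
    refine ⟨L1 + L2, ?_⟩
    have h : avg ω c (x + y) = fun T => avg ω c x T + avg ω c y T := by
      funext T; unfold avg
      rw [← mul_add, ← integral_add (integrable_comp ω c x 0 T) (integrable_comp ω c y 0 T)]
      simp
    rw [h]; exact h1.add h2
  | smul a x hx ih =>
    obtain ⟨L, h⟩ := ih
    refine ⟨a * L, ?_⟩
    have he : avg ω c (a • x) = fun T => a * avg ω c x T := by
      funext T; unfold avg
      simp only [ContinuousMap.coe_smul, Pi.smul_apply, smul_eq_mul]
      rw [integral_const_mul]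
      ring
    rw [he]; exact h.const_mul a

lemma avg_dist (g h : C(Torus n, ℂ)) {T : ℝ} (hT : 1 ≤ T) :
    ‖avg ω c g T - avg ω c h T‖ ≤ ‖g - h‖ := by
  have hT0 : (0:ℝ) < T := lt_of_lt_of_le one_pos hT
  unfold avg
  rw [← mul_sub, ← integral_sub (integrable_comp ω c g 0 T) (integrable_comp ω c h 0 T)]
  rw [norm_mul]
  have h1T : ‖(1 / (T:ℂ))‖ = 1 / T := by
    rw [norm_div, norm_one, Complex.norm_real, Real.norm_eq_abs, abs_of_pos hT0]
  rw [h1T]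
  have hbd : ‖∫ t in (0:ℝ)..T, (g (QuotientAddGroup.mk (fun i => t * ω i + c i))
      - h (QuotientAddGroup.mk (fun i => t * ω i + c i)))‖ ≤ ‖g - h‖ * |T - 0| := by
    apply norm_integral_le_of_norm_le_const
    intro x _
    have := ContinuousMap.norm_coe_le_norm (g - h) (QuotientAddGroup.mk (fun i => x * ω i + c i))
    simpa using this
  calc 1 / T * ‖∫ t in (0:ℝ)..T, (g (QuotientAddGroup.mk (fun i => t * ω i + c i))
        - h (QuotientAddGroup.mk (fun i => t * ω i + c i)))‖
      ≤ 1 / T * (‖g - h‖ * |T - 0|) := by gcongr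
    _ = ‖g - h‖ := by rw [sub_zero, abs_of_pos hT0]; field_simp

end TimeAvg

open TimeAvg in
/-- For a continuous `ℤⁿ`-periodic function `Y : ℝⁿ → ℝ` and `ω, c ∈ ℝⁿ`, the time average
`lim_{T→+∞} (1/T) ∫_0^T Y(tω + c) dt` exists as a real number. -/
theorem time_average_exists (n : ℕ) (Y : (Fin n → ℝ) → ℝ) (hY : Continuous Y)
    (hper : ∀ (μ : Fin n → ℝ) (m : Fin n → ℤ), Y (μ + fun i => (m i : ℝ)) = Y μ)
    (ω c : Fin n → ℝ) :
    ∃ L : ℝ, Tendsto (fun T : ℝ => (1 / T) * ∫ t in (0 : ℝ)..T, Y (fun i => t * ω i + c i))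
      atTop (nhds L) := by
  classical
  set F : ℝ → ℝ := fun T => (1 / T) * ∫ t in (0 : ℝ)..T, Y (fun i => t * ω i + c i) with hF
  have hYper' : ∀ (μ : Fin n → ℝ) (m : Fin n → ℤ),
      (fun μ => ((Y μ : ℝ) : ℂ)) (μ + fun i => (m i : ℝ)) = (fun μ => ((Y μ : ℝ) : ℂ)) μ := by
    intro μ m
    simp only
    rw [hper]
  set Yhat : C(Torus n, ℂ) :=
    ⟨descend (fun μ => ((Y μ : ℝ) : ℂ)) hYper',
      descend_continuous _ _ (Complex.continuous_ofReal.comp hY)⟩ with hYhat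
  have havg : ∀ T : ℝ, ((F T : ℝ) : ℂ) = avg ω c Yhat T := by
    intro T
    unfold avg
    have h1 : (fun t : ℝ => Yhat (QuotientAddGroup.mk (fun i => t * ω i + c i)))
        = fun t : ℝ => ((Y (fun i => t * ω i + c i) : ℝ) : ℂ) := rfl
    rw [h1, integral_ofReal, hF]
    push_cast
    ring
  have hC : Cauchy (map F atTop) := by
    rw [Metric.cauchy_iff]
    constructor
    · exact map_neBot
    · intro ε hε
      obtain ⟨g, hg, hnorm⟩ := approx n Yhat (by positivity : (0:ℝ) < ε/4)
      obtain ⟨L, hL⟩ := avg_tendsto ω c hg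
      have hev : {T : ℝ | 1 ≤ T ∧ dist (avg ω c g T) L < ε/4} ∈ atTop := by
        filter_upwards [eventually_ge_atTop (1:ℝ),
          hL (Metric.ball_mem_nhds L (by positivity : (0:ℝ) < ε/4))] with T h1 h2
        exact ⟨h1, h2⟩
      refine ⟨F '' {T : ℝ | 1 ≤ T ∧ dist (avg ω c g T) L < ε/4}, image_mem_map hev, ?_⟩
      rintro x ⟨T1, ⟨hT1, hd1⟩, rfl⟩ y ⟨T2, ⟨hT2, hd2⟩, rfl⟩
      have e1 : dist (F T1) (F T2) = ‖((F T1 : ℝ) : ℂ) - ((F T2 : ℝ) : ℂ)‖ := by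
        rw [dist_eq_norm, ← Complex.ofReal_sub, Complex.norm_real]
      rw [e1, havg, havg]
      have k1 : ‖avg ω c Yhat T1 - avg ω c g T1‖ ≤ ε/4 :=
        le_of_lt (lt_of_le_of_lt (avg_dist ω c Yhat g hT1) hnorm)
      have k2 : ‖avg ω c Yhat T2 - avg ω c g T2‖ ≤ ε/4 :=
        le_of_lt (lt_of_le_of_lt (avg_dist ω c Yhat g hT2) hnorm)
      have k3 : ‖avg ω c g T1 - L‖ < ε/4 := by rwa [← dist_eq_norm]
      have k4 : ‖avg ω c g T2 - L‖ < ε/4 := by rwa [← dist_eq_norm]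
      have k2' : ‖avg ω c g T2 - avg ω c Yhat T2‖ ≤ ε/4 := by rw [norm_sub_rev]; exact k2
      have k4' : ‖L - avg ω c g T2‖ < ε/4 := by rw [norm_sub_rev]; exact k4
      calc ‖avg ω c Yhat T1 - avg ω c Yhat T2‖
          = ‖(avg ω c Yhat T1 - avg ω c g T1) + ((avg ω c g T1 - L)
              + ((L - avg ω c g T2) + (avg ω c g T2 - avg ω c Yhat T2)))‖ := by ring_nf
        _ ≤ ‖avg ω c Yhat T1 - avg ω c g T1‖ + (‖avg ω c g T1 - L‖
              + (‖L - avg ω c g T2‖ + ‖avg ω c g T2 - avg ω c Yhat T2‖)) := by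
            refine (norm_add_le _ _).trans ?_
            gcongr
            refine (norm_add_le _ _).trans ?_
            gcongr
            exact norm_add_le _ _
        _ < ε := by linarith
  obtain ⟨L, hL⟩ := cauchy_map_iff_exists_tendsto.mp hC
  exact ⟨L, hL⟩
end
end

section
/- Let n ≥ 1, let ℓ : ℤⁿ → ℂ satisfy |ℓ(m)| ≤ c₁ e^{−c₂‖m‖₂} for some constants c₁, c₂ > 0, let x ∈ ℝⁿ, and suppose Ω ∈ ℝⁿ is rationally independent, i.e. the only m ∈ ℤⁿ with ⟨m, Ω⟩ = 0 is m = 0. Define F(t) = Σ_{m ∈ ℤⁿ} ℓ(m) e^{i⟨m, tΩ + x⟩}. Then the time average equals the space average: lim_{T→+∞} (1/T) ∫_0^T F(t) dt = ℓ(0), and ℓ(0) equals ∫_{[0,1]ⁿ} Σ_{m ∈ ℤⁿ} ℓ(m) e^{2πi⟨m, u⟩} du. -/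
open Filter Finset MeasureTheory

lemma sumZ {c : ℝ} (hc : 0 < c) : Summable (fun k : ℤ => Real.exp (-c * |(k:ℝ)|)) := by
  have hgeo : Summable (fun n : ℕ => Real.exp (-c) ^ n) :=
    summable_geometric_of_lt_one (Real.exp_nonneg _) (Real.exp_lt_one_iff.2 (by linarith))
  apply Summable.of_nat_of_neg
  · refine hgeo.congr fun n => ?_
    rw [← Real.exp_nat_mul]; congr 1; push_cast
    rw [abs_of_nonneg (by positivity)]; ring
  · refine hgeo.congr fun n => ?_
    rw [← Real.exp_nat_mul]; congr 1; push_cast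
    rw [abs_neg, abs_of_nonneg (by positivity)]; ring

lemma sumPi (c : ℝ) (hc : 0 < c) : ∀ k : ℕ,
    Summable (fun m : Fin k → ℤ => Real.exp (-c * ∑ i, |(m i : ℝ)|)) := by
  intro k
  induction k with
  | zero => exact .of_finite
  | succ k ih =>
    have h2 : Summable (fun p : ℤ × (Fin k → ℤ) =>
        Real.exp (-c * |(p.1:ℝ)|) * Real.exp (-c * ∑ i, |(p.2 i : ℝ)|)) :=
      (sumZ hc).mul_of_nonneg ih (fun _ => Real.exp_nonneg _) (fun _ => Real.exp_nonneg _)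
    have h3 := h2.comp_injective (Fin.consEquiv fun _ => ℤ).symm.injective
    refine h3.congr fun m => ?_
    simp only [Function.comp, Fin.consEquiv_symm_apply, Fin.tail]
    rw [← Real.exp_add, Fin.sum_univ_succ]
    congr 1; ring

/-- Let `n ≥ 1`, let `ℓ : ℤⁿ → ℂ` decay exponentially, let `x ∈ ℝⁿ`, and suppose `Ω ∈ ℝⁿ` is
rationally independent. With `F(t) = Σ_m ℓ(m) e^{i⟨m, tΩ+x⟩}`, the time average equals the space
average: `(1/T)∫_0^T F(t) dt → ℓ(0)` as `T → +∞`, and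
`ℓ(0) = ∫_{[0,1]ⁿ} Σ_m ℓ(m) e^{2πi⟨m,u⟩} du`. -/
theorem ergodic_time_average_eq_space_average (n : ℕ) (hn : 1 ≤ n)
    (ℓ : (Fin n → ℤ) → ℂ) (c₁ c₂ : ℝ) (hc₁ : 0 < c₁) (hc₂ : 0 < c₂)
    (hℓ : ∀ m : Fin n → ℤ,
      ‖ℓ m‖ ≤ c₁ * Real.exp (-c₂ * Real.sqrt (∑ i, ((m i : ℝ)) ^ 2)))
    (x Ω : Fin n → ℝ)
    (hΩ : ∀ m : Fin n → ℤ, (∑ i, (m i : ℝ) * Ω i) = 0 → m = 0)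
    (F : ℝ → ℂ)
    (hF : ∀ t : ℝ, F t = ∑' m : Fin n → ℤ,
      ℓ m * Complex.exp (Complex.I * ((∑ i, (m i : ℝ) * (t * Ω i + x i) : ℝ) : ℂ))) :
    Tendsto (fun T : ℝ => (1 / (T : ℂ)) * ∫ t in (0 : ℝ)..T, F t) atTop (nhds (ℓ 0)) ∧
    ℓ 0 = ∫ u in Set.Icc (0 : Fin n → ℝ) 1,
      ∑' m : Fin n → ℤ,
        ℓ m * Complex.exp (((2 * Real.pi : ℝ) : ℂ) * Complex.I *
          ((∑ i, (m i : ℝ) * u i : ℝ) : ℂ)) := by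
  classical
  have hsn : (0:ℝ) < Real.sqrt n := Real.sqrt_pos.2 (by exact_mod_cast hn)
  -- summability of the norms
  have hℓsum : Summable (fun m : Fin n → ℤ => ‖ℓ m‖) := by
    have hc' : (0:ℝ) < c₂ / Real.sqrt n := by positivity
    have h := (sumPi (c₂ / Real.sqrt n) hc' n).mul_left c₁
    refine (h.of_nonneg_of_le (fun m => norm_nonneg _) (fun m => ?_))
    have h0 : ‖ℓ m‖ ≤ c₁ * Real.exp (-c₂ * Real.sqrt (∑ i, ((m i:ℝ))^2)) := by
      exact hℓ m
    refine h0.trans ?_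
    have hCS : (∑ i, |(m i : ℝ)|) ≤ Real.sqrt n * Real.sqrt (∑ i, ((m i:ℝ))^2) := by
      rw [← Real.sqrt_mul (by positivity : (0:ℝ) ≤ (n:ℝ))]
      have h1 : (∑ i, |(m i:ℝ)|) = Real.sqrt ((∑ i, |(m i:ℝ)|)^2) :=
        (Real.sqrt_sq (by positivity)).symm
      rw [h1]
      refine Real.sqrt_le_sqrt ?_
      calc (∑ i, |(m i : ℝ)|)^2 ≤ (Finset.univ.card : ℝ) * ∑ i, |(m i:ℝ)|^2 := by
            exact_mod_cast sq_sum_le_card_mul_sum_sq (s := Finset.univ) (f := fun i => |(m i : ℝ)|)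
        _ = (n:ℝ) * ∑ i, ((m i:ℝ))^2 := by simp [Finset.card_univ, sq_abs]
    have hexp : -c₂ * Real.sqrt (∑ i, ((m i:ℝ))^2) ≤ -(c₂ / Real.sqrt n) * ∑ i, |(m i:ℝ)| := by
      have h2 : c₂ / Real.sqrt n * ∑ i, |(m i:ℝ)| ≤ c₂ * Real.sqrt (∑ i, ((m i:ℝ))^2) := by
        rw [div_mul_eq_mul_div, div_le_iff₀ hsn]
        nlinarith [mul_le_mul_of_nonneg_left hCS hc₂.le]
      linarith
    exact mul_le_mul_of_nonneg_left (Real.exp_le_exp.2 hexp) hc₁.le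
  have hℓsum' : Summable (fun m : Fin n → ℤ => ‖ℓ m‖₊) :=
    NNReal.summable_coe.1 (by simpa using hℓsum)
  -- the individual terms
  set term : (Fin n → ℤ) → ℝ → ℂ := fun m t =>
    ℓ m * Complex.exp (Complex.I * ((∑ i, (m i : ℝ) * (t * Ω i + x i) : ℝ) : ℂ)) with hterm
  set A : (Fin n → ℤ) → ℝ := fun m => ∑ i, (m i : ℝ) * Ω i with hA
  set Bc : (Fin n → ℤ) → ℝ := fun m => ∑ i, (m i : ℝ) * x i with hBc
  have hsum_split : ∀ (m : Fin n → ℤ) (t : ℝ),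
      (∑ i, (m i : ℝ) * (t * Ω i + x i)) = A m * t + Bc m := by
    intro m t
    rw [hA, hBc, Finset.sum_mul, ← Finset.sum_add_distrib]
    exact Finset.sum_congr rfl fun i _ => by ring
  have hterm_eq : ∀ m t, term m t =
      (ℓ m * Complex.exp (Complex.I * (Bc m : ℂ))) *
        Complex.exp ((Complex.I * (A m : ℂ)) * (t : ℂ)) := by
    intro m t
    rw [hterm]
    simp only []
    rw [hsum_split m t]
    push_cast
    rw [mul_add, Complex.exp_add]
    ring
  have hcont : ∀ m, Continuous (term m) := by
    intro m
    apply Continuous.mul continuous_const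
    apply Complex.continuous_exp.comp
    apply Continuous.mul continuous_const
    exact Complex.continuous_ofReal.comp (by fun_prop)
  have hnorm : ∀ m t, ‖term m t‖ = ‖ℓ m‖ := by
    intro m t
    rw [hterm]
    simp only [norm_mul, Complex.norm_exp, Complex.mul_re,
      Complex.I_re, Complex.ofReal_re, Complex.I_im, Complex.ofReal_im]
    norm_num
  have hint : ∀ (m : Fin n → ℤ) (T : ℝ), A m ≠ 0 → (∫ t in (0:ℝ)..T, term m t)
      = (ℓ m * Complex.exp (Complex.I * (Bc m:ℂ))) *
        ((Complex.exp ((Complex.I * (A m:ℂ)) * (T:ℂ)) - 1) / (Complex.I * (A m:ℂ))) := by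
    intro m T hAm
    have hc : Complex.I * (A m : ℂ) ≠ 0 :=
      mul_ne_zero Complex.I_ne_zero (Complex.ofReal_ne_zero.2 hAm)
    simp only [hterm_eq]
    rw [intervalIntegral.integral_const_mul, integral_exp_mul_complex hc]
    norm_num
  have hswap : ∀ T : ℝ, 0 < T →
      (∫ t in (0:ℝ)..T, F t) = ∑' m, ∫ t in (0:ℝ)..T, term m t := by
    intro T hT
    rw [intervalIntegral.integral_of_le hT.le]
    calc (∫ t in Set.Ioc (0:ℝ) T, F t) = ∫ t in Set.Ioc (0:ℝ) T, ∑' m, term m t := by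
          simp only [hF]; rfl
      _ = ∑' m, ∫ t in Set.Ioc (0:ℝ) T, term m t := by
          apply MeasureTheory.integral_tsum
          · exact fun m => ((hcont m).aestronglyMeasurable).restrict
          · have hb : ∀ m : Fin n → ℤ, (∫⁻ t in Set.Ioc (0:ℝ) T, ‖term m t‖₊ ∂volume)
                = (‖ℓ m‖₊ : ENNReal) * ENNReal.ofReal T := by
              intro m
              have hfun : (fun t => (‖term m t‖₊ : ENNReal)) = fun _ => (‖ℓ m‖₊ : ENNReal) := by
                funext t
                congr 1
                ext
                simp [coe_nnnorm, hnorm m t]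
              rw [hfun, MeasureTheory.setLIntegral_const, Real.volume_Ioc, sub_zero]
            simp only [enorm_eq_nnnorm, hb]
            rw [ENNReal.tsum_mul_right]
            exact ENNReal.mul_ne_top (ENNReal.tsum_coe_ne_top_iff_summable.2 hℓsum')
              ENNReal.ofReal_ne_top
      _ = ∑' m, ∫ t in (0:ℝ)..T, term m t := by
          refine tsum_congr fun m => ?_
          rw [intervalIntegral.integral_of_le hT.le]
  -- pointwise limits
  have hinv : Tendsto (fun T : ℝ => (1/(T:ℂ))) atTop (nhds 0) := by
    have h1 : Tendsto (fun T : ℝ => T⁻¹) atTop (nhds 0) := tendsto_inv_atTop_zero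
    have := (Complex.continuous_ofReal.tendsto 0).comp h1
    refine this.congr fun T => ?_
    simp
  have hlim0 : ∀ m : Fin n → ℤ, Tendsto (fun T : ℝ => (1/(T:ℂ)) * ∫ t in (0:ℝ)..T, term m t)
      atTop (nhds (if m = 0 then ℓ 0 else 0)) := by
    intro m
    by_cases hm : m = 0
    · subst hm
      simp only [if_pos rfl]
      have hterm0 : ∀ t : ℝ, term 0 t = ℓ 0 := by
        intro t
        rw [hterm]
        simp
      apply Tendsto.congr' _ (tendsto_const_nhds : Tendsto _ atTop (nhds (ℓ 0)))
      filter_upwards [eventually_gt_atTop (0:ℝ)] with T hT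
      simp only [hterm0, intervalIntegral.integral_const, sub_zero, Complex.real_smul]
      have hT' : (T:ℂ) ≠ 0 := by exact_mod_cast hT.ne'
      field_simp
    · simp only [if_neg hm]
      have hAm : A m ≠ 0 := fun h => hm (hΩ m h)
      have hc : Complex.I * (A m : ℂ) ≠ 0 :=
        mul_ne_zero Complex.I_ne_zero (Complex.ofReal_ne_zero.2 hAm)
      have hB : IsBoundedUnder (· ≤ ·) atTop
          (fun T : ℝ => ‖∫ t in (0:ℝ)..T, term m t‖) := by
        refine isBoundedUnder_of ⟨‖ℓ m‖ * (2 / ‖Complex.I * (A m:ℂ)‖), fun T => ?_⟩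
        rw [hint m T hAm]
        rw [norm_mul, norm_mul, norm_div]
        have he1 : ‖Complex.exp (Complex.I * (Bc m:ℂ))‖ = 1 := by
          simp [Complex.norm_exp, Complex.mul_re]
        have he2 : ‖Complex.exp ((Complex.I * (A m:ℂ)) * (T:ℂ)) - 1‖ ≤ 2 := by
          refine (norm_sub_le _ _).trans ?_
          have : ‖Complex.exp ((Complex.I * (A m:ℂ)) * (T:ℂ))‖ = 1 := by
            simp [Complex.norm_exp, Complex.mul_re, Complex.mul_im]
          rw [this]
          norm_num
        rw [he1, mul_one]
        gcongr
      have := hinv.zero_mul_isBoundedUnder_le hB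
      exact this
  -- eventual bound
  have hbound : ∀ᶠ T : ℝ in atTop, ∀ m : Fin n → ℤ,
      ‖(1/(T:ℂ)) * ∫ t in (0:ℝ)..T, term m t‖ ≤ ‖ℓ m‖ := by
    filter_upwards [eventually_ge_atTop (1:ℝ)] with T hT m
    have hT0 : (0:ℝ) < T := lt_of_lt_of_le one_pos hT
    rw [norm_mul]
    have h1 : ‖∫ t in (0:ℝ)..T, term m t‖ ≤ ‖ℓ m‖ * |T - 0| :=
      intervalIntegral.norm_integral_le_of_norm_le_const fun t _ => (hnorm m t).le
    rw [sub_zero, abs_of_pos hT0] at h1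
    have h2 : ‖(1/(T:ℂ))‖ = 1/T := by
      rw [norm_div, norm_one, Complex.norm_real, Real.norm_eq_abs, abs_of_pos hT0]
    rw [h2]
    calc (1/T) * ‖∫ t in (0:ℝ)..T, term m t‖ ≤ (1/T) * (‖ℓ m‖ * T) := by
          exact mul_le_mul_of_nonneg_left h1 (by positivity)
      _ = ‖ℓ m‖ := by field_simp
  have h0 : Tendsto (fun T : ℝ => ∑' m, (1/(T:ℂ)) * ∫ t in (0:ℝ)..T, term m t)
      atTop (nhds (ℓ 0)) := by
    have := tendsto_tsum_of_dominated_convergence hℓsum hlim0 hbound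
    rwa [tsum_ite_eq] at this
  constructor
  · refine Tendsto.congr' ?_ h0
    filter_upwards [eventually_gt_atTop (0:ℝ)] with T hT
    rw [tsum_mul_left, hswap T hT]
  · -- space average
    set term2 : (Fin n → ℤ) → (Fin n → ℝ) → ℂ := fun m u =>
      ℓ m * Complex.exp (((2 * Real.pi : ℝ) : ℂ) * Complex.I *
        ((∑ i, (m i : ℝ) * u i : ℝ) : ℂ)) with hterm2
    have hnorm2 : ∀ m u, ‖term2 m u‖ = ‖ℓ m‖ := by
      intro m u
      rw [hterm2]
      simp only [norm_mul, Complex.norm_exp, Complex.mul_re, Complex.mul_im,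
        Complex.I_re, Complex.ofReal_re, Complex.I_im, Complex.ofReal_im]
      norm_num
    have hmeas_set : MeasurableSet (Set.Icc (0 : Fin n → ℝ) 1) := measurableSet_Icc
    have hvol : volume (Set.Icc (0 : Fin n → ℝ) 1) = 1 := by
      rw [Real.volume_Icc_pi]
      simp
    have hcont2 : ∀ m, Continuous (term2 m) := by
      intro m
      apply Continuous.mul continuous_const
      apply Complex.continuous_exp.comp
      apply Continuous.mul continuous_const
      exact Complex.continuous_ofReal.comp (by fun_prop)
    have hswap2 : (∫ u in Set.Icc (0 : Fin n → ℝ) 1, ∑' m, term2 m u)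
        = ∑' m, ∫ u in Set.Icc (0 : Fin n → ℝ) 1, term2 m u := by
      apply MeasureTheory.integral_tsum
      · exact fun m => ((hcont2 m).aestronglyMeasurable).restrict
      · have hb : ∀ m : Fin n → ℤ, (∫⁻ u in Set.Icc (0 : Fin n → ℝ) 1, ‖term2 m u‖₊ ∂volume)
            = (‖ℓ m‖₊ : ENNReal) := by
          intro m
          have hfun : (fun u => (‖term2 m u‖₊ : ENNReal)) = fun _ => (‖ℓ m‖₊ : ENNReal) := by
            funext u
            congr 1
            ext
            simp [coe_nnnorm, hnorm2 m u]
          rw [hfun, MeasureTheory.setLIntegral_const, hvol, mul_one]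
        simp only [enorm_eq_nnnorm, hb]
        exact ENNReal.tsum_coe_ne_top_iff_summable.2 hℓsum'
    have hone : ∀ k : ℤ, k ≠ 0 →
        (∫ v in Set.Icc (0:ℝ) 1,
          Complex.exp ((((2 * Real.pi : ℝ) : ℂ) * Complex.I * (k:ℂ)) * (v:ℂ))) = 0 := by
      intro k hk
      have hc : (((2 * Real.pi : ℝ) : ℂ) * Complex.I * (k:ℂ)) ≠ 0 := by
        refine mul_ne_zero (mul_ne_zero ?_ Complex.I_ne_zero) ?_
        · rw [Complex.ofReal_ne_zero]
          positivity
        · exact_mod_cast hk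
      rw [MeasureTheory.integral_Icc_eq_integral_Ioc,
        ← intervalIntegral.integral_of_le zero_le_one, integral_exp_mul_complex hc]
      have h1 : Complex.exp ((((2 * Real.pi : ℝ) : ℂ) * Complex.I * (k:ℂ)) * ((1:ℝ):ℂ)) = 1 := by
        rw [show (((2 * Real.pi : ℝ) : ℂ) * Complex.I * (k:ℂ)) * ((1:ℝ):ℂ)
            = (k:ℂ) * (2 * (Real.pi:ℂ) * Complex.I) by push_cast; ring]
        exact Complex.exp_int_mul_two_pi_mul_I k
      rw [h1]
      simp
    have hint2 : ∀ m : Fin n → ℤ, (∫ u in Set.Icc (0 : Fin n → ℝ) 1, term2 m u)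
        = if m = 0 then ℓ 0 else 0 := by
      intro m
      by_cases hm : m = 0
      · subst hm
        rw [if_pos rfl]
        have h00 : ∀ u : Fin n → ℝ, term2 0 u = ℓ 0 := by
          intro u
          rw [hterm2]
          simp
        simp only [h00]
        rw [setIntegral_const, measureReal_def, hvol]
        simp
      · rw [if_neg hm]
        obtain ⟨j, hj⟩ := Function.ne_iff.1 hm
        have hEprod : ∀ u : Fin n → ℝ,
            Complex.exp (((2 * Real.pi : ℝ) : ℂ) * Complex.I * ((∑ i, (m i : ℝ) * u i : ℝ) : ℂ))
            = ∏ i, Complex.exp ((((2 * Real.pi : ℝ) : ℂ) * Complex.I * (m i : ℂ)) * ((u i : ℝ):ℂ)) := by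
          intro u
          rw [← Complex.exp_sum]
          congr 1
          push_cast
          rw [Finset.mul_sum]
          exact Finset.sum_congr rfl fun i _ => by ring
        set g : Fin n → ℝ → ℂ := fun i v =>
          Set.indicator (Set.Icc (0:ℝ) 1)
            (fun v => Complex.exp ((((2 * Real.pi : ℝ) : ℂ) * Complex.I * (m i : ℂ)) * (v:ℂ))) v
          with hg
        have hE0 : (∫ u in Set.Icc (0 : Fin n → ℝ) 1,
            Complex.exp (((2 * Real.pi : ℝ) : ℂ) * Complex.I *
              ((∑ i, (m i : ℝ) * u i : ℝ) : ℂ))) = 0 := by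
          have hind : ∀ u : Fin n → ℝ,
              Set.indicator (Set.Icc (0:Fin n → ℝ) 1)
                (fun u => ∏ i, Complex.exp ((((2 * Real.pi : ℝ) : ℂ) * Complex.I * (m i : ℂ))
                  * ((u i : ℝ):ℂ))) u
              = ∏ i, g i (u i) := by
            intro u
            by_cases hu : u ∈ Set.Icc (0:Fin n → ℝ) 1
            · rw [Set.indicator_of_mem hu]
              refine Finset.prod_congr rfl fun i _ => ?_
              rw [hg]
              simp only []
              have hui : u i ∈ Set.Icc (0:ℝ) 1 := Set.mem_Icc.2 ⟨hu.1 i, hu.2 i⟩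
              rw [Set.indicator_of_mem hui]
            · rw [Set.indicator_of_notMem hu]
              have hex : ∃ i, u i ∉ Set.Icc (0:ℝ) 1 := by
                by_contra hcon
                push_neg at hcon
                exact hu ⟨fun i => (hcon i).1, fun i => (hcon i).2⟩
              obtain ⟨i, hi⟩ := hex
              refine (Finset.prod_eq_zero (Finset.mem_univ i) ?_).symm
              rw [hg]
              simp only []
              rw [Set.indicator_of_notMem hi]
          simp only [hEprod]
          rw [← MeasureTheory.integral_indicator hmeas_set]
          rw [show (fun u : Fin n → ℝ => Set.indicator (Set.Icc (0:Fin n → ℝ) 1)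
              (fun u => ∏ i, Complex.exp ((((2 * Real.pi : ℝ) : ℂ) * Complex.I * (m i : ℂ))
                * ((u i : ℝ):ℂ))) u) = fun u => ∏ i, g i (u i) from funext hind]
          rw [MeasureTheory.volume_pi, MeasureTheory.integral_fintype_prod_eq_prod g]
          refine Finset.prod_eq_zero (Finset.mem_univ j) ?_
          rw [hg]
          simp only []
          rw [MeasureTheory.integral_indicator measurableSet_Icc]
          exact hone (m j) hj
        rw [hterm2]
        simp only []
        rw [MeasureTheory.integral_const_mul, hE0, mul_zero]
    refine Eq.symm ?_
    calc (∫ u in Set.Icc (0:Fin n→ℝ) 1, ∑' m, term2 m u)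
        = ∑' m, ∫ u in Set.Icc (0:Fin n→ℝ) 1, term2 m u := hswap2
      _ = ℓ 0 := by
          simp only [hint2]
          exact tsum_ite_eq (0 : Fin n → ℤ) (fun _ => ℓ 0)
end
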